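/- arXiv:2605.13026 — 8 statements merged into one kernel-verified Lean document; each statement's English description precedes it below -/
import Mathlib

section
/- For every integer k ≥ 2, the following identity holds in the formal power series ring ℤ[[x,y]]: (1 − P_k(x)P_k(y)) · Σ_{(a,b)≠(0,0)} N_k(a,b) x^a y^b = P_k(x) + P_k(y) + 2·P_k(x)P_k(y), where the sum ranges over all pairs of nonnegative integers (a,b) other than (0,0). -/
/-- A binary string (as a list of booleans) is `k`-inefficient if it contains `k`
consecutive equal entries; it is `k`-efficient otherwise. -/
def kEff (k : ℕ) (M : List Bool) : Prop :=
  ¬ ∃ b : Bool, List.replicate k b <:+: M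

/-- `Nk k a b` is the number of `k`-efficient binary strings of length `a + b`
having exactly `a` ones (and hence exactly `b` zeros). -/
noncomputable def Nk (k a b : ℕ) : ℕ :=
  Nat.card {M : Fin (a + b) → Bool //
    kEff k (List.ofFn M) ∧ (Finset.univ.filter fun i => M i = true).card = a}

/-- `P_k` evaluated at the variable `i` of `ℤ[[x,y]]`: `P_k(X_i) = X_i + X_i² + ⋯ + X_i^{k-1}`. -/
noncomputable def Pvar (k : ℕ) (i : Fin 2) : MvPowerSeries (Fin 2) ℤ :=
  ∑ j ∈ Finset.Ico 1 k, (MvPowerSeries.X i) ^ j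

/-- The generating function `Σ_{(a,b) ≠ (0,0)} N_k(a,b) xᵃ yᵇ` of nonempty `k`-efficient
binary strings, as an element of `ℤ[[x,y]]`. -/
noncomputable def Fgen (k : ℕ) : MvPowerSeries (Fin 2) ℤ :=
  fun d => if d = 0 then 0 else (Nk k (d 0) (d 1) : ℤ)

open List Finset

instance kEffDec (k : ℕ) : DecidablePred (kEff k) := fun _ => by
  unfold kEff; infer_instance

namespace FgenAux

/-- An infix of `x ++ y` is an infix of `x`, or an infix of `y`, or splits as a
nonempty suffix of `x` followed by a nonempty prefix of `y`. -/
lemma infix_append_split {α : Type*} {t x y : List α} (h : t <:+: x ++ y) :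
    t <:+: x ∨ t <:+: y ∨
      ∃ t1 t2, t = t1 ++ t2 ∧ t1 ≠ [] ∧ t2 ≠ [] ∧ t1 <:+ x ∧ t2 <+: y := by
  induction x with
  | nil => exact Or.inr (Or.inl h)
  | cons c x ih =>
    rw [cons_append, infix_cons_iff] at h
    rcases h with h | h
    · -- t is a prefix of (c :: x) ++ y
      rw [← cons_append] at h
      by_cases hl : t.length ≤ (c :: x).length
      · left
        have := prefix_iff_eq_take.mp h
        rw [List.take_append, Nat.sub_eq_zero_of_le hl, take_zero,
          append_nil] at this
        exact (this ▸ (take_prefix _ _)).isInfix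
      · right; right
        push_neg at hl
        have := prefix_iff_eq_take.mp h
        rw [List.take_append, take_of_length_le (le_of_lt hl)] at this
        refine ⟨c :: x, take (t.length - (c :: x).length) y, this, by simp, ?_,
          suffix_refl _, take_prefix _ _⟩
        intro hnil
        rw [hnil, append_nil] at this
        exact absurd (this ▸ rfl : t.length = (c :: x).length) (Nat.ne_of_gt hl)
    · rcases ih h with h' | h' | ⟨t1, t2, ht, h1, h2, h3, h4⟩
      · exact Or.inl (infix_cons h')
      · exact Or.inr (Or.inl h')
      · exact Or.inr (Or.inr ⟨t1, t2, ht, h1, h2, h3.trans (suffix_cons c x), h4⟩)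

lemma kEff_nil {k : ℕ} (hk : 1 ≤ k) : kEff k [] := by
  rintro ⟨b, hb⟩
  have := hb.length_le
  simp at this
  omega

lemma kEff_infix {k : ℕ} {l m : List Bool} (hl : kEff k l) (hm : m <:+: l) : kEff k m :=
  fun ⟨b, hb⟩ => hl ⟨b, hb.trans hm⟩

lemma count_add_count_not (c : Bool) (l : List Bool) :
    l.count c + l.count (!c) = l.length := by
  rw [List.count, List.count, l.length_eq_countP_add_countP (· == c)]
  congr 1
  apply List.countP_congr
  intro x _
  cases x <;> cases c <;> simp

/-- Key closure lemma: prepending a short constant block preserves efficiency. -/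
lemma kEff_replicate_append {k i : ℕ} (c : Bool) {l : List Bool}
    (hik : i < k) (hl : kEff k l) (hhead : l.head? ≠ some c) :
    kEff k (replicate i c ++ l) := by
  rintro ⟨b, hb⟩
  rcases infix_append_split hb with h | h | ⟨t1, t2, ht, h1, h2, h3, h4⟩
  · have := h.length_le
    simp at this
    omega
  · exact hl ⟨b, h⟩
  · -- t1 nonempty suffix of replicate i c, t2 nonempty prefix of l
    have hmem1 : ∀ x ∈ t1, x = b := fun x hx =>
      eq_of_mem_replicate (ht ▸ mem_append_left t2 hx)
    have hmem2 : ∀ x ∈ t2, x = b := fun x hx =>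
      eq_of_mem_replicate (ht ▸ mem_append_right t1 hx)
    obtain ⟨x1, hx1⟩ := exists_mem_of_ne_nil t1 h1
    have hbc : b = c := by
      have := eq_of_mem_replicate (h3.subset hx1)
      rw [← hmem1 x1 hx1, this]
    obtain ⟨d, t2', rfl⟩ := exists_cons_of_ne_nil h2
    obtain ⟨v, rfl⟩ := h4
    have : d = c := hbc ▸ hmem2 d (List.mem_cons_self (a := d) (l := t2'))
    exact hhead (by simp [this])

lemma head?_dropWhile_ne {α : Type*} (p : α → Bool) (l : List α) {x : α}
    (h : (l.dropWhile p).head? = some x) : p x = false := by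
  induction l with
  | nil => simp at h
  | cons a t ih =>
    rw [dropWhile_cons] at h
    by_cases hp : p a = true
    · rw [if_pos hp] at h; exact ih h
    · rw [if_neg hp] at h
      simp at h
      subst h
      exact Bool.eq_false_iff.mpr hp

/-- The finset of all boolean lists of a given length. -/
def allLists : ℕ → Finset (List Bool)
  | 0 => {[]}
  | n + 1 => (allLists n).biUnion fun l => {true :: l, false :: l}

lemma mem_allLists {n : ℕ} {l : List Bool} : l ∈ allLists n ↔ l.length = n := by
  induction n generalizing l with
  | zero => simp [allLists, List.length_eq_zero_iff]
  | succ n ih =>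
    simp only [allLists, Finset.mem_biUnion, Finset.mem_insert, Finset.mem_singleton]
    constructor
    · rintro ⟨t, ht, rfl | rfl⟩ <;> simp [ih.mp ht]
    · intro h
      cases l with
      | nil => simp at h
      | cons c t =>
        refine ⟨t, ih.mpr (by simpa using h), ?_⟩
        cases c
        · exact Or.inr rfl
        · exact Or.inl rfl

/-- Lists which are `k`-efficient, with `m` entries equal to `c` and `n` entries
equal to `!c`. -/
def cntF (k : ℕ) (c : Bool) (m n : ℕ) : Finset (List Bool) :=
  (allLists (m + n)).filter fun l => kEff k l ∧ l.count c = m ∧ l.count (!c) = n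

lemma mem_cntF {k : ℕ} {c : Bool} {m n : ℕ} {l : List Bool} :
    l ∈ cntF k c m n ↔ kEff k l ∧ l.count c = m ∧ l.count (!c) = n := by
  rw [cntF, Finset.mem_filter, mem_allLists]
  constructor
  · tauto
  · rintro ⟨h1, h2, h3⟩
    exact ⟨by rw [← h2, ← h3, count_add_count_not], h1, h2, h3⟩

lemma cntF_symm (k : ℕ) (c : Bool) (m n : ℕ) : cntF k c m n = cntF k (!c) n m := by
  ext l
  simp only [mem_cntF, Bool.not_not]
  tauto

/-- Count of k-efficient lists with head `c`, `m` entries `c`, `n` entries `!c`. -/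
def hd (k : ℕ) (c : Bool) (m n : ℕ) : ℕ :=
  ((cntF k c m n).filter fun l => l.head? = some c).card

/-- Count of k-efficient lists with head not `c` (possibly empty). -/
def dd (k : ℕ) (c : Bool) (m n : ℕ) : ℕ :=
  ((cntF k c m n).filter fun l => l.head? ≠ some c).card

lemma hd_zero_zero (k : ℕ) (c : Bool) : hd k c 0 0 = 0 := by
  rw [hd, Finset.card_eq_zero, Finset.eq_empty_iff_forall_notMem]
  rintro l hl
  rw [Finset.mem_filter, mem_cntF] at hl
  obtain ⟨⟨_, h2, h3⟩, h4⟩ := hl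
  have : l.length = 0 := by rw [← count_add_count_not c l, h2, h3]
  rw [List.length_eq_zero_iff] at this
  subst this
  simp at h4

lemma dd_eq (k : ℕ) (hk : 2 ≤ k) (c : Bool) (m n : ℕ) :
    dd k c m n = (if m = 0 ∧ n = 0 then 1 else 0) + hd k (!c) n m := by
  by_cases h : m = 0 ∧ n = 0
  · obtain ⟨rfl, rfl⟩ := h
    rw [if_pos ⟨rfl, rfl⟩, hd_zero_zero]
    rw [dd]
    have : (cntF k c 0 0).filter (fun l => l.head? ≠ some c) = {[]} := by
      ext l
      rw [Finset.mem_filter, mem_cntF, Finset.mem_singleton]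
      constructor
      · rintro ⟨⟨_, h2, h3⟩, _⟩
        have : l.length = 0 := by rw [← count_add_count_not c l, h2, h3]
        exact List.length_eq_zero_iff.mp this
      · rintro rfl
        exact ⟨⟨kEff_nil (by omega), by simp, by simp⟩, by simp⟩
    rw [this, Finset.card_singleton]
  · rw [if_neg h, zero_add, dd, hd, cntF_symm k c m n]
    apply Finset.card_bij' (fun l _ => l) (fun l _ => l) <;>
      try (intro l hl; rfl)
    · intro l hl
      rw [Finset.mem_filter, mem_cntF] at hl ⊢
      obtain ⟨⟨h1, h2, h3⟩, h4⟩ := hl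
      refine ⟨⟨h1, h2, h3⟩, ?_⟩
      cases l with
      | nil =>
        exfalso
        apply h
        constructor
        · rw [← h3]; simp [Bool.not_not]
        · rw [← h2]; simp
      | cons d t =>
        simp only [head?_cons, ne_eq, Option.some.injEq] at h4 ⊢
        cases c <;> cases d <;> revert h4 <;> decide
    · intro l hl
      rw [Finset.mem_filter, mem_cntF] at hl ⊢
      obtain ⟨⟨h1, h2, h3⟩, h4⟩ := hl
      refine ⟨⟨h1, h2, h3⟩, ?_⟩
      cases l with
      | nil => simp
      | cons d t =>
        simp only [head?_cons, ne_eq, Option.some.injEq] at h4 ⊢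
        cases c <;> cases d <;> revert h4 <;> decide

lemma takeWhile_replicate_append {c : Bool} {l : List Bool} (i : ℕ)
    (hhead : l.head? ≠ some c) :
    (replicate i c ++ l).takeWhile (fun x => x == c) = replicate i c := by
  induction i with
  | zero =>
    simp only [replicate_zero, nil_append]
    cases l with
    | nil => simp
    | cons d t =>
      have : (d == c) = false := by
        simp only [head?_cons, ne_eq, Option.some.injEq] at hhead
        simpa using hhead
      simp [takeWhile_cons, this]
  | succ i ih =>
    rw [replicate_succ, cons_append, takeWhile_cons]
    simp [ih]

/-- The main recurrence, obtained by stripping the first run. -/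
lemma hd_rec (k : ℕ) (hk : 2 ≤ k) (c : Bool) (m n : ℕ) :
    hd k c m n = ∑ i ∈ Finset.Ico 1 k, if i ≤ m then dd k c (m - i) n else 0 := by
  rw [hd]
  rw [Finset.card_eq_sum_card_fiberwise
    (f := fun l => (l.takeWhile (fun x => x == c)).length) (t := Finset.Ico 1 k) ?hmem]
  case hmem =>
    intro l hl
    rw [Finset.mem_coe, Finset.mem_filter, mem_cntF] at hl
    obtain ⟨⟨h1, _, _⟩, h4⟩ := hl
    have htw : l.takeWhile (fun x => x == c) = replicate (l.takeWhile (fun x => x == c)).length c := by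
      rw [List.eq_replicate_iff]
      exact ⟨rfl, fun x hx => by simpa using mem_takeWhile_imp hx⟩
    rw [Finset.mem_coe, Finset.mem_Ico]
    constructor
    · obtain ⟨d, t, rfl⟩ : ∃ d t, l = d :: t := by
        cases l with
        | nil => simp at h4
        | cons d t => exact ⟨d, t, rfl⟩
      simp only [head?_cons, Option.some.injEq] at h4
      subst h4
      show 1 ≤ (List.takeWhile (fun x => x == d) (d :: t)).length
      rw [takeWhile_cons]
      simp
    · by_contra hik
      push_neg at hik
      apply h1
      refine ⟨c, ?_⟩
      have h5 : replicate k c <+: replicate (l.takeWhile (fun x => x == c)).length c := by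
        rw [prefix_iff_eq_take, take_replicate, length_replicate, min_eq_left hik]
      exact ((h5.trans (htw ▸ takeWhile_prefix _)).isInfix)
  refine Finset.sum_congr rfl fun i hi => ?_
  rw [Finset.mem_Ico] at hi
  rw [Finset.filter_filter]
  by_cases him : i ≤ m
  · rw [if_pos him, dd]
    apply Finset.card_bij' (fun l _ => l.dropWhile (fun x => x == c))
      (fun l _ => replicate i c ++ l)
    · -- forward membership
      intro l hl
      rw [Finset.mem_filter, mem_cntF] at hl
      obtain ⟨⟨h1, h2, h3⟩, h4, h5⟩ := hl
      have htw : l.takeWhile (fun x => x == c) = replicate i c := by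
        rw [List.eq_replicate_iff]
        exact ⟨h5, fun x hx => by simpa using mem_takeWhile_imp hx⟩
      have hdec : replicate i c ++ l.dropWhile (fun x => x == c) = l := by
        rw [← htw, takeWhile_append_dropWhile]
      rw [Finset.mem_filter, mem_cntF]
      refine ⟨⟨kEff_infix h1 (dropWhile_suffix _).isInfix, ?_, ?_⟩, ?_⟩
      · have := congrArg (fun l => List.count c l) hdec
        simp only [count_append, count_replicate_self] at this
        omega
      · have := congrArg (fun l => List.count (!c) l) hdec
        simp [count_append, count_replicate] at this
        omega
      · intro hhd
        have := head?_dropWhile_ne (fun x => x == c) l hhd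
        simp at this
    · -- backward membership
      intro l hl
      rw [Finset.mem_filter, mem_cntF] at hl
      obtain ⟨⟨h1, h2, h3⟩, h4⟩ := hl
      rw [Finset.mem_filter, mem_cntF]
      refine ⟨⟨kEff_replicate_append c (by omega) h1 h4, ?_, ?_⟩, ?_, ?_⟩
      · rw [count_append, count_replicate_self, h2]; omega
      · rw [count_append, count_replicate, h3]; simp
      · obtain ⟨i, rfl⟩ : ∃ j, i = j + 1 := ⟨i - 1, by omega⟩
        rw [replicate_succ, cons_append, head?_cons]
      · rw [takeWhile_replicate_append i h4, length_replicate]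
    · -- left inverse
      intro l hl
      rw [Finset.mem_filter, mem_cntF] at hl
      obtain ⟨⟨h1, h2, h3⟩, h4, h5⟩ := hl
      have htw : l.takeWhile (fun x => x == c) = replicate i c := by
        rw [List.eq_replicate_iff]
        exact ⟨h5, fun x hx => by simpa using mem_takeWhile_imp hx⟩
      rw [← htw, takeWhile_append_dropWhile]
    · -- right inverse
      intro l hl
      rw [Finset.mem_filter, mem_cntF] at hl
      obtain ⟨⟨h1, h2, h3⟩, h4⟩ := hl
      have h5 := takeWhile_append_dropWhile (p := fun x => x == c) (l := replicate i c ++ l)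
      rw [takeWhile_replicate_append i h4] at h5
      exact append_cancel_left h5
  · rw [if_neg him, Finset.card_eq_zero, Finset.eq_empty_iff_forall_notMem]
    intro l hl
    rw [Finset.mem_filter, mem_cntF] at hl
    obtain ⟨⟨h1, h2, h3⟩, h4, h5⟩ := hl
    have htw : l.takeWhile (fun x => x == c) = replicate i c := by
      rw [List.eq_replicate_iff]
      exact ⟨h5, fun x hx => by simpa using mem_takeWhile_imp hx⟩
    have hpre : replicate i c <+: l := htw ▸ takeWhile_prefix _
    have : i ≤ l.count c := by
      obtain ⟨v, rfl⟩ := hpre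
      rw [count_append, count_replicate_self]
      omega
    omega

/-- Bridge from the `Fin`-function count to the list count. -/
lemma Nk_eq_card (k a b : ℕ) : Nk k a b = (cntF k true a b).card := by
  classical
  have hcount : ∀ (n : ℕ) (M : Fin n → Bool),
      (Finset.univ.filter fun i => M i = true).card = (List.ofFn M).count true := by
    intro n
    induction n with
    | zero => intro M; simp
    | succ n ih =>
      intro M
      rw [Finset.card_filter, Fin.sum_univ_succ, List.ofFn_succ, List.count_cons,
        ← Finset.card_filter, ih (fun i => M i.succ)]
      cases hM : M 0 <;> simp [hM, add_comm]
  rw [Nk, Nat.card_eq_fintype_card, Fintype.card_subtype]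
  refine Finset.card_bij (fun M _ => List.ofFn M) ?_ ?_ ?_
  · intro M hM
    rw [Finset.mem_filter] at hM
    obtain ⟨-, h1, h2⟩ := hM
    rw [mem_cntF]
    have h4 : (List.ofFn M).count true = a := by rw [← hcount _ M]; exact h2
    refine ⟨h1, h4, ?_⟩
    have hlen : (List.ofFn M).length = a + b := by simp
    have h3 := count_add_count_not true (List.ofFn M)
    rw [hlen, h4] at h3
    exact Nat.add_left_cancel h3
  · intro M1 h1 M2 h2 he
    exact List.ofFn_injective he
  · intro l hl
    rw [mem_cntF] at hl
    obtain ⟨h1, h2, h3⟩ := hl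
    have hlen : l.length = a + b := by rw [← count_add_count_not true l, h2, h3]
    have hofn : List.ofFn (fun i => l.get (Fin.cast hlen.symm i)) = l := by
      apply List.ext_get (by simp [hlen])
      intro n hn1 hn2
      simp [List.get_ofFn]
    refine ⟨fun i => l.get (Fin.cast hlen.symm i), ?_, hofn⟩
    rw [Finset.mem_filter]
    refine ⟨Finset.mem_univ _, by rw [hofn]; exact h1, by rw [hcount, hofn]; exact h2⟩

/-- Series with coefficients `hd k true`. -/
noncomputable def FA (k : ℕ) : MvPowerSeries (Fin 2) ℤ :=
  fun d => (hd k true (d 0) (d 1) : ℤ)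

/-- Series with coefficients `hd k false`. -/
noncomputable def FB (k : ℕ) : MvPowerSeries (Fin 2) ℤ :=
  fun d => (hd k false (d 1) (d 0) : ℤ)

lemma finsupp_eq_zero_iff (e : Fin 2 →₀ ℕ) : e = 0 ↔ e 0 = 0 ∧ e 1 = 0 := by
  rw [Finsupp.ext_iff, Fin.forall_fin_two]
  rfl

lemma coeff_Pvar_mul (k : ℕ) (q : Fin 2) (G : MvPowerSeries (Fin 2) ℤ) (d : Fin 2 →₀ ℕ) :
    MvPowerSeries.coeff d (Pvar k q * G)
      = ∑ j ∈ Finset.Ico 1 k,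
          if j ≤ d q then MvPowerSeries.coeff (d - Finsupp.single q j) G else 0 := by
  rw [Pvar, Finset.sum_mul, map_sum]
  refine Finset.sum_congr rfl fun j _ => ?_
  rw [MvPowerSeries.X_pow_eq, MvPowerSeries.coeff_monomial_mul, one_mul]
  by_cases hjd : Finsupp.single q j ≤ d
  · rw [if_pos hjd, if_pos (Finsupp.single_le_iff.mp hjd)]
  · rw [if_neg hjd, if_neg fun hc => hjd (Finsupp.single_le_iff.mpr hc)]

lemma sub_single_apply_self (d : Fin 2 →₀ ℕ) (q : Fin 2) (j : ℕ) :
    (d - Finsupp.single q j) q = d q - j := by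
  rw [Finsupp.tsub_apply, Finsupp.single_apply, if_pos rfl]

lemma sub_single_apply_other (d : Fin 2 →₀ ℕ) (q r : Fin 2) (j : ℕ) (h : q ≠ r) :
    (d - Finsupp.single q j) r = d r := by
  rw [Finsupp.tsub_apply, Finsupp.single_apply, if_neg h, Nat.sub_zero]

lemma coeff_FA (k : ℕ) (e : Fin 2 →₀ ℕ) :
    MvPowerSeries.coeff e (FA k) = (hd k true (e 0) (e 1) : ℤ) := rfl

lemma coeff_FB (k : ℕ) (e : Fin 2 →₀ ℕ) :
    MvPowerSeries.coeff e (FB k) = (hd k false (e 1) (e 0) : ℤ) := rfl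

lemma coeff_Fgen (k : ℕ) (e : Fin 2 →₀ ℕ) :
    MvPowerSeries.coeff e (Fgen k)
      = if e = 0 then 0 else (Nk k (e 0) (e 1) : ℤ) := rfl

lemma EA (k : ℕ) (hk : 2 ≤ k) : FA k = Pvar k 0 * (1 + FB k) := by
  ext d
  rw [coeff_Pvar_mul]
  rw [coeff_FA]
  rw [hd_rec k hk true (d 0) (d 1)]
  push_cast
  refine Finset.sum_congr rfl fun j hj => ?_
  by_cases hjd : j ≤ d 0
  · rw [if_pos hjd, if_pos hjd]
    rw [map_add, MvPowerSeries.coeff_one, coeff_FB]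
    rw [dd_eq k hk true (d 0 - j) (d 1)]
    have hiff : ((d - Finsupp.single (0 : Fin 2) j) = 0) ↔ (d 0 - j = 0 ∧ d 1 = 0) := by
      rw [finsupp_eq_zero_iff, sub_single_apply_self,
        sub_single_apply_other d 0 1 j (by decide)]
    rw [sub_single_apply_self, sub_single_apply_other d 0 1 j (by decide)]
    push_cast
    simp only [hiff, Bool.not_true]
  · rw [if_neg hjd, if_neg hjd]

lemma EB (k : ℕ) (hk : 2 ≤ k) : FB k = Pvar k 1 * (1 + FA k) := by
  ext d
  rw [coeff_Pvar_mul]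
  rw [coeff_FB]
  rw [hd_rec k hk false (d 1) (d 0)]
  push_cast
  refine Finset.sum_congr rfl fun j hj => ?_
  by_cases hjd : j ≤ d 1
  · rw [if_pos hjd, if_pos hjd]
    rw [map_add, MvPowerSeries.coeff_one, coeff_FA]
    rw [dd_eq k hk false (d 1 - j) (d 0)]
    have hiff : ((d - Finsupp.single (1 : Fin 2) j) = 0) ↔ (d 1 - j = 0 ∧ d 0 = 0) := by
      rw [finsupp_eq_zero_iff, sub_single_apply_self,
        sub_single_apply_other d 1 0 j (by decide), and_comm]
    rw [sub_single_apply_self, sub_single_apply_other d 1 0 j (by decide)]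
    push_cast
    simp only [hiff, Bool.not_false]
  · rw [if_neg hjd, if_neg hjd]

lemma Fgen_eq (k : ℕ) (hk : 2 ≤ k) : Fgen k = FA k + FB k := by
  ext d
  rw [map_add, coeff_Fgen, coeff_FA, coeff_FB]
  by_cases hd0 : d = 0
  · subst hd0
    simp [hd_zero_zero]
  · rw [if_neg hd0]
    rw [Nk_eq_card]
    have hsplit := Finset.card_filter_add_card_filter_not
      (s := cntF k true (d 0) (d 1)) (p := fun l => l.head? = some true)
    rw [← hsplit]
    have hdd : dd k true (d 0) (d 1) = hd k false (d 1) (d 0) := by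
      have hne : ¬(d 0 = 0 ∧ d 1 = 0) := fun hc => hd0 ((finsupp_eq_zero_iff d).mpr hc)
      rw [dd_eq k hk true (d 0) (d 1), if_neg hne, zero_add]
      rfl
    rw [← hd, ← hdd, hd, dd]
    push_cast
    ring

end FgenAux

/-- The generating-function identity
`(1 - P_k(x) P_k(y)) · Σ_{(a,b)≠(0,0)} N_k(a,b) xᵃ yᵇ = P_k(x) + P_k(y) + 2 P_k(x) P_k(y)`
in `ℤ[[x,y]]`. -/
theorem Fgen_identity (k : ℕ) (hk : 2 ≤ k) :
    (1 - Pvar k 0 * Pvar k 1) * Fgen k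
      = Pvar k 0 + Pvar k 1 + 2 * (Pvar k 0 * Pvar k 1) := by
  have h1 := FgenAux.EA k hk
  have h2 := FgenAux.EB k hk
  rw [FgenAux.Fgen_eq k hk]
  linear_combination (1 + Pvar k 1) * h1 + (1 + Pvar k 0) * h2
end

section
/- For every integer k ≥ 2, every integer r ≥ 0, and all nonnegative integers u, S with 2u < S, one has f_r(u)·f_r(S−u) ≤ f_r(u+1)·f_r(S−u−1); that is, for fixed total degree S, the map u ↦ f_r(u)·f_r(S−u) is symmetric about S/2 and nondecreasing for u ≤ S/2. -/
/-- The polynomial `P_k(z) = z + z² + ⋯ + z^{k-1}` over `ℤ`. -/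
noncomputable def Pk (k : ℕ) : Polynomial ℤ :=
  ∑ i ∈ Finset.Ico 1 k, Polynomial.X ^ i

/-- `f_r(s)`: the coefficient of `z^s` in `P_k(z)^r`. -/
noncomputable def fCoeff (k r s : ℕ) : ℤ := ((Pk k) ^ r).coeff s


namespace PF2Aux

/-- ℤ-extension of the coefficient sequence of a polynomial. -/
noncomputable def ext (p : Polynomial ℤ) : ℤ → ℤ :=
  fun n => if 0 ≤ n then p.coeff n.toNat else 0

/-- Pólya frequency of order 2: nonnegative, all 2×2 Toeplitz minors nonneg. -/
def PF2 (f : ℤ → ℤ) : Prop :=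
  (∀ n, 0 ≤ f n) ∧ ∀ x y : ℤ, x ≤ y → f x * f (y + 1) ≤ f (x + 1) * f y

lemma ext_coe (p : Polynomial ℤ) (n : ℕ) : ext p (n : ℤ) = p.coeff n := by
  simp [ext]

lemma ext_neg (p : Polynomial ℤ) {n : ℤ} (h : n < 0) : ext p n = 0 := by
  simp [ext, not_le.2 h]

lemma spread_aux {f : ℤ → ℤ} (hf : PF2 f) :
    ∀ d : ℕ, ∀ a b b' : ℤ, a + b = (a + d) + b' → a ≤ b' →
      f a * f b ≤ f (a + d) * f b' := by
  intro d
  induction d with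
  | zero =>
    intro a b b' hsum h2
    have hb : b = b' := by push_cast at hsum; omega
    subst hb
    simp
  | succ d ih =>
    intro a b b' hsum h2
    rcases eq_or_lt_of_le h2 with h | h
    · have hb : b = a + ((d : ℤ) + 1) := by push_cast at hsum; omega
      have : a + ((d + 1 : ℕ) : ℤ) = b := by push_cast; omega
      rw [this, ← h, mul_comm]
    · have hab : a ≤ b - 1 := by push_cast at hsum; omega
      have step := hf.2 a (b - 1) hab
      rw [sub_add_cancel] at step
      have ihh := ih (a + 1) (b - 1) b' (by push_cast at hsum ⊢; omega) (by omega)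
      calc f a * f b ≤ f (a + 1) * f (b - 1) := step
        _ ≤ f (a + 1 + (d : ℤ)) * f b' := ihh
        _ = f (a + ((d + 1 : ℕ) : ℤ)) * f b' := by
            congr 2
            push_cast
            ring

lemma spread {f : ℤ → ℤ} (hf : PF2 f) {a b a' b' : ℤ} (hsum : a + b = a' + b')
    (h1 : a ≤ a') (h2 : a ≤ b') : f a * f b ≤ f a' * f b' := by
  obtain ⟨d, rfl⟩ : ∃ d : ℕ, a' = a + d := ⟨(a' - a).toNat, by omega⟩
  exact spread_aux hf d a b b' hsum h2

lemma conv_eq (p q : Polynomial ℤ) (s c N : ℕ) (hc : s + c < N) :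
    ((p * q).coeff s) =
      ∑ i ∈ Finset.range N, ext p ((s : ℤ) + (c : ℤ) - (i : ℤ)) * ext q ((i : ℤ) - (c : ℤ)) := by
  have h1 : ∑ i ∈ Finset.range N, ext p ((s : ℤ) + c - i) * ext q ((i : ℤ) - c)
      = ∑ i ∈ Finset.Icc c (s + c), ext p ((s : ℤ) + c - i) * ext q ((i : ℤ) - c) := by
    refine (Finset.sum_subset ?_ ?_).symm
    · intro i hi
      simp only [Finset.mem_Icc] at hi
      simp only [Finset.mem_range]
      omega
    · intro i hi hni
      simp only [Finset.mem_Icc, Finset.mem_range] at hi hni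
      rcases Nat.lt_or_ge i c with h | h
      · rw [ext_neg q (by omega), mul_zero]
      · rw [ext_neg p (by omega), zero_mul]
  rw [h1]
  have h2 : ∑ i ∈ Finset.Icc c (s + c), ext p ((s : ℤ) + c - i) * ext q ((i : ℤ) - c)
      = ∑ j ∈ Finset.range (s + 1), p.coeff (s - j) * q.coeff j := by
    refine Finset.sum_bij' (fun i _ => i - c) (fun j _ => j + c) ?_ ?_ ?_ ?_ ?_
    · intro i hi
      simp only [Finset.mem_Icc] at hi
      simp only [Finset.mem_range]
      omega
    · intro j hj
      simp only [Finset.mem_range] at hj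
      simp only [Finset.mem_Icc]
      omega
    · intro i hi
      simp only [Finset.mem_Icc] at hi
      omega
    · intro j hj
      simp only [Finset.mem_range] at hj
      omega
    · intro i hi
      simp only [Finset.mem_Icc] at hi
      have e1 : (s : ℤ) + c - i = ((s - (i - c) : ℕ) : ℤ) := by omega
      have e2 : (i : ℤ) - c = ((i - c : ℕ) : ℤ) := by omega
      rw [e1, e2, ext_coe, ext_coe]
  rw [h2, mul_comm p q, Polynomial.coeff_mul,
    Finset.Nat.sum_antidiagonal_eq_sum_range_succ_mk]
  exact Finset.sum_congr rfl fun j _ => mul_comm _ _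


lemma coeff_Pk (k n : ℕ) : (Pk k).coeff n = if 1 ≤ n ∧ n < k then 1 else 0 := by
  unfold Pk
  rw [Polynomial.finset_sum_coeff]
  simp only [Polynomial.coeff_X_pow]
  rw [Finset.sum_ite_eq (Finset.Ico 1 k) n (fun _ => (1 : ℤ))]
  simp [Finset.mem_Ico]

lemma ext_Pk (k : ℕ) (z : ℤ) :
    ext (Pk k) z = if 1 ≤ z ∧ z < (k : ℤ) then 1 else 0 := by
  unfold ext
  rcases le_or_gt 0 z with h | h
  · rw [if_pos h, coeff_Pk]
    exact if_congr (by omega) rfl rfl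
  · rw [if_neg (not_le.2 h), if_neg (by omega)]

lemma pf2_Pk (k : ℕ) : PF2 (ext (Pk k)) := by
  constructor
  · intro n
    rw [ext_Pk]
    split_ifs <;> norm_num
  · intro x y hxy
    simp only [ext_Pk]
    split_ifs <;> (try (exfalso; omega)) <;> norm_num

lemma pf2_one : PF2 (ext (1 : Polynomial ℤ)) := by
  have h : ∀ z : ℤ, ext (1 : Polynomial ℤ) z = if z = 0 then 1 else 0 := by
    intro z
    unfold ext
    rcases le_or_gt 0 z with h | h
    · rw [if_pos h, Polynomial.coeff_one]
      exact if_congr (by omega) rfl rfl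
    · rw [if_neg (not_le.2 h), if_neg (by omega)]
  constructor
  · intro n
    rw [h]
    split_ifs <;> norm_num
  · intro x y hxy
    simp only [h]
    split_ifs <;> (try (exfalso; omega)) <;> norm_num

lemma pf2_mul {p q : Polynomial ℤ} (hp : PF2 (ext p)) (hq : PF2 (ext q)) :
    PF2 (ext (p * q)) := by
  have hpn : ∀ z, 0 ≤ ext p z := hp.1
  have hqn : ∀ z, 0 ≤ ext q z := hq.1
  have hnn : ∀ z, 0 ≤ ext (p * q) z := by
    intro z
    unfold ext
    split_ifs with h
    · rw [Polynomial.coeff_mul]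
      refine Finset.sum_nonneg fun ij _ => mul_nonneg ?_ ?_
      · have := hpn ij.1; rwa [ext_coe] at this
      · have := hqn ij.2; rwa [ext_coe] at this
    · exact le_refl 0
  refine ⟨hnn, ?_⟩
  intro x y hxy
  rcases lt_or_ge x 0 with hx | hx
  · rw [ext_neg _ hx, zero_mul]
    exact mul_nonneg (hnn _) (hnn _)
  have hy : 0 ≤ y := hx.trans hxy
  obtain ⟨u, rfl⟩ : ∃ u : ℕ, x = (u : ℤ) := ⟨x.toNat, (Int.toNat_of_nonneg hx).symm⟩
  obtain ⟨w, rfl⟩ : ∃ w : ℕ, y = (w : ℤ) := ⟨y.toNat, (Int.toNat_of_nonneg hy).symm⟩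
  have huw : u ≤ w := by exact_mod_cast hxy
  set N := w + 2 with hN
  set F : ℕ → ℕ → ℤ := fun i j =>
    ext p ((u : ℤ) + 1 - i) * ext p ((w : ℤ) + 1 - j) *
      (ext q i * ext q ((j : ℤ) - 1) - ext q ((i : ℤ) - 1) * ext q j) with hF
  -- the four convolution expansions
  have hA1 : ((p * q).coeff (u + 1)) =
      ∑ i ∈ Finset.range N, ext p ((u : ℤ) + 1 - i) * ext q i := by
    have := conv_eq p q (u + 1) 0 N (by omega)
    rw [this]
    refine Finset.sum_congr rfl fun i _ => ?_
    push_cast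
    ring_nf
  have hAw : ((p * q).coeff w) =
      ∑ j ∈ Finset.range N, ext p ((w : ℤ) + 1 - j) * ext q ((j : ℤ) - 1) := by
    have := conv_eq p q w 1 N (by omega)
    rw [this]
    refine Finset.sum_congr rfl fun j _ => ?_
    push_cast
    ring_nf
  have hAu : ((p * q).coeff u) =
      ∑ i ∈ Finset.range N, ext p ((u : ℤ) + 1 - i) * ext q ((i : ℤ) - 1) := by
    have := conv_eq p q u 1 N (by omega)
    rw [this]
    refine Finset.sum_congr rfl fun i _ => ?_
    push_cast
    ring_nf
  have hAw1 : ((p * q).coeff (w + 1)) =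
      ∑ j ∈ Finset.range N, ext p ((w : ℤ) + 1 - j) * ext q j := by
    have := conv_eq p q (w + 1) 0 N (by omega)
    rw [this]
    refine Finset.sum_congr rfl fun j _ => ?_
    push_cast
    ring_nf
  have main : ∀ i j : ℕ, i ≤ j → 0 ≤ F i j + F j i := by
    intro i j hij
    have hY : ext q ((i : ℤ) - 1) * ext q j ≤ ext q i * ext q ((j : ℤ) - 1) := by
      have h := hq.2 ((i : ℤ) - 1) ((j : ℤ) - 1) (by omega)
      have e1 : (i : ℤ) - 1 + 1 = i := by ring
      have e2 : (j : ℤ) - 1 + 1 = j := by ring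
      rw [e1, e2] at h
      exact h
    have hX : ext p ((u : ℤ) + 1 - j) * ext p ((w : ℤ) + 1 - i) ≤
        ext p ((u : ℤ) + 1 - i) * ext p ((w : ℤ) + 1 - j) :=
      spread hp (by ring) (by omega) (by omega)
    have hE : F i j + F j i =
        (ext p ((u : ℤ) + 1 - i) * ext p ((w : ℤ) + 1 - j) -
          ext p ((u : ℤ) + 1 - j) * ext p ((w : ℤ) + 1 - i)) *
        (ext q i * ext q ((j : ℤ) - 1) - ext q ((i : ℤ) - 1) * ext q j) := by
      simp only [hF]
      ring
    rw [hE]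
    exact mul_nonneg (by linarith) (by linarith)
  have key : ∀ i j : ℕ, 0 ≤ F i j + F j i := by
    intro i j
    rcases le_total i j with h | h
    · exact main i j h
    · have := main j i h
      linarith
  have expand : ((p * q).coeff (u + 1)) * ((p * q).coeff w)
      - ((p * q).coeff u) * ((p * q).coeff (w + 1))
      = ∑ i ∈ Finset.range N, ∑ j ∈ Finset.range N, F i j := by
    rw [hA1, hAw, hAu, hAw1, Finset.sum_mul_sum, Finset.sum_mul_sum]
    rw [← Finset.sum_sub_distrib]
    refine Finset.sum_congr rfl fun i _ => ?_
    rw [← Finset.sum_sub_distrib]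
    refine Finset.sum_congr rfl fun j _ => ?_
    simp only [hF]
    ring
  have hswap : ∑ i ∈ Finset.range N, ∑ j ∈ Finset.range N, F j i
      = ∑ i ∈ Finset.range N, ∑ j ∈ Finset.range N, F i j := Finset.sum_comm
  have hsum : 0 ≤ ∑ i ∈ Finset.range N, ∑ j ∈ Finset.range N, (F i j + F j i) :=
    Finset.sum_nonneg fun i _ => Finset.sum_nonneg fun j _ => key i j
  have hsplit : ∑ i ∈ Finset.range N, ∑ j ∈ Finset.range N, (F i j + F j i)
      = (∑ i ∈ Finset.range N, ∑ j ∈ Finset.range N, F i j)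
        + ∑ i ∈ Finset.range N, ∑ j ∈ Finset.range N, F j i := by
    rw [← Finset.sum_add_distrib]
    refine Finset.sum_congr rfl fun i _ => ?_
    rw [← Finset.sum_add_distrib]
  have hD : 0 ≤ ((p * q).coeff (u + 1)) * ((p * q).coeff w)
      - ((p * q).coeff u) * ((p * q).coeff (w + 1)) := by
    rw [expand]
    rw [hswap, ← two_mul] at hsplit
    rw [hsplit] at hsum
    linarith
  have e1 : (u : ℤ) + 1 = ((u + 1 : ℕ) : ℤ) := by push_cast; ring
  have e2 : (w : ℤ) + 1 = ((w + 1 : ℕ) : ℤ) := by push_cast; ring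
  rw [e1, e2, ext_coe, ext_coe, ext_coe, ext_coe]
  linarith

lemma pf2_pow (k r : ℕ) : PF2 (ext ((Pk k) ^ r)) := by
  induction r with
  | zero => rw [pow_zero]; exact pf2_one
  | succ r ih => rw [pow_succ]; exact pf2_mul ih (pf2_Pk k)

end PF2Aux

/-- For fixed total degree `S`, the map `u ↦ f_r(u)·f_r(S-u)` is symmetric about `S/2`
and nondecreasing for `u ≤ S/2`: if `2u < S` then
`f_r(u)·f_r(S-u) ≤ f_r(u+1)·f_r(S-u-1)`. -/
theorem fCoeff_pair_central_monotone (k : ℕ) (hk : 2 ≤ k) (r S : ℕ) :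
    (∀ u : ℕ, 2 * u < S →
      fCoeff k r u * fCoeff k r (S - u) ≤ fCoeff k r (u + 1) * fCoeff k r (S - u - 1)) ∧
    (∀ u ≤ S, fCoeff k r u * fCoeff k r (S - u)
      = fCoeff k r (S - u) * fCoeff k r (S - (S - u))) := by
  constructor
  · intro u hu
    have hf := PF2Aux.pf2_pow k r
    have h1 : (u : ℤ) ≤ ((S - u - 1 : ℕ) : ℤ) := by omega
    have h := hf.2 (u : ℤ) ((S - u - 1 : ℕ) : ℤ) h1
    have e1 : ((S - u - 1 : ℕ) : ℤ) + 1 = ((S - u : ℕ) : ℤ) := by omega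
    have e2 : (u : ℤ) + 1 = ((u + 1 : ℕ) : ℤ) := by push_cast; ring
    rw [e1, e2, PF2Aux.ext_coe, PF2Aux.ext_coe, PF2Aux.ext_coe, PF2Aux.ext_coe] at h
    exact h
  · intro u hu
    rw [Nat.sub_sub_self hu]
    ring
end

section
/- For every integer k ≥ 2, define K_{u,v} = Σ_{r≥0} (r+1)·f_r(u)·f_r(v) for nonnegative integers u, v (the sum is finite since f_r(u) = 0 whenever r > u). Then K_{u,v} ≥ K_{u′,v′} whenever u + v = u′ + v′ and |u − v| ≤ |u′ − v′|. -/
/-- `K_{u,v} = Σ_{r ≥ 0} (r+1)·f_r(u)·f_r(v)`; the sum is finite since `f_r(u) = 0`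
whenever `r > u`, so it may be truncated at `r = u`. -/
noncomputable def Kmat (k u v : ℕ) : ℤ :=
  ∑ r ∈ Finset.range (u + 1), (r + 1 : ℤ) * fCoeff k r u * fCoeff k r v

set_option maxRecDepth 8000

open Finset

instance instCoeFunAMA {R M : Type} [Semiring R] : CoeFun (AddMonoidAlgebra R M) (fun _ => M → R) :=
  ⟨fun F => F.coeff⟩

noncomputable abbrev L : Type := AddMonoidAlgebra ℤ ℤ

noncomputable def blk (i : ℕ) : L :=
  ∑ j ∈ Finset.range (i+1), AddMonoidAlgebra.single ((i:ℤ) - 2*j) (1:ℤ)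

lemma blk_zero : blk 0 = 1 := by
  rw [blk, Finset.sum_range_one, AddMonoidAlgebra.one_def]
  norm_num

lemma blk_mul_single (a : ℕ) (c : ℤ) :
    blk a * AddMonoidAlgebra.single c (1:ℤ)
      = ∑ j ∈ Finset.range (a+1), AddMonoidAlgebra.single ((a:ℤ) - 2*j + c) (1:ℤ) := by
  rw [blk, Finset.sum_mul]
  refine Finset.sum_congr rfl fun j hj => ?_
  rw [AddMonoidAlgebra.single_mul_single, mul_one]

lemma blk_one : blk 1 = AddMonoidAlgebra.single (1:ℤ) 1 + AddMonoidAlgebra.single (-1:ℤ) 1 := by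
  rw [blk, Finset.sum_range_succ, Finset.sum_range_one]
  norm_num

lemma blk_mul_blk_one (a : ℕ) (ha : 1 ≤ a) :
    blk a * blk 1 = blk (a+1) + blk (a-1) := by
  have hS1 : blk (a+1) = (∑ j ∈ Finset.range (a+1), AddMonoidAlgebra.single ((a:ℤ) - 2*j + 1) (1:ℤ))
      + AddMonoidAlgebra.single (-(a:ℤ)-1) 1 := by
    rw [blk, Finset.sum_range_succ]
    congr 1
    · refine Finset.sum_congr rfl fun j hj => ?_
      congr 1; push_cast; ring
    · congr 1; push_cast; ring
  have hS2 : (∑ j ∈ Finset.range (a+1), AddMonoidAlgebra.single ((a:ℤ) - 2*j + (-1)) (1:ℤ))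
      = blk (a-1) + AddMonoidAlgebra.single (-(a:ℤ)-1) 1 := by
    rw [Finset.sum_range_succ]
    congr 1
    · rw [blk]
      rw [show a - 1 + 1 = a from by omega]
      refine Finset.sum_congr rfl fun j hj => ?_
      congr 1
      rw [Nat.cast_sub ha]; push_cast; ring
    · congr 1; push_cast; ring
  rw [blk_one, mul_add, blk_mul_single, blk_mul_single, hS1, hS2]
  abel

lemma blk_mul_blk : ∀ b a : ℕ, b ≤ a →
    blk a * blk b = ∑ j ∈ Finset.range (b+1), blk (a - b + 2*j) := by
  intro b
  induction b using Nat.strong_induction_on with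
  | _ b ih =>
    match b with
    | 0 => intro a _; simp [blk_zero]
    | 1 =>
      intro a ha
      rw [blk_mul_blk_one a ha]
      rw [Finset.sum_range_succ, Finset.sum_range_one]
      have h1 : a - 1 + 2*0 = a - 1 := by omega
      have h2 : a - 1 + 2*1 = a + 1 := by omega
      rw [h1, h2]; abel
    | (b+2) =>
      intro a ha
      have key : blk (b+2) = blk (b+1) * blk 1 - blk b := by
        rw [blk_mul_blk_one (b+1) (by omega)]
        simp
      rw [key, mul_sub]
      have assoc : blk a * (blk (b+1) * blk 1) = (blk a * blk (b+1)) * blk 1 := by ring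
      rw [assoc, ih (b+1) (by omega) a (by omega), ih b (by omega) a (by omega)]
      rw [Finset.sum_mul]
      have hsplit : ∀ j ∈ Finset.range (b+2),
          blk (a - (b+1) + 2*j) * blk 1 = blk (a - b + 2*j) + blk (a - (b+2) + 2*j) := by
        intro j hj
        have e1 : a - (b+1) + 2*j + 1 = a - b + 2*j := by omega
        have e2 : a - (b+1) + 2*j - 1 = a - (b+2) + 2*j := by omega
        rw [blk_mul_blk_one _ (by omega), e1, e2]
      rw [Finset.sum_congr rfl hsplit, Finset.sum_add_distrib]
      rw [Finset.sum_range_succ (fun j => blk (a - b + 2*j)) (b+1)]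
      rw [Finset.sum_range_succ (fun j => blk (a - (b+2) + 2*j)) (b+2)]
      have e3 : a - b + 2*(b+1) = a - (b+2) + 2*(b+2) := by omega
      rw [e3]
      abel

noncomputable abbrev L2 : Type := AddMonoidAlgebra ℤ (ℤ × ℤ)

noncomputable def Tmap : L →+* L2 :=
  AddMonoidAlgebra.mapDomainRingHom ℤ
    (AddMonoidHom.mk' (fun d => ((0:ℤ), d)) (by intro a b; simp [Prod.ext_iff]))

lemma Tmap_single (d c : ℤ) :
    Tmap (AddMonoidAlgebra.single d c) = AddMonoidAlgebra.single ((0:ℤ), d) c := by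
  rw [Tmap]
  show AddMonoidAlgebra.mapDomain _ _ = _
  rw [AddMonoidAlgebra.mapDomain_single]
  rfl

noncomputable def Blk (n i : ℕ) : L2 :=
  AddMonoidAlgebra.single ((n:ℤ), (0:ℤ)) 1 * Tmap (blk i)

lemma Blk_eq_sum (n i : ℕ) :
    Blk n i = ∑ j ∈ Finset.range (i+1), AddMonoidAlgebra.single ((n:ℤ), (i:ℤ)-2*j) (1:ℤ) := by
  rw [Blk, blk, map_sum, Finset.mul_sum]
  refine Finset.sum_congr rfl fun j hj => ?_
  rw [Tmap_single, AddMonoidAlgebra.single_mul_single, mul_one, Prod.mk_add_mk, add_zero, zero_add]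

lemma Blk_mul_Blk (n m a b : ℕ) (hba : b ≤ a) :
    Blk n a * Blk m b = ∑ j ∈ Finset.range (b+1), Blk (n+m) (a - b + 2*j) := by
  rw [Blk, Blk, mul_mul_mul_comm, AddMonoidAlgebra.single_mul_single, mul_one,
    ← map_mul, blk_mul_blk b a hba, map_sum, Finset.mul_sum]
  refine Finset.sum_congr rfl fun j hj => ?_
  rw [Blk, Prod.mk_add_mk, add_zero]
  norm_num

lemma Blk_apply (n i : ℕ) (m d : ℤ) :
    (Blk n i) (m, d) = if ((n:ℤ) = m ∧ -(i:ℤ) ≤ d ∧ d ≤ i ∧ (2:ℤ) ∣ ((i:ℤ) - d)) then 1 else 0 := by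
  rw [Blk_eq_sum]
  rw [AddMonoidAlgebra.coeff_sum, Finsupp.finset_sum_apply]
  have hterm : ∀ j : ℕ, (AddMonoidAlgebra.single ((n:ℤ), (i:ℤ)-2*j) (1:ℤ)) (m, d)
      = if (((n:ℤ), (i:ℤ)-2*(j:ℤ)) = (m, d)) then (1:ℤ) else 0 := by
    intro j
    exact Finsupp.single_apply
  rw [Finset.sum_congr rfl (fun j _ => hterm j)]
  by_cases hC : ((n:ℤ) = m ∧ -(i:ℤ) ≤ d ∧ d ≤ i ∧ (2:ℤ) ∣ ((i:ℤ) - d))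
  · rw [if_pos hC]
    obtain ⟨h1, h2, h3, t, ht⟩ := hC
    have hsum : ∀ j ∈ Finset.range (i+1),
        (if (((n:ℤ), (i:ℤ)-2*(j:ℤ)) = (m, d)) then (1:ℤ) else 0)
          = if j = t.toNat then (1:ℤ) else 0 := by
      intro j hj
      refine if_congr ?_ rfl rfl
      rw [Prod.mk.injEq]
      constructor
      · rintro ⟨-, h⟩; omega
      · rintro rfl; exact ⟨h1, by omega⟩
    rw [Finset.sum_congr rfl hsum, Finset.sum_ite_eq' (Finset.range (i+1)) t.toNat (fun _ => (1:ℤ))]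
    rw [if_pos (Finset.mem_range.mpr (by omega))]
  · rw [if_neg hC]
    refine Finset.sum_eq_zero fun j hj => ?_
    rw [if_neg]
    intro hEq
    rw [Prod.mk.injEq] at hEq
    obtain ⟨h1, h2⟩ := hEq
    have hj' : j < i + 1 := Finset.mem_range.mp hj
    exact hC ⟨h1, by omega, by omega, ⟨(i:ℤ) - j, by omega⟩⟩

/-- The cone of nonnegative combinations of symmetric blocks. -/
inductive InC : L2 → Prop
  | blk (n i : ℕ) : InC (Blk n i)
  | zero : InC 0
  | add {F G : L2} : InC F → InC G → InC (F + G)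
  | smul {F : L2} (c : ℤ) (hc : 0 ≤ c) : InC F → InC (c • F)

lemma InC_one : InC 1 := by
  have h := InC.blk 0 0
  have : Blk 0 0 = 1 := by
    rw [Blk, blk_zero, map_one, mul_one]
    rw [AddMonoidAlgebra.one_def]
    norm_num
    rfl
  rwa [this] at h

lemma InC_sum {α : Type} {s : Finset α} {f : α → L2} (h : ∀ a ∈ s, InC (f a)) :
    InC (∑ a ∈ s, f a) := by
  classical
  induction s using Finset.induction_on with
  | empty => simpa using InC.zero
  | insert _ _ hx ih =>
    rw [Finset.sum_insert hx]
    exact InC.add (h _ (Finset.mem_insert_self _ _))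
      (ih fun a ha => h a (Finset.mem_insert_of_mem ha))

lemma InC_blk_mul {G : L2} (hG : InC G) : ∀ n i : ℕ, InC (Blk n i * G) := by
  induction hG with
  | blk m j =>
    intro n i
    rcases le_total j i with h | h
    · rw [Blk_mul_Blk n m i j h]
      exact InC_sum fun a _ => InC.blk _ _
    · rw [mul_comm, Blk_mul_Blk m n j i h]
      exact InC_sum fun a _ => InC.blk _ _
  | zero => intro n i; rw [mul_zero]; exact InC.zero
  | add hA hB ih1 ih2 => intro n i; rw [mul_add]; exact InC.add (ih1 n i) (ih2 n i)
  | smul c hc hF ih => intro n i; rw [mul_smul_comm]; exact InC.smul c hc (ih n i)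

lemma InC_mul {F G : L2} (hF : InC F) (hG : InC G) : InC (F * G) := by
  induction hF with
  | blk n i => exact InC_blk_mul hG n i
  | zero => rw [zero_mul]; exact InC.zero
  | add hA hB ih1 ih2 => rw [add_mul]; exact InC.add ih1 ih2
  | smul c hc hF ih => rw [smul_mul_assoc]; exact InC.smul c hc ih

lemma InC_pow {F : L2} (hF : InC F) (r : ℕ) : InC (F ^ r) := by
  induction r with
  | zero => simpa using InC_one
  | succ r ih => rw [pow_succ]; exact InC_mul ih hF

lemma InC_nonneg {F : L2} (hF : InC F) : ∀ p : ℤ × ℤ, 0 ≤ F p := by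
  induction hF with
  | blk n i => intro ⟨m, d⟩; rw [Blk_apply]; split <;> norm_num
  | zero => intro p; simp
  | add hA hB ih1 ih2 => intro p; rw [AddMonoidAlgebra.coeff_add, Finsupp.add_apply]; exact add_nonneg (ih1 p) (ih2 p)
  | smul c hc hF ih => intro p; rw [AddMonoidAlgebra.coeff_smul_apply]; exact mul_nonneg hc (ih p)

lemma InC_mono {F : L2} (hF : InC F) (n d d' : ℤ) (h1 : |d| ≤ |d'|) (h2 : (2:ℤ) ∣ (d' - d)) :
    F (n, d') ≤ F (n, d) := by
  induction hF with
  | blk m i =>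
    rw [Blk_apply, Blk_apply]
    have habs : -|d'| ≤ d' ∧ d' ≤ |d'| := ⟨neg_abs_le d', le_abs_self d'⟩
    have habs2 : -|d| ≤ d ∧ d ≤ |d| := ⟨neg_abs_le d, le_abs_self d⟩
    have habs3 : |d| ≤ d ∨ |d| ≤ -d := by rcases abs_cases d with ⟨h,_⟩|⟨h,_⟩ <;> omega
    split
    · next hc =>
        obtain ⟨e1, e2, e3, t, ht⟩ := hc
        obtain ⟨s, hs⟩ := h2
        have habs4 : |d'| ≤ (i:ℤ) := abs_le.mpr ⟨e2, e3⟩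
        rw [if_pos ⟨e1, by omega, by omega, ⟨t + s, by omega⟩⟩]
    · split <;> norm_num
  | zero => simp
  | add hA hB ih1 ih2 => rw [AddMonoidAlgebra.coeff_add, Finsupp.add_apply, Finsupp.add_apply]; exact add_le_add ih1 ih2
  | smul c hc hF ih =>
    rw [AddMonoidAlgebra.coeff_smul_apply, AddMonoidAlgebra.coeff_smul_apply]
    exact mul_le_mul_of_nonneg_left ih hc

noncomputable def Phi1 : AddMonoidAlgebra ℤ ℕ →+* L2 :=
  AddMonoidAlgebra.mapDomainRingHom ℤ
    (AddMonoidHom.mk' (fun u : ℕ => ((u:ℤ), (u:ℤ)))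
      (by intro a b; rw [Prod.mk_add_mk]; push_cast; rfl))

noncomputable def Phi2 : AddMonoidAlgebra ℤ ℕ →+* L2 :=
  AddMonoidAlgebra.mapDomainRingHom ℤ
    (AddMonoidHom.mk' (fun u : ℕ => ((u:ℤ), -(u:ℤ)))
      (by intro a b; rw [Prod.mk_add_mk]; push_cast; rw [neg_add]))

lemma Phi1_single (a : ℕ) (c : ℤ) :
    Phi1 (AddMonoidAlgebra.single a c) = AddMonoidAlgebra.single ((a:ℤ), (a:ℤ)) c := by
  rw [Phi1]
  show AddMonoidAlgebra.mapDomain _ _ = _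
  rw [AddMonoidAlgebra.mapDomain_single]
  rfl

lemma Phi2_single (a : ℕ) (c : ℤ) :
    Phi2 (AddMonoidAlgebra.single a c) = AddMonoidAlgebra.single ((a:ℤ), -(a:ℤ)) c := by
  rw [Phi2]
  show AddMonoidAlgebra.mapDomain _ _ = _
  rw [AddMonoidAlgebra.mapDomain_single]
  rfl

lemma Phi1_eq (q : AddMonoidAlgebra ℤ ℕ) :
    Phi1 q = ∑ a ∈ q.coeff.support, AddMonoidAlgebra.single ((a:ℤ), (a:ℤ)) (q a) := by
  conv_lhs => rw [← AddMonoidAlgebra.sum_coeff_single q]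
  rw [Finsupp.sum, map_sum]
  exact Finset.sum_congr rfl fun a _ => Phi1_single a (q a)

lemma Phi2_eq (q : AddMonoidAlgebra ℤ ℕ) :
    Phi2 q = ∑ a ∈ q.coeff.support, AddMonoidAlgebra.single ((a:ℤ), -(a:ℤ)) (q a) := by
  conv_lhs => rw [← AddMonoidAlgebra.sum_coeff_single q]
  rw [Finsupp.sum, map_sum]
  exact Finset.sum_congr rfl fun a _ => Phi2_single a (q a)

lemma mul_apply_key (q₁ q₂ : AddMonoidAlgebra ℤ ℕ) (u v : ℕ) :
    (Phi1 q₁ * Phi2 q₂) (((u:ℤ)+(v:ℤ), (u:ℤ)-(v:ℤ))) = q₁ u * q₂ v := by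
  classical
  rw [Phi1_eq, Phi2_eq, Finset.sum_mul_sum, AddMonoidAlgebra.coeff_sum, Finsupp.finset_sum_apply]
  have hval : ∀ a b : ℕ,
      (AddMonoidAlgebra.single ((a:ℤ),(a:ℤ)) (q₁ a) * AddMonoidAlgebra.single ((b:ℤ),-(b:ℤ)) (q₂ b))
          (((u:ℤ)+(v:ℤ), (u:ℤ)-(v:ℤ)))
        = if a = u ∧ b = v then q₁ a * q₂ b else 0 := by
    intro a b
    rw [AddMonoidAlgebra.single_mul_single, Prod.mk_add_mk]
    rw [AddMonoidAlgebra.coeff_single_apply]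
    refine if_congr ?_ rfl rfl
    rw [Prod.mk.injEq]
    constructor
    · rintro ⟨hx, hy⟩; constructor <;> omega
    · rintro ⟨rfl, rfl⟩; exact ⟨rfl, rfl⟩
  have hinner : ∀ a ∈ q₁.coeff.support,
      ((∑ b ∈ q₂.coeff.support, AddMonoidAlgebra.single ((a:ℤ),(a:ℤ)) (q₁ a)
          * AddMonoidAlgebra.single ((b:ℤ),-(b:ℤ)) (q₂ b)) (((u:ℤ)+(v:ℤ), (u:ℤ)-(v:ℤ))))
        = if a = u then q₁ a * q₂ v else 0 := by
    intro a _
    rw [AddMonoidAlgebra.coeff_sum, Finsupp.finset_sum_apply]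
    rw [Finset.sum_congr rfl fun b _ => hval a b]
    by_cases ha : a = u
    · subst ha
      simp only [true_and]
      rw [Finset.sum_ite_eq' q₂.coeff.support v (fun b => q₁ a * q₂ b)]
      by_cases hv : v ∈ q₂.coeff.support
      · rw [if_pos hv]; simp
      · rw [if_neg hv, Finsupp.notMem_support_iff.mp hv, mul_zero]; simp
    · rw [if_neg ha]
      exact Finset.sum_eq_zero fun b _ => by rw [if_neg (fun h => ha h.1)]
  rw [Finset.sum_congr rfl hinner]
  rw [Finset.sum_ite_eq' q₁.coeff.support u (fun a => q₁ a * q₂ v)]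
  by_cases hu : u ∈ q₁.coeff.support
  · rw [if_pos hu]
  · rw [if_neg hu, Finsupp.notMem_support_iff.mp hu, zero_mul]

noncomputable def PP (k : ℕ) : L2 := Phi1 (Pk k).toFinsupp * Phi2 (Pk k).toFinsupp

lemma p_eq (k : ℕ) :
    (Pk k).toFinsupp = ∑ i ∈ Finset.Ico 1 k, AddMonoidAlgebra.single i (1:ℤ) := by
  rw [Pk, Polynomial.toFinsupp_sum]
  exact Finset.sum_congr rfl fun i _ => Polynomial.toFinsupp_X_pow i

lemma PP_eq_double (k : ℕ) : PP k = ∑ i ∈ Finset.Ico 1 k, ∑ j ∈ Finset.Ico 1 k,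
    AddMonoidAlgebra.single ((i:ℤ)+(j:ℤ), (i:ℤ)-(j:ℤ)) (1:ℤ) := by
  rw [PP, p_eq, map_sum, map_sum, Finset.sum_mul_sum]
  refine Finset.sum_congr rfl fun i _ => Finset.sum_congr rfl fun j _ => ?_
  rw [Phi1_single, Phi2_single, AddMonoidAlgebra.single_mul_single, Prod.mk_add_mk, mul_one,
    sub_eq_add_neg]

lemma PP_apply (k : ℕ) (m d : ℤ) :
    (PP k) (m, d) = if ((2:ℤ) ∣ (m - d) ∧ 2 ≤ m+d ∧ m+d ≤ 2*(k:ℤ)-2 ∧ 2 ≤ m-d ∧ m-d ≤ 2*(k:ℤ)-2)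
      then 1 else 0 := by
  classical
  rw [PP_eq_double, AddMonoidAlgebra.coeff_sum, Finsupp.finset_sum_apply]
  have hterm : ∀ i j : ℕ,
      (AddMonoidAlgebra.single ((i:ℤ)+(j:ℤ), (i:ℤ)-(j:ℤ)) (1:ℤ)) (m, d)
        = if (((i:ℤ)+(j:ℤ), (i:ℤ)-(j:ℤ)) = (m, d)) then (1:ℤ) else 0 := fun i j =>
    Finsupp.single_apply
  by_cases hC : ((2:ℤ) ∣ (m - d) ∧ 2 ≤ m+d ∧ m+d ≤ 2*(k:ℤ)-2 ∧ 2 ≤ m-d ∧ m-d ≤ 2*(k:ℤ)-2)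
  · rw [if_pos hC]
    obtain ⟨⟨t, ht⟩, h1, h2, h3, h4⟩ := hC
    have hcollapse : ∀ i ∈ Finset.Ico 1 k,
        ((∑ j ∈ Finset.Ico 1 k,
          AddMonoidAlgebra.single ((i:ℤ)+(j:ℤ), (i:ℤ)-(j:ℤ)) (1:ℤ)) (m, d))
          = if i = (m - t).toNat then (1:ℤ) else 0 := by
      intro i _
      rw [AddMonoidAlgebra.coeff_sum, Finsupp.finset_sum_apply]
      have h5 : ∀ j ∈ Finset.Ico 1 k,
          (AddMonoidAlgebra.single ((i:ℤ)+(j:ℤ), (i:ℤ)-(j:ℤ)) (1:ℤ)) (m, d)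
            = if j = t.toNat then (if i = (m - t).toNat then (1:ℤ) else 0) else 0 := by
        intro j _
        rw [hterm i j]
        have hiff : ((((i:ℤ)+(j:ℤ), (i:ℤ)-(j:ℤ)) : ℤ × ℤ) = (m, d))
            ↔ (j = t.toNat ∧ i = (m - t).toNat) := by
          rw [Prod.mk.injEq]; omega
        rw [if_congr hiff rfl rfl, ite_and]
      rw [Finset.sum_congr rfl h5,
        Finset.sum_ite_eq' (Finset.Ico 1 k) t.toNat
          (fun _ => if i = (m - t).toNat then (1:ℤ) else 0)]
      rw [if_pos (Finset.mem_Ico.mpr (by omega))]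
    rw [Finset.sum_congr rfl hcollapse,
      Finset.sum_ite_eq' (Finset.Ico 1 k) (m - t).toNat (fun _ => (1:ℤ))]
    rw [if_pos (Finset.mem_Ico.mpr (by omega))]
  · rw [if_neg hC]
    refine Finset.sum_eq_zero fun i hi => ?_
    rw [AddMonoidAlgebra.coeff_sum, Finsupp.finset_sum_apply]
    refine Finset.sum_eq_zero fun j hj => ?_
    rw [hterm i j, if_neg]
    rw [Prod.mk.injEq]
    rintro ⟨hx, hy⟩
    have hi' := Finset.mem_Ico.mp hi
    have hj' := Finset.mem_Ico.mp hj
    exact hC ⟨⟨(j:ℤ), by omega⟩, by omega, by omega, by omega, by omega⟩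

lemma PP_decomp (k : ℕ) :
    PP k = ∑ n ∈ Finset.Icc 2 (2*k-2), Blk n (min (n-2) (2*k-2-n)) := by
  classical
  apply AddMonoidAlgebra.ext
  apply Finsupp.ext
  rintro ⟨m, d⟩
  rw [PP_apply, AddMonoidAlgebra.coeff_sum, Finsupp.finset_sum_apply]
  have hterm : ∀ n ∈ Finset.Icc 2 (2*k-2),
      (Blk n (min (n-2) (2*k-2-n))) (m, d)
        = if ((n:ℤ) = m ∧ -((min (n-2) (2*k-2-n) : ℕ):ℤ) ≤ d ∧ d ≤ ((min (n-2) (2*k-2-n) : ℕ):ℤ)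
            ∧ (2:ℤ) ∣ (((min (n-2) (2*k-2-n) : ℕ):ℤ) - d)) then 1 else 0 :=
    fun n _ => Blk_apply n (min (n-2) (2*k-2-n)) m d
  rw [Finset.sum_congr rfl hterm]
  by_cases hC : ((2:ℤ) ∣ (m - d) ∧ 2 ≤ m+d ∧ m+d ≤ 2*(k:ℤ)-2 ∧ 2 ≤ m-d ∧ m-d ≤ 2*(k:ℤ)-2)
  · rw [if_pos hC]
    obtain ⟨⟨t, ht⟩, h1, h2, h3, h4⟩ := hC
    have hcoll : ∀ n ∈ Finset.Icc 2 (2*k-2),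
        (if ((n:ℤ) = m ∧ -((min (n-2) (2*k-2-n) : ℕ):ℤ) ≤ d ∧ d ≤ ((min (n-2) (2*k-2-n) : ℕ):ℤ)
            ∧ (2:ℤ) ∣ (((min (n-2) (2*k-2-n) : ℕ):ℤ) - d)) then (1:ℤ) else 0)
          = if n = m.toNat then 1 else 0 := by
      intro n hn
      have hn' := Finset.mem_Icc.mp hn
      refine if_congr ?_ rfl rfl
      constructor
      · rintro ⟨h, -⟩; omega
      · rintro rfl
        refine ⟨by omega, by omega, by omega, ?_⟩
        rcases le_total (m.toNat-2) (2*k-2-m.toNat) with hle | hle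
        · rw [min_eq_left hle]; exact ⟨t - 1, by omega⟩
        · rw [min_eq_right hle]; exact ⟨(k:ℤ) - 1 - m + t, by omega⟩
    rw [Finset.sum_congr rfl hcoll,
      Finset.sum_ite_eq' (Finset.Icc 2 (2*k-2)) m.toNat (fun _ => (1:ℤ))]
    rw [if_pos (Finset.mem_Icc.mpr (by omega))]
  · rw [if_neg hC]
    refine (Finset.sum_eq_zero fun n hn => ?_).symm
    have hn' := Finset.mem_Icc.mp hn
    rw [if_neg]
    rintro ⟨h0, h5, h6, s, hs⟩
    exact hC ⟨⟨((min (n-2) (2*k-2-n) : ℕ):ℤ) - s - d, by omega⟩, by omega, by omega, by omega,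
      by omega⟩

lemma InC_PP (k : ℕ) : InC (PP k) := by
  rw [PP_decomp]
  exact InC_sum fun n _ => InC.blk _ _

noncomputable def Ebig (k N : ℕ) : L2 := ∑ r ∈ Finset.range N, ((r:ℤ)+1) • (PP k)^r

lemma InC_Ebig (k N : ℕ) : InC (Ebig k N) :=
  InC_sum fun r _ => InC.smul _ (by positivity) (InC_pow (InC_PP k) r)

lemma PP_pow_apply (k r u v : ℕ) :
    ((PP k)^r) (((u:ℤ)+(v:ℤ), (u:ℤ)-(v:ℤ))) = fCoeff k r u * fCoeff k r v := by
  have h : (PP k)^r = Phi1 ((Pk k).toFinsupp ^ r) * Phi2 ((Pk k).toFinsupp ^ r) := by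
    rw [PP, mul_pow, map_pow, map_pow]
  rw [h, mul_apply_key, ← Polynomial.toFinsupp_pow, Polynomial.toFinsupp_apply,
    Polynomial.toFinsupp_apply]
  rfl

lemma Ebig_apply (k N u v : ℕ) :
    (Ebig k N) (((u:ℤ)+(v:ℤ), (u:ℤ)-(v:ℤ)))
      = ∑ r ∈ Finset.range N, ((r:ℤ)+1) * fCoeff k r u * fCoeff k r v := by
  rw [Ebig, AddMonoidAlgebra.coeff_sum, Finsupp.finset_sum_apply]
  refine Finset.sum_congr rfl fun r _ => ?_
  rw [AddMonoidAlgebra.coeff_smul_apply, PP_pow_apply, smul_eq_mul, mul_assoc]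

lemma fCoeff_eq_zero (k r s : ℕ) (h : s < r) : fCoeff k r s = 0 := by
  have hdvd : (Polynomial.X : Polynomial ℤ) ∣ Pk k := by
    rw [Pk]
    refine Finset.dvd_sum fun i hi => dvd_pow_self _ ?_
    have := Finset.mem_Ico.mp hi
    omega
  obtain ⟨c, hc⟩ := pow_dvd_pow_of_dvd hdvd r
  rw [fCoeff, hc, mul_comm, Polynomial.coeff_mul_X_pow', if_neg (by omega)]

lemma Kmat_eq_Ebig (k u v N : ℕ) (hN : u + 1 ≤ N) :
    Kmat k u v = (Ebig k N) (((u:ℤ)+(v:ℤ), (u:ℤ)-(v:ℤ))) := by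
  rw [Ebig_apply, Kmat]
  refine Finset.sum_subset (Finset.range_subset_range.mpr hN) fun r _ hr => ?_
  have : fCoeff k r u = 0 := fCoeff_eq_zero k r u (by simpa using hr)
  rw [this, mul_zero, zero_mul]

/-- `K_{u,v} ≥ K_{u',v'}` whenever `u + v = u' + v'` and `|u - v| ≤ |u' - v'|`. -/
theorem Kmat_central_monotone (k : ℕ) (hk : 2 ≤ k) (u v u' v' : ℕ)
    (hsum : u + v = u' + v') (habs : |(u : ℤ) - (v : ℤ)| ≤ |(u' : ℤ) - (v' : ℤ)|) :
    Kmat k u' v' ≤ Kmat k u v := by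
  have hsumZ : (u:ℤ) + v = (u':ℤ) + v' := by exact_mod_cast hsum
  have e1 : Kmat k u v = (Ebig k (u+v+1)) (((u:ℤ)+(v:ℤ), (u:ℤ)-(v:ℤ))) :=
    Kmat_eq_Ebig k u v (u+v+1) (by omega)
  have e2 : Kmat k u' v' = (Ebig k (u+v+1)) (((u':ℤ)+(v':ℤ), (u':ℤ)-(v':ℤ))) :=
    Kmat_eq_Ebig k u' v' (u+v+1) (by omega)
  rw [e1, e2, ← hsumZ]
  exact InC_mono (InC_Ebig k (u+v+1)) ((u:ℤ)+v) ((u:ℤ)-v) ((u':ℤ)-v') habs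
    ⟨(u':ℤ) - u, by omega⟩
end

section
/- For every integer k ≥ 2 and all nonnegative integers p ≤ q, one has Σ_{i,j ≥ 0} c_{ij}·K_{p−i, q−j} ≥ 0, where c_{ij} = a_i·b_j − b_i·a_j, K_{u,v} = Σ_{r≥0} (r+1)·f_r(u)·f_r(v), and by convention K_{u,v} = 0 whenever u < 0 or v < 0. (This quantity is the coefficient of x^p y^q in ∂_x F(x,y) − ∂_y F(x,y), where F(x,y) = (P_k(x)+P_k(y)+2P_k(x)P_k(y))/(1−P_k(x)P_k(y)).) -/
open Polynomial Finset


/-- The polynomial `A_k(z) = 1 + z + ⋯ + z^{k-1}` over `ℤ`. -/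
noncomputable def Ak (k : ℕ) : Polynomial ℤ := 1 + Pk k

lemma coeff_Pk (k n : ℕ) : (Pk k).coeff n = if n ∈ Finset.Ico 1 k then 1 else 0 := by
  unfold Pk
  rw [Polynomial.finset_sum_coeff]
  simp only [Polynomial.coeff_X_pow]
  rw [Finset.sum_ite_eq (Finset.Ico 1 k) n (fun _ => (1:ℤ))]

lemma coeff_Ak (k n : ℕ) (hk : 0 < k) : (Ak k).coeff n = if n < k then 1 else 0 := by
  unfold Ak
  rw [Polynomial.coeff_add, Polynomial.coeff_one, coeff_Pk]
  simp only [Finset.mem_Ico]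
  split_ifs <;> first | (exfalso; omega) | norm_num

lemma NN_Pk (k n : ℕ) : 0 ≤ (Pk k).coeff n := by
  rw [coeff_Pk]; split_ifs <;> norm_num

lemma NN_Ak (k n : ℕ) : 0 ≤ (Ak k).coeff n := by
  unfold Ak
  rw [Polynomial.coeff_add, Polynomial.coeff_one]
  have := NN_Pk k n
  split_ifs <;> linarith

lemma NN_mul {f g : Polynomial ℤ} (hf : ∀ n, 0 ≤ f.coeff n) (hg : ∀ n, 0 ≤ g.coeff n) :
    ∀ n, 0 ≤ (f * g).coeff n := by
  intro n
  rw [Polynomial.coeff_mul]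
  exact Finset.sum_nonneg fun x _ => mul_nonneg (hf _) (hg _)

lemma NN_dPk (k n : ℕ) : 0 ≤ (Polynomial.derivative (Pk k)).coeff n := by
  rw [Polynomial.coeff_derivative]
  exact mul_nonneg (NN_Pk k _) (by positivity)

lemma NN_pow_Pk (k r n : ℕ) : 0 ≤ ((Pk k) ^ r).coeff n := by
  induction r generalizing n with
  | zero => simp [Polynomial.coeff_one]; split_ifs <;> norm_num
  | succ r ih =>
      rw [pow_succ]
      exact NN_mul ih (NN_Pk k) n

lemma NN_A2 (k n : ℕ) : 0 ≤ ((Ak k) ^ 2).coeff n := by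
  rw [pow_two]
  exact NN_mul (NN_Ak k) (NN_Ak k) n

/-- coefficient of derivative of `Pk` explicitly -/
lemma coeff_dPk (k n : ℕ) : (Polynomial.derivative (Pk k)).coeff n
    = if n + 2 ≤ k then ((n : ℤ) + 1) else 0 := by
  rw [Polynomial.coeff_derivative, coeff_Pk]
  simp only [Finset.mem_Ico]
  split_ifs <;> first | (exfalso; omega) | ring

lemma coeff_A2_small (k n : ℕ) (hn : n < k) : ((Ak k) ^ 2).coeff n = (n : ℤ) + 1 := by
  rw [pow_two, Polynomial.coeff_mul]
  have h1 : ∀ x ∈ Finset.HasAntidiagonal.antidiagonal n,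
      (Ak k).coeff x.1 * (Ak k).coeff x.2 = 1 := by
    intro x hx
    have hx' := Finset.HasAntidiagonal.mem_antidiagonal.1 hx
    rw [coeff_Ak k _ (by omega), coeff_Ak k _ (by omega), if_pos (by omega), if_pos (by omega), mul_one]
  rw [Finset.sum_congr rfl h1, Finset.sum_const, Finset.Nat.card_antidiagonal]
  ring

/-- base TP2 pair: (P', A²). Orientation: B_p A_q ≤ A_p B_q for p ≤ q. -/
lemma tp2_base (k : ℕ) (p q : ℕ) (hpq : p ≤ q) :
    ((Ak k) ^ 2).coeff p * (Polynomial.derivative (Pk k)).coeff q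
      ≤ (Polynomial.derivative (Pk k)).coeff p * ((Ak k) ^ 2).coeff q := by
  by_cases hq : q + 2 ≤ k
  · rw [coeff_dPk, coeff_dPk, if_pos hq, if_pos (by omega),
      coeff_A2_small k p (by omega), coeff_A2_small k q (by omega)]
  · rw [coeff_dPk k q, if_neg hq, mul_zero]
    exact mul_nonneg (NN_dPk k p) (NN_A2 k q)

/-- TP2 minor of the Toeplitz matrix of Pk (interval indicator). -/
lemma minorP (k u v p q : ℕ) (huv : u ≤ v) (hpq : p ≤ q) :
    (Pk k).coeff (p - v) * (Pk k).coeff (q - u)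
      ≤ (Pk k).coeff (p - u) * (Pk k).coeff (q - v) := by
  simp only [coeff_Pk, Finset.mem_Ico]
  split_ifs <;> first | (exfalso; omega) | norm_num

lemma coeff_mul_P_ext (k : ℕ) (C : Polynomial ℤ) {m N : ℕ} (h : m ≤ N) :
    (C * Pk k).coeff m = ∑ u ∈ Finset.range (N + 1), C.coeff u * (Pk k).coeff (m - u) := by
  rw [Polynomial.coeff_mul, Finset.Nat.sum_antidiagonal_eq_sum_range_succ_mk]
  apply Finset.sum_subset
  · exact Finset.range_subset_range.2 (by omega)
  · intro u hu hnu
    simp only [Finset.mem_range] at hu hnu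
    have h0 : m - u = 0 := by omega
    rw [h0, coeff_Pk]
    simp

/-- convolution with Pk preserves the TP2 pair property -/
lemma tp2_mul_P (k : ℕ) (A B : Polynomial ℤ)
    (hA : ∀ n, 0 ≤ A.coeff n) (hB : ∀ n, 0 ≤ B.coeff n)
    (hTP : ∀ p q, p ≤ q → B.coeff p * A.coeff q ≤ A.coeff p * B.coeff q)
    (p q : ℕ) (hpq : p ≤ q) :
    (B * Pk k).coeff p * (A * Pk k).coeff q
      ≤ (A * Pk k).coeff p * (B * Pk k).coeff q := by
  rw [coeff_mul_P_ext k A hpq, coeff_mul_P_ext k A (le_refl q),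
    coeff_mul_P_ext k B hpq, coeff_mul_P_ext k B (le_refl q)]
  set s := Finset.range (q + 1) with hs
  set a : ℕ → ℤ := fun n => A.coeff n with ha
  set b : ℕ → ℤ := fun n => B.coeff n with hb
  set h : ℕ → ℤ := fun n => (Pk k).coeff n with hh
  rw [← sub_nonneg]
  have key : ∑ u ∈ s, ∑ v ∈ s,
      (a u * b v - b u * a v) * (h (p - u) * h (q - v) - h (p - v) * h (q - u))
      = 2 * ((∑ u ∈ s, a u * h (p - u)) * (∑ v ∈ s, b v * h (q - v))
           - (∑ u ∈ s, b u * h (p - u)) * (∑ v ∈ s, a v * h (q - v))) := by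
    have swap : (∑ u ∈ s, ∑ v ∈ s, (a u * b v - b u * a v) * (h (p - v) * h (q - u)))
        = ∑ u ∈ s, ∑ v ∈ s, (a v * b u - b v * a u) * (h (p - u) * h (q - v)) :=
      Finset.sum_comm
    calc ∑ u ∈ s, ∑ v ∈ s,
          (a u * b v - b u * a v) * (h (p - u) * h (q - v) - h (p - v) * h (q - u))
        = (∑ u ∈ s, ∑ v ∈ s, (a u * b v - b u * a v) * (h (p - u) * h (q - v)))
          - ∑ u ∈ s, ∑ v ∈ s, (a u * b v - b u * a v) * (h (p - v) * h (q - u)) := by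
          simp only [mul_sub, Finset.sum_sub_distrib]
      _ = (∑ u ∈ s, ∑ v ∈ s, (a u * b v - b u * a v) * (h (p - u) * h (q - v)))
          - ∑ u ∈ s, ∑ v ∈ s, (a v * b u - b v * a u) * (h (p - u) * h (q - v)) := by
          rw [swap]
      _ = ∑ u ∈ s, ∑ v ∈ s, (2 : ℤ) * ((a u * h (p - u)) * (b v * h (q - v))
            - (b u * h (p - u)) * (a v * h (q - v))) := by
          simp only [← Finset.sum_sub_distrib]
          refine Finset.sum_congr rfl fun u _ => Finset.sum_congr rfl fun v _ => by ring
      _ = 2 * ((∑ u ∈ s, a u * h (p - u)) * (∑ v ∈ s, b v * h (q - v))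
           - (∑ u ∈ s, b u * h (p - u)) * (∑ v ∈ s, a v * h (q - v))) := by
          rw [Finset.sum_mul_sum, Finset.sum_mul_sum]
          simp only [← Finset.sum_sub_distrib, Finset.mul_sum]
  have hW : ∀ u ∈ s, ∀ v ∈ s, (0:ℤ) ≤
      (a u * b v - b u * a v) * (h (p - u) * h (q - v) - h (p - v) * h (q - u)) := by
    intro u _ v _
    rcases le_total u v with huv | hvu
    · apply mul_nonneg
      · have := hTP u v huv; simp only [ha, hb]; linarith
      · have := minorP k u v p q huv hpq; simp only [hh]; linarith
    · have h1 : a u * b v - b u * a v ≤ 0 := by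
        have := hTP v u hvu
        simp only [ha, hb]
        linarith [mul_comm (A.coeff u) (B.coeff v), mul_comm (B.coeff u) (A.coeff v)]
      have h2 : h (p - u) * h (q - v) - h (p - v) * h (q - u) ≤ 0 := by
        have := minorP k v u p q hvu hpq; simp only [hh]; linarith
      nlinarith [h1, h2]
  have hpos := Finset.sum_nonneg fun u hu => Finset.sum_nonneg fun v hv => hW u hu v hv
  rw [key] at hpos
  linarith

/-- the TP2 property for the pair (P'·Pʳ, A²·Pʳ) -/
lemma tp2_r (k r : ℕ) (p q : ℕ) (hpq : p ≤ q) :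
    ((Ak k) ^ 2 * (Pk k) ^ r).coeff p * (Polynomial.derivative (Pk k) * (Pk k) ^ r).coeff q
      ≤ (Polynomial.derivative (Pk k) * (Pk k) ^ r).coeff p
        * ((Ak k) ^ 2 * (Pk k) ^ r).coeff q := by
  induction r generalizing p q with
  | zero => simpa using tp2_base k p q hpq
  | succ r ih =>
      have e1 : (Polynomial.derivative (Pk k) * (Pk k) ^ (r + 1))
          = (Polynomial.derivative (Pk k) * (Pk k) ^ r) * Pk k := by
        rw [pow_succ (Pk k) r, ← mul_assoc]
      have e2 : ((Ak k) ^ 2 * (Pk k) ^ (r + 1))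
          = ((Ak k) ^ 2 * (Pk k) ^ r) * Pk k := by
        rw [pow_succ (Pk k) r, ← mul_assoc]
      rw [e1, e2]
      exact tp2_mul_P k _ _ (fun n => NN_mul (NN_dPk k) (NN_pow_Pk k r) n)
        (fun n => NN_mul (NN_A2 k) (NN_pow_Pk k r) n) ih p q hpq

/-- `a_i`: the coefficient of `z^i` in `P_k′(z)`. -/
noncomputable def aCoeff (k i : ℕ) : ℤ := (Polynomial.derivative (Pk k)).coeff i

/-- `b_i`: the coefficient of `z^i` in `A_k(z)²`. -/
noncomputable def bCoeff (k i : ℕ) : ℤ := ((Ak k) ^ 2).coeff i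

/-- `c_{ij} = a_i·b_j - b_i·a_j`. -/
noncomputable def cMat (k i j : ℕ) : ℤ :=
  aCoeff k i * bCoeff k j - bCoeff k i * aCoeff k j

lemma fvanish (k r u : ℕ) (h : u < r) : fCoeff k r u = 0 := by
  have hX : (Polynomial.X : Polynomial ℤ) ∣ Pk k := by
    rw [Polynomial.X_dvd_iff, coeff_Pk]
    simp
  obtain ⟨g, hg⟩ := pow_dvd_pow_of_dvd hX r
  unfold fCoeff
  rw [hg, mul_comm, Polynomial.coeff_mul_X_pow']
  rw [if_neg (by omega)]

lemma conv_a (k r m : ℕ) :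
    (Polynomial.derivative (Pk k) * (Pk k) ^ r).coeff m
      = ∑ i ∈ Finset.range (m + 1), aCoeff k i * fCoeff k r (m - i) := by
  rw [Polynomial.coeff_mul, Finset.Nat.sum_antidiagonal_eq_sum_range_succ_mk]
  rfl

lemma conv_b (k r m : ℕ) :
    ((Ak k) ^ 2 * (Pk k) ^ r).coeff m
      = ∑ i ∈ Finset.range (m + 1), bCoeff k i * fCoeff k r (m - i) := by
  rw [Polynomial.coeff_mul, Finset.Nat.sum_antidiagonal_eq_sum_range_succ_mk]
  rfl


/-- For `p ≤ q` one has `Σ_{i,j ≥ 0} c_{ij}·K_{p-i, q-j} ≥ 0`, where by convention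
`K_{u,v} = 0` whenever `u < 0` or `v < 0` (so the sum may be truncated at `i ≤ p`,
`j ≤ q`).  This quantity is the coefficient of `x^p y^q` in `∂ₓF - ∂ᵧF` for
`F(x,y) = (P_k(x) + P_k(y) + 2P_k(x)P_k(y)) / (1 - P_k(x)P_k(y))`. -/
theorem cK_sum_nonneg (k : ℕ) (hk : 2 ≤ k) (p q : ℕ) (hpq : p ≤ q) :
    0 ≤ ∑ i ∈ Finset.range (p + 1), ∑ j ∈ Finset.range (q + 1),
          cMat k i j * Kmat k (p - i) (q - j) := by
  have hKext : ∀ i j : ℕ, Kmat k (p - i) (q - j)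
      = ∑ r ∈ Finset.range (p + 1), (r + 1 : ℤ) * fCoeff k r (p - i) * fCoeff k r (q - j) := by
    intro i j
    unfold Kmat
    apply Finset.sum_subset
    · exact Finset.range_subset_range.2 (by omega)
    · intro r hr hnr
      simp only [Finset.mem_range] at hr hnr
      rw [fvanish k r (p - i) (by omega)]
      ring
  have step1 : (∑ i ∈ Finset.range (p + 1), ∑ j ∈ Finset.range (q + 1),
        cMat k i j * Kmat k (p - i) (q - j))
      = ∑ r ∈ Finset.range (p + 1), ∑ i ∈ Finset.range (p + 1), ∑ j ∈ Finset.range (q + 1),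
          cMat k i j * ((r + 1 : ℤ) * fCoeff k r (p - i) * fCoeff k r (q - j)) := by
    calc (∑ i ∈ Finset.range (p + 1), ∑ j ∈ Finset.range (q + 1),
        cMat k i j * Kmat k (p - i) (q - j))
        = ∑ i ∈ Finset.range (p + 1), ∑ j ∈ Finset.range (q + 1), ∑ r ∈ Finset.range (p + 1),
            cMat k i j * ((r + 1 : ℤ) * fCoeff k r (p - i) * fCoeff k r (q - j)) := by
          refine Finset.sum_congr rfl fun i _ => Finset.sum_congr rfl fun j _ => ?_
          rw [hKext i j, Finset.mul_sum]
      _ = ∑ i ∈ Finset.range (p + 1), ∑ r ∈ Finset.range (p + 1), ∑ j ∈ Finset.range (q + 1),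
            cMat k i j * ((r + 1 : ℤ) * fCoeff k r (p - i) * fCoeff k r (q - j)) := by
          exact Finset.sum_congr rfl fun i _ => Finset.sum_comm
      _ = ∑ r ∈ Finset.range (p + 1), ∑ i ∈ Finset.range (p + 1), ∑ j ∈ Finset.range (q + 1),
            cMat k i j * ((r + 1 : ℤ) * fCoeff k r (p - i) * fCoeff k r (q - j)) :=
          Finset.sum_comm
  have step2 : ∀ r : ℕ, (∑ i ∈ Finset.range (p + 1), ∑ j ∈ Finset.range (q + 1),
        cMat k i j * ((r + 1 : ℤ) * fCoeff k r (p - i) * fCoeff k r (q - j)))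
      = (r + 1 : ℤ) *
          ((Polynomial.derivative (Pk k) * (Pk k) ^ r).coeff p
            * ((Ak k) ^ 2 * (Pk k) ^ r).coeff q
          - ((Ak k) ^ 2 * (Pk k) ^ r).coeff p
            * (Polynomial.derivative (Pk k) * (Pk k) ^ r).coeff q) := by
    intro r
    rw [conv_a, conv_b, conv_a, conv_b, Finset.sum_mul_sum, Finset.sum_mul_sum]
    simp only [← Finset.sum_sub_distrib, Finset.mul_sum]
    refine Finset.sum_congr rfl fun i _ => Finset.sum_congr rfl fun j _ => ?_
    unfold cMat
    ring
  rw [step1]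
  refine Finset.sum_nonneg fun r _ => ?_
  rw [step2 r]
  have := tp2_r k r p q hpq
  have h1 : (0:ℤ) ≤ (r + 1 : ℤ) := by positivity
  nlinarith [this, h1]
end

section
/- Let R : [0,1] → ℝ be continuously differentiable with R(t) = R(1−t) for all t ∈ [0,1] and R strictly increasing on [0, 1/2], and let π be a bell-shaped Borel probability measure on [0,1]. Then ∫_{[0,1]} R dπ > ∫_0^1 R(t) dt, where the right-hand side is the integral with respect to Lebesgue measure. -/
open MeasureTheory

/-- Layer-cake / Fubini identity: if `R t - R 0` has the representation
`∫ s in (0,1/2], g0 s · 1_{[s,1-s]}(t) ds` on `[0,1]`, then for any probability measure `μ`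
supported in `[0,1]` we can integrate and swap. -/
lemma bell_key (R g0 : ℝ → ℝ) (hg0c : Continuous g0) (C : ℝ) (hg0b : ∀ x, |g0 x| ≤ C)
    (hRc : ContinuousOn R (Set.Icc 0 1))
    (hrep : ∀ t ∈ Set.Icc (0:ℝ) 1,
      R t - R 0 = ∫ s in Set.Ioc (0:ℝ) (1/2), (if s ≤ t ∧ t ≤ 1 - s then g0 s else 0))
    (μ : Measure ℝ) [IsProbabilityMeasure μ] (hs : μ (Set.Icc (0:ℝ) 1)ᶜ = 0) :
    ∫ t in Set.Icc (0:ℝ) 1, R t ∂μ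
      = R 0 + ∫ s in Set.Ioc (0:ℝ) (1/2), g0 s * (μ (Set.Icc s (1 - s))).toReal := by
  have hIcc1 : μ (Set.Icc (0:ℝ) 1) = 1 := by
    have h1 := measure_add_measure_compl (μ := μ) (measurableSet_Icc (a := (0:ℝ)) (b := 1))
    simpa [hs, measure_univ] using h1
  set ν := μ.restrict (Set.Icc (0:ℝ) 1) with hν
  haveI hprob : IsProbabilityMeasure ν := by
    constructor
    rw [hν, Measure.restrict_apply_univ]; exact hIcc1
  set S := Set.Ioc (0:ℝ) (1/2) with hS
  haveI : IsFiniteMeasure (volume.restrict S) := by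
    constructor
    rw [Measure.restrict_apply_univ, hS, Real.volume_Ioc]
    exact ENNReal.ofReal_lt_top
  set F : ℝ → ℝ → ℝ := fun t s => if s ≤ t ∧ t ≤ 1 - s then g0 s else 0 with hF
  have hMeasA : MeasurableSet {p : ℝ × ℝ | p.2 ≤ p.1 ∧ p.1 ≤ 1 - p.2} := by
    exact (measurableSet_le measurable_snd measurable_fst).inter
      (measurableSet_le measurable_fst (measurable_const.sub measurable_snd))
  have hu_meas : Measurable (Function.uncurry F) :=
    Measurable.ite hMeasA (hg0c.measurable.comp measurable_snd) measurable_const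
  have hint : Integrable (Function.uncurry F) (ν.prod (volume.restrict S)) := by
    refine Integrable.mono' (integrable_const C) hu_meas.aestronglyMeasurable ?_
    filter_upwards with p
    have hC0 : 0 ≤ C := le_trans (abs_nonneg _) (hg0b 0)
    by_cases h : p.2 ≤ p.1 ∧ p.1 ≤ 1 - p.2 <;>
      simp [Function.uncurry, hF, h, abs_le, hC0, hg0b p.2, abs_le.1 (hg0b p.2)]
  have swap := MeasureTheory.integral_integral_swap (f := F) hint
  have hRint : Integrable R ν := hRc.integrableOn_compact isCompact_Icc
  have lhs_eq : ∫ t, ∫ s, F t s ∂(volume.restrict S) ∂ν = (∫ t, R t ∂ν) - R 0 := by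
    have h1 : ∫ t, ∫ s, F t s ∂(volume.restrict S) ∂ν = ∫ t, (R t - R 0) ∂ν := by
      refine integral_congr_ae ?_
      filter_upwards [ae_restrict_mem (measurableSet_Icc (a := (0:ℝ)) (b := 1))] with t ht
      exact (hrep t ht).symm
    rw [h1, integral_sub hRint (integrable_const _), integral_const, probReal_univ]
    simp
  have rhs_eq : ∫ s, ∫ t, F t s ∂ν ∂(volume.restrict S)
      = ∫ s in S, g0 s * (μ (Set.Icc s (1 - s))).toReal := by
    refine integral_congr_ae ?_
    filter_upwards [ae_restrict_mem measurableSet_Ioc] with s hsS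
    have hfun : (fun t => F t s) = (Set.Icc s (1 - s)).indicator (fun _ => g0 s) := by
      funext t
      simp [hF, Set.indicator_apply, Set.mem_Icc]
    rw [hfun, integral_indicator_const _ measurableSet_Icc]
    have hsub : Set.Icc s (1 - s) ⊆ Set.Icc (0:ℝ) 1 :=
      Set.Icc_subset_Icc (le_of_lt hsS.1) (by linarith [hsS.1])
    rw [hν, measureReal_restrict_apply measurableSet_Icc, Set.inter_eq_self_of_subset_left hsub]
    rw [smul_eq_mul, mul_comm]; rfl
  have : (∫ t, R t ∂ν) - R 0 = ∫ s in S, g0 s * (μ (Set.Icc s (1 - s))).toReal := by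
    rw [← lhs_eq, swap, rhs_eq]
  linarith [this]

/-- If `R : [0,1] → ℝ` is continuously differentiable, symmetric (`R(t) = R(1-t)`), and
strictly increasing on `[0, 1/2]`, and `π` is a bell-shaped Borel probability measure on
`[0,1]` (i.e. `π [a, 1-a] ≥ 1 - 2a` for all `a ∈ [0, 1/2)`, strictly for at least one such
`a`), then `∫ R dπ > ∫₀¹ R(t) dt`. -/
theorem bell_shaped_integral_gt_uniform (R : ℝ → ℝ)
    (hR : ContDiffOn ℝ 1 R (Set.Icc 0 1))
    (hsym : ∀ t ∈ Set.Icc (0 : ℝ) 1, R t = R (1 - t))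
    (hmono : StrictMonoOn R (Set.Icc (0 : ℝ) (1 / 2)))
    (π : Measure ℝ) [IsProbabilityMeasure π]
    (hsupp : π (Set.Icc (0 : ℝ) 1)ᶜ = 0)
    (hbell : ∀ a ∈ Set.Ico (0 : ℝ) (1 / 2),
      ENNReal.ofReal (1 - 2 * a) ≤ π (Set.Icc a (1 - a)))
    (hbell' : ∃ a ∈ Set.Ico (0 : ℝ) (1 / 2),
      ENNReal.ofReal (1 - 2 * a) < π (Set.Icc a (1 - a))) :
    (∫ t in (0 : ℝ)..1, R t) < ∫ t in Set.Icc (0 : ℝ) 1, R t ∂π := by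
  classical
  set g : ℝ → ℝ := derivWithin R (Set.Icc 0 1) with hg
  have hgC : ContinuousOn g (Set.Icc 0 1) :=
    hR.continuousOn_derivWithin (uniqueDiffOn_Icc zero_lt_one) le_rfl
  have hd : ∀ x ∈ Set.Ioo (0:ℝ) 1, HasDerivAt R (g x) x := by
    intro x hx
    have hdx : DifferentiableWithinAt ℝ R (Set.Icc 0 1) x :=
      hR.differentiableOn one_ne_zero x (Set.Ioo_subset_Icc_self hx)
    exact hdx.hasDerivWithinAt.hasDerivAt (Icc_mem_nhds hx.1 hx.2)
  have hRc : ContinuousOn R (Set.Icc 0 1) := hR.continuousOn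
  have hftc : ∀ m ∈ Set.Icc (0:ℝ) (1/2), ∫ s in (0:ℝ)..m, g s = R m - R 0 := by
    intro m hm
    have hsub : Set.Icc (0:ℝ) m ⊆ Set.Icc 0 1 :=
      Set.Icc_subset_Icc le_rfl (by linarith [hm.2])
    refine intervalIntegral.integral_eq_sub_of_hasDeriv_right_of_le hm.1
      (hRc.mono hsub) (fun x hx => ?_) ?_
    · exact (hd x ⟨hx.1, by linarith [hx.2, hm.2]⟩).hasDerivWithinAt
    · exact (hgC.mono hsub).intervalIntegrable_of_Icc hm.1
  -- clamp of `g` into `[0,1/2]`, to get a globally continuous bounded version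
  set c : ℝ → ℝ := fun x => max 0 (min x (1/2)) with hc
  have hc_cont : Continuous c := continuous_const.max (continuous_id.min continuous_const)
  have hc_mem : ∀ x, c x ∈ Set.Icc (0:ℝ) (1/2) :=
    fun x => ⟨le_max_left _ _, max_le (by norm_num) (min_le_right _ _)⟩
  have hc_id : ∀ x ∈ Set.Icc (0:ℝ) (1/2), c x = x := by
    intro x hx
    show max 0 (min x (1/2)) = x
    rw [min_eq_left hx.2, max_eq_right hx.1]
  set g0 : ℝ → ℝ := fun x => g (c x) with hg0
  have hhalf : Set.Icc (0:ℝ) (1/2) ⊆ Set.Icc 0 1 := Set.Icc_subset_Icc le_rfl (by norm_num)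
  have hg0c : Continuous g0 :=
    (hgC.mono hhalf).comp_continuous hc_cont hc_mem
  have hg0eq : ∀ x ∈ Set.Icc (0:ℝ) (1/2), g0 x = g x :=
    fun x hx => by show g (c x) = g x; rw [hc_id x hx]
  obtain ⟨C, hC⟩ : ∃ C, ∀ x ∈ Set.Icc (0:ℝ) (1/2), ‖g0 x‖ ≤ C :=
    isCompact_Icc.exists_bound_of_continuousOn hg0c.continuousOn
  have hg0b : ∀ x, |g0 x| ≤ C := by
    intro x
    have : g0 x = g0 (c x) := by show g (c x) = g (c (c x)); rw [hc_id (c x) (hc_mem x)]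
    rw [this]
    exact hC (c x) (hc_mem x)
  -- representation
  have hrep : ∀ t ∈ Set.Icc (0:ℝ) 1,
      R t - R 0 = ∫ s in Set.Ioc (0:ℝ) (1/2), (if s ≤ t ∧ t ≤ 1 - s then g0 s else 0) := by
    intro t ht
    set m : ℝ := min t (1 - t) with hm
    have hm0 : 0 ≤ m := le_min ht.1 (by linarith [ht.2])
    have hmh : m ≤ 1/2 := by
      rcases le_total t (1/2) with h | h
      · exact le_trans (min_le_left _ _) h
      · exact le_trans (min_le_right _ _) (by linarith)
    have h1 : (fun s => if s ≤ t ∧ t ≤ 1 - s then g0 s else 0)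
        = (Set.Iic m).indicator g0 := by
      funext s
      have : (s ≤ t ∧ t ≤ 1 - s) ↔ s ≤ m := by
        constructor
        · rintro ⟨h1, h2⟩; exact le_min h1 (by linarith)
        · intro h; exact ⟨le_trans h (min_le_left _ _),
            by have := le_trans h (min_le_right _ _); linarith⟩
      simp [Set.indicator_apply, Set.mem_Iic, this]
    rw [h1, setIntegral_indicator measurableSet_Iic]
    have h2 : Set.Ioc (0:ℝ) (1/2) ∩ Set.Iic m = Set.Ioc 0 m := by
      rw [Set.Ioc_inter_Iic, min_eq_right hmh]
    rw [h2, ← intervalIntegral.integral_of_le hm0]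
    have h3 : ∫ s in (0:ℝ)..m, g0 s = ∫ s in (0:ℝ)..m, g s := by
      refine intervalIntegral.integral_congr (fun s hs => ?_)
      rw [Set.uIcc_of_le hm0] at hs
      exact hg0eq s ⟨hs.1, le_trans hs.2 hmh⟩
    rw [h3, hftc m ⟨hm0, hmh⟩]
    rcases le_total t (1/2) with h | h
    · rw [hm, min_eq_left (by linarith)]
    · rw [hm, min_eq_right (by linarith), ← hsym t ht]
  -- nonnegativity of g0 on Ioo 0 (1/2)
  have hg0nn : ∀ s ∈ Set.Ioo (0:ℝ) (1/2), 0 ≤ g0 s := by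
    intro s hs
    rw [hg0eq s ⟨hs.1.le, hs.2.le⟩]
    have hds : HasDerivAt R (g s) s := hd s ⟨hs.1, by linarith [hs.2]⟩
    have hslope : Filter.Tendsto (slope R s) (nhdsWithin s (Set.Ioi s)) (nhds (g s)) :=
      ((hasDerivAt_iff_tendsto_slope).1 hds).mono_left
        (nhdsWithin_mono s (by intro y hy; exact ne_of_gt hy))
    refine ge_of_tendsto hslope ?_
    have hmem : Set.Ioo s (1/2) ∈ nhdsWithin s (Set.Ioi s) := by
      have := inter_mem_nhdsWithin (Set.Ioi s) (Iio_mem_nhds hs.2)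
      rwa [Set.Ioi_inter_Iio] at this
    filter_upwards [hmem] with y hy
    have hRy : R s < R y := hmono ⟨hs.1.le, hs.2.le⟩ ⟨by linarith [hs.1, hy.1], hy.2.le⟩ hy.1
    rw [slope_def_field]
    exact div_nonneg (by linarith) (by linarith [hy.1])
  -- g0 can not vanish identically on a nondegenerate subinterval of (0, 1/2)
  have hzero : ∀ cc a₀ : ℝ, 0 < cc → cc < a₀ → a₀ < 1/2 →
      (∀ s ∈ Set.Icc cc a₀, g0 s = 0) → False := by
    intro cc a₀ hccpos hlt hhalf' hvan
    have hccI : cc ∈ Set.Icc (0:ℝ) (1/2) := ⟨hccpos.le, by linarith⟩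
    have ha₀I : a₀ ∈ Set.Icc (0:ℝ) (1/2) := ⟨by linarith, hhalf'.le⟩
    have hii : ∀ m ∈ Set.Icc (0:ℝ) (1/2), IntervalIntegrable g volume 0 m := by
      intro m hm
      exact (hgC.mono (Set.Icc_subset_Icc le_rfl (by linarith [hm.2]))).intervalIntegrable_of_Icc hm.1
    have hsplit : ∫ s in cc..a₀, g s = R a₀ - R cc := by
      have := intervalIntegral.integral_interval_sub_left (hii a₀ ha₀I) (hii cc hccI)
      rw [hftc a₀ ha₀I, hftc cc hccI] at this
      rw [← this]; ring
    have hzero' : ∫ s in cc..a₀, g s = 0 := by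
      have e1 : ∫ s in cc..a₀, g s = ∫ s in cc..a₀, g0 s :=
        intervalIntegral.integral_congr (fun s hs => by
          rw [Set.uIcc_of_le hlt.le] at hs
          exact (hg0eq s ⟨le_trans hccpos.le hs.1, le_trans hs.2 hhalf'.le⟩).symm)
      have e2 : ∫ s in cc..a₀, g0 s = ∫ s in cc..a₀, (0:ℝ) :=
        intervalIntegral.integral_congr (fun s hs => by
          rw [Set.uIcc_of_le hlt.le] at hs; exact hvan s hs)
      rw [e1, e2]; simp
    have : R cc < R a₀ := hmono hccI ha₀I hlt
    rw [hzero'] at hsplit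
    linarith
  -- apply the key identity to π and to Lebesgue measure on [0,1]
  have keyπ := bell_key R g0 hg0c C hg0b hRc hrep π hsupp
  haveI instL : IsProbabilityMeasure (volume.restrict (Set.Icc (0:ℝ) 1)) := by
    constructor
    rw [Measure.restrict_apply_univ, Real.volume_Icc]; norm_num
  have hsuppL : (volume.restrict (Set.Icc (0:ℝ) 1)) (Set.Icc (0:ℝ) 1)ᶜ = 0 := by
    rw [Measure.restrict_apply measurableSet_Icc.compl]; simp
  have keyL := bell_key R g0 hg0c C hg0b hRc hrep (volume.restrict (Set.Icc 0 1)) hsuppL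
  have hLhs : (∫ t in (0:ℝ)..1, R t)
      = ∫ t in Set.Icc (0:ℝ) 1, R t ∂(volume.restrict (Set.Icc 0 1)) := by
    rw [Measure.restrict_restrict measurableSet_Icc, Set.inter_self,
      intervalIntegral.integral_of_le zero_le_one, integral_Icc_eq_integral_Ioc]
  have hmeasEq : ∫ s in Set.Ioc (0:ℝ) (1/2),
        g0 s * ((volume.restrict (Set.Icc (0:ℝ) 1)) (Set.Icc s (1-s))).toReal
      = ∫ s in Set.Ioc (0:ℝ) (1/2), g0 s * (1 - 2*s) := by
    refine integral_congr_ae ?_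
    filter_upwards [ae_restrict_mem measurableSet_Ioc] with s hs
    rw [Measure.restrict_apply measurableSet_Icc,
      Set.inter_eq_self_of_subset_left (Set.Icc_subset_Icc hs.1.le (by linarith [hs.1])),
      Real.volume_Icc, ENNReal.toReal_ofReal (by linarith [hs.2])]
    ring
  rw [hLhs, keyL, keyπ, hmeasEq]
  refine add_lt_add_right ?_ (R 0)
  -- final strict inequality
  set S := Set.Ioc (0:ℝ) (1/2) with hS
  set GG : ℝ → ℝ := fun s => (π (Set.Icc s (1 - s))).toReal with hGG
  have hC0 : 0 ≤ C := le_trans (abs_nonneg _) (hg0b 0)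
  have hGGanti : Antitone GG := by
    intro a b hab
    exact ENNReal.toReal_mono (measure_ne_top π _)
      (measure_mono (Set.Icc_subset_Icc hab (by linarith)))
  have hGGm : Measurable GG := hGGanti.measurable
  have hGG01 : ∀ s, 0 ≤ GG s ∧ GG s ≤ 1 := by
    intro s
    refine ⟨ENNReal.toReal_nonneg, ?_⟩
    have h1 : π (Set.Icc s (1-s)) ≤ 1 := prob_le_one
    have := ENNReal.toReal_mono (by simp) h1
    simpa using this
  have hi1 : IntegrableOn (fun s => g0 s * (1 - 2*s)) S volume := by
    have hcont2 : Continuous (fun s : ℝ => 1 - 2*s) :=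
      continuous_const.sub (continuous_const.mul continuous_id)
    exact (hg0c.mul hcont2).integrableOn_Ioc
  have hi2 : IntegrableOn (fun s => g0 s * GG s) S volume := by
    refine Integrable.mono' (integrable_const C)
      ((hg0c.measurable.mul hGGm).aestronglyMeasurable) ?_
    filter_upwards with s
    rw [Real.norm_eq_abs, abs_mul]
    calc |g0 s| * |GG s| ≤ C * 1 := by
          refine mul_le_mul (hg0b s) ?_ (abs_nonneg _) hC0
          rw [abs_of_nonneg (hGG01 s).1]; exact (hGG01 s).2
      _ = C := mul_one C
  rw [← sub_pos, ← integral_sub hi2 hi1]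
  set D : ℝ → ℝ := fun s => g0 s * (GG s - (1 - 2*s)) with hD
  have hDeq : (fun s => g0 s * GG s - g0 s * (1 - 2*s)) = D := by funext s; ring
  rw [hDeq]
  have hiD : IntegrableOn D S volume := by rw [← hDeq]; exact hi2.sub hi1
  -- excess is nonneg
  have hexc : ∀ s ∈ Set.Ico (0:ℝ) (1/2), 1 - 2*s ≤ GG s := by
    intro s hs
    have := ENNReal.toReal_mono (measure_ne_top π _) (hbell s hs)
    rwa [ENNReal.toReal_ofReal (by linarith [hs.2])] at this
  have hrestr : volume.restrict S = volume.restrict (Set.Ioo (0:ℝ) (1/2)) :=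
    (Measure.restrict_congr_set Ioo_ae_eq_Ioc).symm
  have hD0 : 0 ≤ᵐ[volume.restrict S] D := by
    rw [hrestr]
    filter_upwards [ae_restrict_mem measurableSet_Ioo] with s hs
    exact mul_nonneg (hg0nn s hs) (by linarith [hexc s ⟨hs.1.le, hs.2⟩])
  -- find the strict point
  obtain ⟨a₀, ha₀I, ha₀⟩ := hbell'
  have ha₀lt : 1 - 2*a₀ < GG a₀ := by
    have := (ENNReal.toReal_lt_toReal ENNReal.ofReal_ne_top (measure_ne_top π _)).2 ha₀
    rwa [ENNReal.toReal_ofReal (by linarith [ha₀I.2])] at this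
  have ha₀pos : 0 < a₀ := by
    rcases lt_or_eq_of_le ha₀I.1 with h | h
    · exact h
    · exfalso; rw [← h] at ha₀lt; simp at ha₀lt; linarith [(hGG01 0).2, ha₀lt]
  set ε : ℝ := GG a₀ - (1 - 2*a₀) with hε
  have hεpos : 0 < ε := by rw [hε]; linarith
  set cc : ℝ := max (a₀/2) (a₀ - ε/4) with hccdef
  have hccpos : 0 < cc := lt_max_of_lt_left (by linarith)
  have hcclt : cc < a₀ := max_lt (by linarith) (by linarith)
  have hexc2 : ∀ s ∈ Set.Icc cc a₀, ε/2 ≤ GG s - (1 - 2*s) := by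
    intro s hs
    have h1 : GG a₀ ≤ GG s := hGGanti hs.2
    have h2 : a₀ - ε/4 ≤ cc := le_max_right _ _
    have h3 : a₀ - ε/4 ≤ s := le_trans h2 hs.1
    rw [hε] at *; linarith
  -- find a point with positive g0
  have hex : ∃ p ∈ Set.Icc cc a₀, 0 < g0 p := by
    by_contra h
    push_neg at h
    refine hzero cc a₀ hccpos hcclt (by linarith [ha₀I.2]) (fun s hs => ?_)
    refine le_antisymm (h s hs) (hg0nn s ⟨lt_of_lt_of_le hccpos hs.1, ?_⟩)
    exact lt_of_le_of_lt hs.2 (by linarith [ha₀I.2])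
  obtain ⟨p, hpI, hppos⟩ := hex
  have hopen : IsOpen {x : ℝ | g0 p / 2 < g0 x} := isOpen_lt continuous_const hg0c
  obtain ⟨δ, hδpos, hball⟩ := Metric.isOpen_iff.1 hopen p (by
    show g0 p / 2 < g0 p
    exact half_lt_self hppos)
  set c' : ℝ := max cc (p - δ/2) with hc'
  set d' : ℝ := min a₀ (p + δ/2) with hd'
  have hc'd' : c' < d' := by
    rw [hc', hd', max_lt_iff, lt_min_iff, lt_min_iff]
    exact ⟨⟨hcclt, by linarith [hpI.1]⟩, ⟨by linarith [hpI.2], by linarith⟩⟩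
  have hsubcd : Set.Icc c' d' ⊆ Set.Icc cc a₀ :=
    Set.Icc_subset_Icc (le_max_left _ _) (min_le_left _ _)
  have hball' : ∀ s ∈ Set.Icc c' d', g0 p / 2 < g0 s := by
    intro s hs
    have h1 : p - δ/2 ≤ s := le_trans (le_max_right _ _) hs.1
    have h2 : s ≤ p + δ/2 := le_trans hs.2 (min_le_right _ _)
    have : s ∈ Metric.ball p δ := by
      rw [Metric.mem_ball, Real.dist_eq, abs_sub_lt_iff]
      constructor <;> linarith
    exact hball this
  have hDlb : ∀ s ∈ Set.Icc c' d', (g0 p / 2) * (ε/2) ≤ D s := by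
    intro s hs
    refine mul_le_mul (hball' s hs).le (hexc2 s (hsubcd hs)) (by linarith [hεpos]) ?_
    linarith [(hball' s hs), hppos]
  have hiDcd : IntegrableOn D (Set.Icc c' d') volume :=
    hiD.mono_set (fun s hs => ⟨lt_of_lt_of_le hccpos (le_trans (le_max_left _ _) hs.1),
      le_trans hs.2 (le_trans (min_le_left _ _) (by linarith [ha₀I.2]))⟩)
  have hsubS : Set.Icc c' d' ⊆ S := fun s hs =>
    ⟨lt_of_lt_of_le hccpos (le_trans (le_max_left _ _) hs.1),
      le_trans hs.2 (le_trans (min_le_left _ _) (by linarith [ha₀I.2]))⟩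
  calc (0:ℝ) < (g0 p / 2) * (ε/2) * (d' - c') :=
        mul_pos (mul_pos (half_pos hppos) (half_pos hεpos)) (by linarith [hc'd'])
    _ = (g0 p / 2 * (ε/2)) * (volume (Set.Icc c' d')).toReal := by
        rw [Real.volume_Icc, ENNReal.toReal_ofReal (by linarith)]
    _ ≤ ∫ s in Set.Icc c' d', D s := by
        have := setIntegral_ge_of_const_le measurableSet_Icc
          (by rw [Real.volume_Icc]; exact ENNReal.ofReal_ne_top) hDlb hiDcd
        rw [smul_eq_mul, mul_comm] at this; exact this
    _ ≤ ∫ s in S, D s := setIntegral_mono_set hiD hD0 (HasSubset.Subset.eventuallyLE hsubS)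
end

section
/- Fix integers V ≥ 1 and L ≥ 1 and a probability distribution p on (Fin V)^L. For any two weight vectors ω, ω′ : {0, …, L−1} → ℝ with all entries strictly positive, a model μ minimizes Σ_{N_c=0}^{L−1} ω(N_c)·ℒ^{N_c}(μ) over all models if and only if μ minimizes Σ_{N_c=0}^{L−1} ω′(N_c)·ℒ^{N_c}(μ) over all models; in particular the weighted and unweighted objectives have identical minimizer sets. -/
open scoped ENNReal

/-- Negative natural logarithm on `[0,1] ⊆ ℝ≥0∞`, with `-log 0 = ∞`. -/
noncomputable def negLog (p : ℝ≥0∞) : ℝ≥0∞ :=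
  if p = 0 then ⊤ else ENNReal.ofReal (-Real.log p.toReal)

/-- The masked sequence `x[M]`: positions in `M` are masked (`none`), the others reveal
the corresponding token of `x`. -/
def maskSeq {V L : ℕ} (x : Fin L → Fin V) (M : Finset (Fin L)) :
    Fin L → Option (Fin V) :=
  fun i => if i ∈ M then none else some (x i)

/-- The context-level loss
`ℒ^{N_c}(μ) = E_{x∼p} E_{M ∼ U(subsets of size L-N_c)} E_{i ∼ U(M)} [-log μ(x[M], i)(x_i)]`,
valued in `[0,∞]`. -/
noncomputable def ctxLoss {V L : ℕ} (p : PMF (Fin L → Fin V))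
    (μ : (Fin L → Option (Fin V)) → Fin L → PMF (Fin V)) (Nc : ℕ) : ℝ≥0∞ :=
  ∑ x : Fin L → Fin V, p x *
    (((Finset.univ : Finset (Fin L)).powersetCard (L - Nc)).card : ℝ≥0∞)⁻¹ *
      ∑ M ∈ (Finset.univ : Finset (Fin L)).powersetCard (L - Nc),
        (M.card : ℝ≥0∞)⁻¹ * ∑ i ∈ M, negLog (μ (maskSeq x M) i (x i))

lemma negLog_ne_top {p : ℝ≥0∞} (hp : p ≠ 0) : negLog p ≠ ⊤ := by
  simp [negLog, hp]

lemma filter_maskSeq {V L : ℕ} (x : Fin L → Fin V) (M : Finset (Fin L)) :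
    (Finset.univ.filter fun i => maskSeq x M i = none) = M := by
  ext i
  by_cases h : i ∈ M <;> simp [maskSeq, h]

lemma ctxLoss_eq_of_agree {V L : ℕ} (p : PMF (Fin L → Fin V))
    (μ ν : (Fin L → Option (Fin V)) → Fin L → PMF (Fin V)) (m : ℕ)
    (h : ∀ z : Fin L → Option (Fin V),
      (Finset.univ.filter fun i => z i = none).card = L - m → μ z = ν z) :
    ctxLoss p μ m = ctxLoss p ν m := by
  unfold ctxLoss
  refine Finset.sum_congr rfl fun x _ => ?_
  congr 1
  refine Finset.sum_congr rfl fun M hM => ?_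
  have hMc : M.card = L - m := (Finset.mem_powersetCard.mp hM).2
  have := h (maskSeq x M) (by rw [filter_maskSeq]; exact hMc)
  rw [this]

lemma ctxLoss_uniform_ne_top {V L : ℕ} [Nonempty (Fin V)] (p : PMF (Fin L → Fin V))
    {m : ℕ} (hm : m < L) :
    ctxLoss p (fun _ _ => PMF.uniformOfFintype (Fin V)) m ≠ ⊤ := by
  unfold ctxLoss
  rw [← lt_top_iff_ne_top]
  refine ENNReal.sum_lt_top.mpr fun x _ => ?_
  rw [lt_top_iff_ne_top]
  refine ENNReal.mul_ne_top (ENNReal.mul_ne_top (PMF.apply_ne_top p x) ?_) ?_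
  · simp only [ne_eq, ENNReal.inv_eq_top, Nat.cast_eq_zero, Finset.card_eq_zero]
    refine Finset.Nonempty.ne_empty ?_
    exact Finset.powersetCard_nonempty.mpr (by simp [Nat.sub_le])
  · rw [← lt_top_iff_ne_top]
    refine ENNReal.sum_lt_top.mpr fun M hM => ?_
    have hMc : M.card = L - m := (Finset.mem_powersetCard.mp hM).2
    rw [lt_top_iff_ne_top]
    refine ENNReal.mul_ne_top ?_ ?_
    · simp only [ne_eq, ENNReal.inv_eq_top, Nat.cast_eq_zero, hMc]
      omega
    · rw [← lt_top_iff_ne_top]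
      refine ENNReal.sum_lt_top.mpr fun i _ => ?_
      rw [lt_top_iff_ne_top]
      apply negLog_ne_top
      simp [PMF.uniformOfFintype_apply]

set_option maxHeartbeats 1000000 in
lemma key_iff (V L : ℕ) (hV : 1 ≤ V) (hL : 1 ≤ L)
    (p : PMF (Fin L → Fin V)) (ω : ℕ → ℝ) (hω : ∀ n < L, 0 < ω n)
    (μ : (Fin L → Option (Fin V)) → Fin L → PMF (Fin V)) :
    (∀ ν : (Fin L → Option (Fin V)) → Fin L → PMF (Fin V),
        ∑ Nc ∈ Finset.range L, ENNReal.ofReal (ω Nc) * ctxLoss p μ Nc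
          ≤ ∑ Nc ∈ Finset.range L, ENNReal.ofReal (ω Nc) * ctxLoss p ν Nc)
    ↔ (∀ Nc < L, ∀ ν : (Fin L → Option (Fin V)) → Fin L → PMF (Fin V),
        ctxLoss p μ Nc ≤ ctxLoss p ν Nc) := by
  haveI : Nonempty (Fin V) := ⟨⟨0, hV⟩⟩
  constructor
  · intro H Nc hNc ν
    -- finiteness of all μ losses
    have hfin : ∀ m < L, ctxLoss p μ m ≠ ⊤ := by
      intro m hm
      have h1 := H (fun _ _ => PMF.uniformOfFintype (Fin V))
      have h2 : ∑ k ∈ Finset.range L,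
          ENNReal.ofReal (ω k) * ctxLoss p (fun _ _ => PMF.uniformOfFintype (Fin V)) k ≠ ⊤ := by
        rw [← lt_top_iff_ne_top]
        refine ENNReal.sum_lt_top.mpr fun k hk => ?_
        rw [lt_top_iff_ne_top]
        exact ENNReal.mul_ne_top ENNReal.ofReal_ne_top
          (ctxLoss_uniform_ne_top p (Finset.mem_range.mp hk))
      have h3 : ∑ k ∈ Finset.range L, ENNReal.ofReal (ω k) * ctxLoss p μ k ≠ ⊤ :=
        fun h => h2 (top_le_iff.mp (h ▸ h1))
      intro htop
      apply h3
      rw [eq_top_iff]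
      calc (⊤ : ℝ≥0∞) = ENNReal.ofReal (ω m) * ctxLoss p μ m := by
            rw [htop, ENNReal.mul_top]
            simp [ENNReal.ofReal_eq_zero, not_le.mpr (hω m hm)]
        _ ≤ _ := Finset.single_le_sum (f := fun k => ENNReal.ofReal (ω k) * ctxLoss p μ k)
            (fun k _ => zero_le) (Finset.mem_range.mpr hm)
    -- hybrid model
    let ν' : (Fin L → Option (Fin V)) → Fin L → PMF (Fin V) :=
      fun z => if (Finset.univ.filter fun i => z i = none).card = L - Nc then ν z else μ z
    have hν'Nc : ctxLoss p ν' Nc = ctxLoss p ν Nc :=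
      ctxLoss_eq_of_agree p ν' ν Nc (fun z hz => if_pos hz)
    have hν'm : ∀ m < L, m ≠ Nc → ctxLoss p ν' m = ctxLoss p μ m := by
      intro m hm hne
      refine ctxLoss_eq_of_agree p ν' μ m (fun z hz => if_neg ?_)
      rw [hz]; omega
    have hsum := H ν'
    have hrw : ∑ k ∈ Finset.range L, ENNReal.ofReal (ω k) * ctxLoss p ν' k
        = ENNReal.ofReal (ω Nc) * ctxLoss p ν Nc
          + ∑ k ∈ (Finset.range L).erase Nc, ENNReal.ofReal (ω k) * ctxLoss p μ k := by
      rw [← Finset.add_sum_erase _ _ (Finset.mem_range.mpr hNc), hν'Nc]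
      congr 1
      refine Finset.sum_congr rfl fun k hk => ?_
      rw [hν'm k (Finset.mem_range.mp (Finset.mem_of_mem_erase hk)) (Finset.ne_of_mem_erase hk)]
    have hlhs : ∑ k ∈ Finset.range L, ENNReal.ofReal (ω k) * ctxLoss p μ k
        = ENNReal.ofReal (ω Nc) * ctxLoss p μ Nc
          + ∑ k ∈ (Finset.range L).erase Nc, ENNReal.ofReal (ω k) * ctxLoss p μ k :=
      (Finset.add_sum_erase _ _ (Finset.mem_range.mpr hNc)).symm
    rw [hlhs, hrw] at hsum
    have hr : ∑ k ∈ (Finset.range L).erase Nc, ENNReal.ofReal (ω k) * ctxLoss p μ k ≠ ⊤ := by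
      rw [← lt_top_iff_ne_top]
      refine ENNReal.sum_lt_top.mpr fun k hk => ?_
      rw [lt_top_iff_ne_top]
      exact ENNReal.mul_ne_top ENNReal.ofReal_ne_top
        (hfin k (Finset.mem_range.mp (Finset.mem_of_mem_erase hk)))
    have := (ENNReal.add_le_add_iff_right hr).mp hsum
    exact (ENNReal.mul_le_mul_iff_right
      (by simp [ENNReal.ofReal_eq_zero, not_le.mpr (hω Nc hNc)]) ENNReal.ofReal_ne_top).mp this
  · intro H ν
    refine Finset.sum_le_sum fun k hk => ?_
    exact mul_le_mul_right (H k (Finset.mem_range.mp hk) ν) _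

/-- For any two strictly positive weight vectors `ω, ω′` on `{0, …, L-1}`, a model `μ`
minimizes `Σ_{N_c} ω(N_c)·ℒ^{N_c}` over all models iff it minimizes
`Σ_{N_c} ω′(N_c)·ℒ^{N_c}` over all models. -/
theorem weighted_minimizers_eq (V L : ℕ) (hV : 1 ≤ V) (hL : 1 ≤ L)
    (p : PMF (Fin L → Fin V)) (ω ω' : ℕ → ℝ)
    (hω : ∀ n < L, 0 < ω n) (hω' : ∀ n < L, 0 < ω' n)
    (μ : (Fin L → Option (Fin V)) → Fin L → PMF (Fin V)) :
    (∀ ν : (Fin L → Option (Fin V)) → Fin L → PMF (Fin V),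
        ∑ Nc ∈ Finset.range L, ENNReal.ofReal (ω Nc) * ctxLoss p μ Nc
          ≤ ∑ Nc ∈ Finset.range L, ENNReal.ofReal (ω Nc) * ctxLoss p ν Nc)
    ↔ (∀ ν : (Fin L → Option (Fin V)) → Fin L → PMF (Fin V),
        ∑ Nc ∈ Finset.range L, ENNReal.ofReal (ω' Nc) * ctxLoss p μ Nc
          ≤ ∑ Nc ∈ Finset.range L, ENNReal.ofReal (ω' Nc) * ctxLoss p ν Nc) := by
    rw [key_iff V L hV hL p ω hω μ, key_iff V L hV hL p ω' hω' μ]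
end

section
/- Fix integers V ≥ 1 and L ≥ 1 and a probability distribution p on (Fin V)^L. A model μ attains the minimum of Σ_{N_c=0}^{L−1} ℒ^{N_c}(μ) over all models if and only if for every masked sequence z of the form z = x[M] for some x with p(x) > 0 and some nonempty set M ⊆ Fin L, every position i ∈ M, and every token a ∈ Fin V, one has μ(z, i)(a) = P_{X∼p}(X_i = a | X_j = z_j for all unmasked positions j), the data conditional distribution given the revealed tokens of z. -/
open scoped ENNReal

open Classical in
/-- The data conditional distribution of the `i`-th token given the tokens revealed by
the masked sequence `z`: `condP p z i a = P_{X∼p}(X_i = a ∣ X_j = z_j ∀ revealed j)`. -/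
noncomputable def condP {V L : ℕ} (p : PMF (Fin L → Fin V))
    (z : Fin L → Option (Fin V)) (i : Fin L) (a : Fin V) : ℝ≥0∞ :=
  (∑ x ∈ Finset.univ.filter (fun x : Fin L → Fin V =>
      x i = a ∧ ∀ j : Fin L, ∀ v : Fin V, z j = some v → x j = v), p x) /
  (∑ x ∈ Finset.univ.filter (fun x : Fin L → Fin V =>
      ∀ j : Fin L, ∀ v : Fin V, z j = some v → x j = v), p x)

section Gibbs
variable {ι : Type*} [Fintype ι]

lemma log_term (Q R Z : ℝ) (hQ : 0 ≤ Q) (hR : 0 ≤ R) (hZ : 0 < Z)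
    (hQR : 0 < Q → 0 < R) :
    Q * (-Real.log (Q / Z)) ≤ Q * (-Real.log R) + (R * Z - Q) := by
  rcases eq_or_lt_of_le hQ with h0 | hQpos
  · simp [← h0]
    positivity
  · have hRpos := hQR hQpos
    have h := Real.log_le_sub_one_of_pos (show 0 < R * Z / Q by positivity)
    have e1 : Real.log (R * Z / Q) = Real.log R + Real.log Z - Real.log Q := by
      rw [Real.log_div (by positivity) (ne_of_gt hQpos), Real.log_mul (ne_of_gt hRpos) (ne_of_gt hZ)]
    have e2 : Real.log (Q / Z) = Real.log Q - Real.log Z :=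
      Real.log_div (ne_of_gt hQpos) (ne_of_gt hZ)
    have e3 : Q * (R * Z / Q) = R * Z := by field_simp
    nlinarith [mul_le_mul_of_nonneg_left h (le_of_lt hQpos)]

lemma log_term_strict (Q R Z : ℝ) (hQ : 0 < Q) (hR : 0 < R) (hZ : 0 < Z)
    (hne : R * Z ≠ Q) :
    Q * (-Real.log (Q / Z)) < Q * (-Real.log R) + (R * Z - Q) := by
  have ht : R * Z / Q ≠ 1 := by
    intro h1
    exact hne (by field_simp at h1; linarith)
  have h := Real.log_lt_sub_one_of_pos (show 0 < R * Z / Q by positivity) ht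
  have e1 : Real.log (R * Z / Q) = Real.log R + Real.log Z - Real.log Q := by
    rw [Real.log_div (by positivity) (ne_of_gt hQ), Real.log_mul (ne_of_gt hR) (ne_of_gt hZ)]
  have e2 : Real.log (Q / Z) = Real.log Q - Real.log Z :=
    Real.log_div (ne_of_gt hQ) (ne_of_gt hZ)
  have e3 : Q * (R * Z / Q) = R * Z := by field_simp
  nlinarith [mul_lt_mul_of_pos_left h hQ]

lemma CE_eq_ofReal (q r : ι → ℝ≥0∞) (hq : ∀ a, q a ≠ ⊤) (hr0 : ∀ a, q a ≠ 0 → r a ≠ 0)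
    (hr1 : ∀ a, r a ≤ 1) :
    ∑ a, q a * negLog (r a)
      = ENNReal.ofReal (∑ a, (q a).toReal * (-Real.log (r a).toReal)) := by
  rw [ENNReal.ofReal_sum_of_nonneg]
  · refine Finset.sum_congr rfl fun a _ => ?_
    by_cases h0 : q a = 0
    · simp [h0]
    · have hrt : r a ≠ ⊤ := (hr1 a).trans_lt (by norm_num) |>.ne
      rw [negLog, if_neg (hr0 a h0), ← ENNReal.ofReal_toReal (hq a),
        ← ENNReal.ofReal_mul ENNReal.toReal_nonneg, ENNReal.ofReal_toReal (hq a)]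
  · intro a _
    by_cases h0 : q a = 0
    · simp [h0]
    · have hrt : r a ≠ ⊤ := (hr1 a).trans_lt (by norm_num) |>.ne
      have : (r a).toReal ≤ 1 := by
        rw [← ENNReal.toReal_one]
        exact ENNReal.toReal_mono (by norm_num) (hr1 a)
      have hlog : Real.log (r a).toReal ≤ 0 := Real.log_nonpos ENNReal.toReal_nonneg this
      have := ENNReal.toReal_nonneg (a := q a)
      nlinarith

lemma CE_real_nonneg (q r : ι → ℝ≥0∞) (hr1 : ∀ a, r a ≤ 1) :
    0 ≤ ∑ a, (q a).toReal * (-Real.log (r a).toReal) := by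
  refine Finset.sum_nonneg fun a _ => ?_
  have : (r a).toReal ≤ 1 := by
    rw [← ENNReal.toReal_one]
    exact ENNReal.toReal_mono (by norm_num) (hr1 a)
  have hlog : Real.log (r a).toReal ≤ 0 := Real.log_nonpos ENNReal.toReal_nonneg this
  have := ENNReal.toReal_nonneg (a := q a)
  nlinarith
end Gibbs

section Gibbs2
variable {ι : Type*} [Fintype ι]

lemma gibbs_le (q r : ι → ℝ≥0∞) (hq : ∀ a, q a ≠ ⊤) (hr : ∑ a, r a = 1)
    (hZ : (∑ a, q a) ≠ 0) :
    ∑ a, q a * negLog (q a / ∑ b, q b) ≤ ∑ a, q a * negLog (r a) := by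
  set Z := ∑ b, q b with hZdef
  have hZt : Z ≠ ⊤ := by
    simp only [hZdef, ne_eq, ENNReal.sum_eq_top]
    push_neg
    exact fun a _ => hq a
  have hqZ : ∀ a, q a ≤ Z := fun a => Finset.single_le_sum (fun b _ => zero_le) (Finset.mem_univ a)
  have hdiv1 : ∀ a, q a / Z ≤ 1 := fun a => ENNReal.div_le_of_le_mul (by simpa using hqZ a)
  have hr1 : ∀ a, r a ≤ 1 := fun a => hr ▸ Finset.single_le_sum (fun b _ => zero_le) (Finset.mem_univ a)
  by_cases hex : ∃ a, q a ≠ 0 ∧ r a = 0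
  · obtain ⟨a, ha1, ha2⟩ := hex
    have : q a * negLog (r a) = ⊤ := by
      simp [negLog, ha2, ENNReal.mul_top, ha1]
    have htop : ∑ a, q a * negLog (r a) = ⊤ :=
      top_le_iff.mp (this ▸ Finset.single_le_sum (f := fun a => q a * negLog (r a))
        (fun b _ => zero_le) (Finset.mem_univ a))
    rw [htop]; exact le_top
  · push_neg at hex
    have hr0 : ∀ a, q a ≠ 0 → r a ≠ 0 := hex
    have hq0 : ∀ a, q a ≠ 0 → q a / Z ≠ 0 := fun a ha => by
      simp [ENNReal.div_eq_zero_iff, ha, hZt]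
    rw [CE_eq_ofReal q r hq hr0 hr1, CE_eq_ofReal q (fun a => q a / Z) hq hq0 hdiv1]
    apply ENNReal.ofReal_le_ofReal
    set Q : ι → ℝ := fun a => (q a).toReal
    set R : ι → ℝ := fun a => (r a).toReal
    have hZR : Z.toReal = ∑ a, Q a := ENNReal.toReal_sum (fun a _ => hq a)
    have hZRpos : 0 < Z.toReal := ENNReal.toReal_pos hZ hZt
    have hRsum : ∑ a, R a = 1 := by
      rw [← ENNReal.toReal_sum (fun a _ => ((hr1 a).trans_lt (by norm_num)).ne), hr,
        ENNReal.toReal_one]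
    calc ∑ a, Q a * (-Real.log ((q a / Z).toReal))
        ≤ ∑ a, (Q a * (-Real.log (R a)) + (R a * Z.toReal - Q a)) := by
          refine Finset.sum_le_sum fun a _ => ?_
          rw [ENNReal.toReal_div]
          refine log_term _ _ _ ENNReal.toReal_nonneg ENNReal.toReal_nonneg hZRpos fun hQa => ?_
          refine ENNReal.toReal_pos (hr0 a ?_) ((hr1 a).trans_lt (by norm_num)).ne
          intro h0
          simp [Q, h0] at hQa
      _ = ∑ a, Q a * (-Real.log (R a)) := by
          rw [Finset.sum_add_distrib, Finset.sum_sub_distrib, ← Finset.sum_mul, hRsum, ← hZR]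
          ring

lemma gibbs_eq (q r : ι → ℝ≥0∞) (hq : ∀ a, q a ≠ ⊤) (hr : ∑ a, r a = 1)
    (hZ : (∑ a, q a) ≠ 0)
    (h : ∑ a, q a * negLog (r a) ≤ ∑ a, q a * negLog (q a / ∑ b, q b)) :
    ∀ a, r a = q a / ∑ b, q b := by
  set Z := ∑ b, q b with hZdef
  have hZt : Z ≠ ⊤ := by
    simp only [hZdef, ne_eq, ENNReal.sum_eq_top]
    push_neg
    exact fun a _ => hq a
  have hqZ : ∀ a, q a ≤ Z := fun a => Finset.single_le_sum (fun b _ => zero_le) (Finset.mem_univ a)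
  have hdiv1 : ∀ a, q a / Z ≤ 1 := fun a => ENNReal.div_le_of_le_mul (by simpa using hqZ a)
  have hr1 : ∀ a, r a ≤ 1 := fun a => hr ▸ Finset.single_le_sum (fun b _ => zero_le) (Finset.mem_univ a)
  have hq0 : ∀ a, q a ≠ 0 → q a / Z ≠ 0 := fun a ha => by
    simp [ENNReal.div_eq_zero_iff, ha, hZt]
  have hCEq := CE_eq_ofReal q (fun a => q a / Z) hq hq0 hdiv1
  have hCEqt : ∑ a, q a * negLog (q a / Z) ≠ ⊤ := by rw [hCEq]; exact ENNReal.ofReal_ne_top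
  -- no a with q a ≠ 0 and r a = 0
  have hr0 : ∀ a, q a ≠ 0 → r a ≠ 0 := by
    intro a ha1 ha2
    have : q a * negLog (r a) = ⊤ := by
      simp [negLog, ha2, ENNReal.mul_top, ha1]
    have htop : ∑ a, q a * negLog (r a) = ⊤ :=
      top_le_iff.mp (this ▸ Finset.single_le_sum (f := fun a => q a * negLog (r a))
        (fun b _ => zero_le) (Finset.mem_univ a))
    rw [htop] at h
    exact hCEqt (top_le_iff.mp h)
  set Q : ι → ℝ := fun a => (q a).toReal
  set R : ι → ℝ := fun a => (r a).toReal
  have hZR : Z.toReal = ∑ a, Q a := ENNReal.toReal_sum (fun a _ => hq a)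
  have hZRpos : 0 < Z.toReal := ENNReal.toReal_pos hZ hZt
  have hrt : ∀ a, r a ≠ ⊤ := fun a => ((hr1 a).trans_lt (by norm_num)).ne
  have hRsum : ∑ a, R a = 1 := by
    rw [← ENNReal.toReal_sum (fun a _ => hrt a), hr, ENNReal.toReal_one]
  -- on support
  have hsupp : ∀ a, q a ≠ 0 → r a = q a / Z := by
    intro a ha
    by_contra hne
    rw [CE_eq_ofReal q r hq hr0 hr1, hCEq] at h
    have hreal : ∑ b, Q b * (-Real.log (R b)) ≤ ∑ b, Q b * (-Real.log ((q b / Z).toReal)) :=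
      (ENNReal.ofReal_le_ofReal_iff (CE_real_nonneg q _ hdiv1)).mp h
    have hstrict : ∑ b, Q b * (-Real.log ((q b / Z).toReal))
        < ∑ b, (Q b * (-Real.log (R b)) + (R b * Z.toReal - Q b)) := by
      refine Finset.sum_lt_sum (fun b _ => ?_) ⟨a, Finset.mem_univ a, ?_⟩
      · rw [ENNReal.toReal_div]
        refine log_term _ _ _ ENNReal.toReal_nonneg ENNReal.toReal_nonneg hZRpos fun hQb => ?_
        refine ENNReal.toReal_pos (hr0 b ?_) (hrt b)
        intro h0; simp [Q, h0] at hQb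
      · rw [ENNReal.toReal_div]
        have hQa : 0 < Q a := ENNReal.toReal_pos ha (hq a)
        have hRa : 0 < R a := ENNReal.toReal_pos (hr0 a ha) (hrt a)
        refine log_term_strict _ _ _ hQa hRa hZRpos ?_
        intro hRZ
        apply hne
        have hdivt : q a / Z ≠ ⊤ := by
          simp [ENNReal.div_eq_top, ha, hZ, hq a, hZt]
        rw [← ENNReal.toReal_eq_toReal_iff' (hrt a) hdivt, ENNReal.toReal_div,
          eq_div_iff (ne_of_gt hZRpos)]
        exact hRZ
    have heq : ∑ b, (Q b * (-Real.log (R b)) + (R b * Z.toReal - Q b))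
        = ∑ b, Q b * (-Real.log (R b)) := by
      rw [Finset.sum_add_distrib, Finset.sum_sub_distrib, ← Finset.sum_mul, hRsum, ← hZR]
      ring
    rw [heq] at hstrict
    exact absurd hreal (not_le.mpr hstrict)
  -- off support
  intro a
  by_cases ha : q a = 0
  · have h1 : ∑ b ∈ Finset.univ.filter (fun b => q b ≠ 0), r b = 1 := by
      classical
      have : ∀ b ∈ Finset.univ.filter (fun b => q b ≠ 0), r b = q b / Z := fun b hb =>
        hsupp b (Finset.mem_filter.mp hb).2
      rw [Finset.sum_congr rfl this]
      have : ∑ b ∈ Finset.univ.filter (fun b => q b ≠ 0), q b / Z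
          = (∑ b ∈ Finset.univ.filter (fun b => q b ≠ 0), q b) / Z := by
        simp [div_eq_mul_inv, Finset.sum_mul]
      rw [this, Finset.sum_filter_ne_zero, ← hZdef, ENNReal.div_self hZ hZt]
    have h2 : ∑ b ∈ Finset.univ.filter (fun b => ¬ q b ≠ 0), r b = 0 := by
      classical
      have hsplit := Finset.sum_filter_add_sum_filter_not Finset.univ (fun b => q b ≠ 0) r
      rw [h1, hr] at hsplit
      exact (ENNReal.add_right_inj (a := (1:ℝ≥0∞)) (by norm_num)).mp
        (by rw [add_zero]; exact hsplit)
    have : r a = 0 := by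
      have := (Finset.sum_eq_zero_iff.mp h2) a (by simp [ha])
      exact this
    rw [this, ha, ENNReal.zero_div]
  · exact hsupp a ha

end Gibbs2
section Main

variable {V L : ℕ}

open Classical in
/-- Joint weight of context `z` (with mask `M`) and token `a` at position `i`. -/
noncomputable def qw (p : PMF (Fin L → Fin V)) (M : Finset (Fin L)) (i : Fin L)
    (z : Fin L → Option (Fin V)) (a : Fin V) : ℝ≥0∞ :=
  ∑ x ∈ Finset.univ.filter (fun x : Fin L → Fin V => maskSeq x M = z ∧ x i = a), p x

lemma pmf_sum_one {α : Type*} [Fintype α] (r : PMF α) : ∑ a, r a = 1 := by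
  rw [← tsum_fintype (L := SummationFilter.unconditional _)]; exact r.tsum_coe

lemma pmf_filter_sum_le_one {α : Type*} [Fintype α] (p : PMF α) (s : Finset α) :
    ∑ x ∈ s, p x ≤ 1 :=
  le_trans (ENNReal.sum_le_tsum s) (le_of_eq p.tsum_coe)

lemma qw_ne_top (p : PMF (Fin L → Fin V)) (M : Finset (Fin L)) (i : Fin L)
    (z : Fin L → Option (Fin V)) (a : Fin V) : qw p M i z a ≠ ⊤ :=
  ((pmf_filter_sum_le_one p _).trans_lt (by norm_num)).ne

/-- L1: fiber decomposition of the per-(M,i) loss. -/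
lemma sum_negLog_eq (p : PMF (Fin L → Fin V))
    (ν : (Fin L → Option (Fin V)) → Fin L → PMF (Fin V)) (M : Finset (Fin L)) (i : Fin L) :
    ∑ x : Fin L → Fin V, p x * negLog (ν (maskSeq x M) i (x i))
      = ∑ z : Fin L → Option (Fin V), ∑ a : Fin V, qw p M i z a * negLog (ν z i a) := by
  classical
  have key := Finset.sum_fiberwise (Finset.univ : Finset (Fin L → Fin V))
    (fun x => ((maskSeq x M, x i) : (Fin L → Option (Fin V)) × Fin V))
    (fun x => p x * negLog (ν (maskSeq x M) i (x i)))
  rw [← key, Fintype.sum_prod_type]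
  refine Finset.sum_congr rfl fun z _ => Finset.sum_congr rfl fun a _ => ?_
  rw [qw, Finset.sum_mul]
  refine Finset.sum_congr ?_ fun x hx => ?_
  · apply Finset.filter_congr
    intro x _
    simp [Prod.ext_iff]
  · simp only [Finset.mem_filter] at hx
    rw [hx.2.1, hx.2.2]

/-- compatibility with `maskSeq x₀ M` is the same as having the same mask image. -/
lemma compat_iff (x₀ x : Fin L → Fin V) (M : Finset (Fin L)) :
    (∀ j : Fin L, ∀ v : Fin V, maskSeq x₀ M j = some v → x j = v)
      ↔ maskSeq x M = maskSeq x₀ M := by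
  constructor
  · intro h
    funext j
    by_cases hj : j ∈ M
    · simp [maskSeq, hj]
    · simp only [maskSeq, if_neg hj]
      exact congrArg _ (h j (x₀ j) (by simp [maskSeq, hj]))
  · intro h j v hv
    by_cases hj : j ∈ M
    · simp [maskSeq, hj] at hv
    · have := congrFun h j
      simp only [maskSeq, if_neg hj] at this hv
      rw [hv] at this
      exact Option.some_injective _ this

/-- L2 (denominator): the total mass of a context. -/
lemma sum_qw_eq (p : PMF (Fin L → Fin V)) (M : Finset (Fin L)) (i : Fin L)
    (z : Fin L → Option (Fin V)) :
    ∑ a : Fin V, qw p M i z a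
      = ∑ x ∈ Finset.univ.filter (fun x : Fin L → Fin V => maskSeq x M = z), p x := by
  classical
  have key := Finset.sum_fiberwise_of_maps_to (t := (Finset.univ : Finset (Fin V)))
    (g := fun x : Fin L → Fin V => x i)
    (s := Finset.univ.filter (fun x : Fin L → Fin V => maskSeq x M = z))
    (fun _ _ => Finset.mem_univ _) (fun x => p x)
  rw [← key]
  refine Finset.sum_congr rfl fun a _ => ?_
  rw [qw, Finset.filter_filter]

/-- L2: condP as a ratio of the qw weights. -/
lemma condP_eq (p : PMF (Fin L → Fin V)) (M : Finset (Fin L)) (i : Fin L)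
    (x₀ : Fin L → Fin V) (a : Fin V) :
    condP p (maskSeq x₀ M) i a
      = qw p M i (maskSeq x₀ M) a / ∑ b : Fin V, qw p M i (maskSeq x₀ M) b := by
  classical
  rw [condP, sum_qw_eq, qw]
  congr 1
  · apply Finset.sum_congr _ fun _ _ => rfl
    apply Finset.filter_congr
    intro x _
    rw [compat_iff x₀ x M, and_comm]
  · apply Finset.sum_congr _ fun _ _ => rfl
    apply Finset.filter_congr
    intro x _
    simp only [compat_iff x₀ x M]

end Main
section Main2

variable {V L : ℕ}

open Classical in
lemma sum_condP_num (p : PMF (Fin L → Fin V)) (z : Fin L → Option (Fin V)) (i : Fin L) :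
    ∑ a : Fin V, (∑ x ∈ Finset.univ.filter (fun x : Fin L → Fin V =>
        x i = a ∧ ∀ j : Fin L, ∀ v : Fin V, z j = some v → x j = v), p x)
      = ∑ x ∈ Finset.univ.filter (fun x : Fin L → Fin V =>
          ∀ j : Fin L, ∀ v : Fin V, z j = some v → x j = v), p x := by
  classical
  have key := Finset.sum_fiberwise_of_maps_to (t := (Finset.univ : Finset (Fin V)))
    (g := fun x : Fin L → Fin V => x i)
    (s := Finset.univ.filter (fun x : Fin L → Fin V =>
      ∀ j : Fin L, ∀ v : Fin V, z j = some v → x j = v))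
    (fun _ _ => Finset.mem_univ _) (fun x => p x)
  rw [← key]
  refine Finset.sum_congr rfl fun a _ => ?_
  rw [Finset.filter_filter]
  apply Finset.sum_congr _ fun _ _ => rfl
  apply Finset.filter_congr
  intro x _
  rw [and_comm]

open Classical in
lemma condP_sum_one (p : PMF (Fin L → Fin V)) (z : Fin L → Option (Fin V)) (i : Fin L)
    (hD : (∑ x ∈ Finset.univ.filter (fun x : Fin L → Fin V =>
        ∀ j : Fin L, ∀ v : Fin V, z j = some v → x j = v), p x) ≠ 0) :
    ∑ a : Fin V, condP p z i a = 1 := by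
  classical
  have hDt : (∑ x ∈ Finset.univ.filter (fun x : Fin L → Fin V =>
      ∀ j : Fin L, ∀ v : Fin V, z j = some v → x j = v), p x) ≠ ⊤ :=
    ((pmf_filter_sum_le_one p _).trans_lt (by norm_num)).ne
  simp only [condP, div_eq_mul_inv, ← Finset.sum_mul]
  rw [sum_condP_num, ← div_eq_mul_inv, ENNReal.div_self hD hDt]

open Classical in
/-- The conditional model (falling back to `μ` on unsupported contexts). -/
noncomputable def nuStar (p : PMF (Fin L → Fin V))
    (μ : (Fin L → Option (Fin V)) → Fin L → PMF (Fin V)) :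
    (Fin L → Option (Fin V)) → Fin L → PMF (Fin V) := fun z i =>
  if h : (∑ x ∈ Finset.univ.filter (fun x : Fin L → Fin V =>
      ∀ j : Fin L, ∀ v : Fin V, z j = some v → x j = v), p x) = 0
  then μ z i
  else ⟨fun a => condP p z i a, (condP_sum_one p z i h) ▸ hasSum_fintype _⟩

open Classical in
lemma nuStar_apply (p : PMF (Fin L → Fin V))
    (μ : (Fin L → Option (Fin V)) → Fin L → PMF (Fin V))
    (z : Fin L → Option (Fin V)) (i : Fin L) (a : Fin V)
    (h : (∑ x ∈ Finset.univ.filter (fun x : Fin L → Fin V =>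
      ∀ j : Fin L, ∀ v : Fin V, z j = some v → x j = v), p x) ≠ 0) :
    nuStar p μ z i a = condP p z i a := by
  have e : nuStar p μ z i = ⟨fun a => condP p z i a, (condP_sum_one p z i h) ▸ hasSum_fintype _⟩ :=
    dif_neg h
  rw [e]
  rfl

open Classical in
lemma mask_supported (p : PMF (Fin L → Fin V)) (x : Fin L → Fin V) (hx : p x ≠ 0)
    (M : Finset (Fin L)) :
    (∑ y ∈ Finset.univ.filter (fun y : Fin L → Fin V =>
      ∀ j : Fin L, ∀ v : Fin V, maskSeq x M j = some v → y j = v), p y) ≠ 0 := by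
  intro h0
  have hxmem : x ∈ Finset.univ.filter (fun y : Fin L → Fin V =>
      ∀ j : Fin L, ∀ v : Fin V, maskSeq x M j = some v → y j = v) := by
    simp only [Finset.mem_filter, Finset.mem_univ, true_and]
    exact (compat_iff x x M).mpr rfl
  exact hx ((Finset.sum_eq_zero_iff.mp h0) x hxmem)

lemma nuStar_matches (p : PMF (Fin L → Fin V))
    (μ : (Fin L → Option (Fin V)) → Fin L → PMF (Fin V)) :
    ∀ x : Fin L → Fin V, p x ≠ 0 → ∀ M : Finset (Fin L), M.Nonempty →
      ∀ i ∈ M, ∀ a : Fin V, nuStar p μ (maskSeq x M) i a = condP p (maskSeq x M) i a := by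
  intro x hx M _ i _ a
  exact nuStar_apply p μ _ i a (mask_supported p x hx M)

lemma supported_of_sum_qw_ne_zero (p : PMF (Fin L → Fin V)) (M : Finset (Fin L)) (i : Fin L)
    (z : Fin L → Option (Fin V)) (hZ : (∑ b : Fin V, qw p M i z b) ≠ 0) :
    ∃ x₀ : Fin L → Fin V, p x₀ ≠ 0 ∧ maskSeq x₀ M = z := by
  classical
  rw [sum_qw_eq] at hZ
  by_contra hs
  push_neg at hs
  apply hZ
  refine Finset.sum_eq_zero fun x hxm => ?_
  simp only [Finset.mem_filter, Finset.mem_univ, true_and] at hxm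
  by_contra hp
  exact hs x hp hxm

lemma sum_qw_ne_top (p : PMF (Fin L → Fin V)) (M : Finset (Fin L)) (i : Fin L)
    (z : Fin L → Option (Fin V)) : (∑ b : Fin V, qw p M i z b) ≠ ⊤ := by
  rw [sum_qw_eq]
  exact ((pmf_filter_sum_le_one p _).trans_lt (by norm_num)).ne

/-- Core per-context comparison: a matching model beats any other prediction. -/
lemma term_le (p : PMF (Fin L → Fin V))
    (μ : (Fin L → Option (Fin V)) → Fin L → PMF (Fin V))
    (hmatch : ∀ x : Fin L → Fin V, p x ≠ 0 → ∀ M : Finset (Fin L), M.Nonempty →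
      ∀ i ∈ M, ∀ a : Fin V, μ (maskSeq x M) i a = condP p (maskSeq x M) i a)
    (M : Finset (Fin L)) (i : Fin L) (hi : i ∈ M) (z : Fin L → Option (Fin V))
    (r : PMF (Fin V)) :
    ∑ a : Fin V, qw p M i z a * negLog (μ z i a)
      ≤ ∑ a : Fin V, qw p M i z a * negLog (r a) := by
  by_cases hZ : (∑ b : Fin V, qw p M i z b) = 0
  · have h0 : ∀ a : Fin V, qw p M i z a = 0 := fun a =>
      (Finset.sum_eq_zero_iff.mp hZ) a (Finset.mem_univ a)
    simp [h0]
  · obtain ⟨x₀, hx₀, hz⟩ := supported_of_sum_qw_ne_zero p M i z hZ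
    subst hz
    have hrew : ∀ a, μ (maskSeq x₀ M) i a
        = qw p M i (maskSeq x₀ M) a / ∑ b : Fin V, qw p M i (maskSeq x₀ M) b := fun a => by
      rw [hmatch x₀ hx₀ M ⟨i, hi⟩ i hi a, condP_eq]
    calc ∑ a : Fin V, qw p M i (maskSeq x₀ M) a * negLog (μ (maskSeq x₀ M) i a)
        = ∑ a : Fin V, qw p M i (maskSeq x₀ M) a *
            negLog (qw p M i (maskSeq x₀ M) a / ∑ b : Fin V, qw p M i (maskSeq x₀ M) b) := by
          exact Finset.sum_congr rfl fun a _ => by rw [hrew a]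
      _ ≤ _ := gibbs_le _ _ (fun a => qw_ne_top p M i _ a) (pmf_sum_one r) hZ

/-- Rearranged form of the context-level loss. -/
lemma ctxLoss_eq (p : PMF (Fin L → Fin V))
    (ν : (Fin L → Option (Fin V)) → Fin L → PMF (Fin V)) (Nc : ℕ) :
    ctxLoss p ν Nc
      = (((Finset.univ : Finset (Fin L)).powersetCard (L - Nc)).card : ℝ≥0∞)⁻¹ *
        ∑ M ∈ (Finset.univ : Finset (Fin L)).powersetCard (L - Nc),
          (M.card : ℝ≥0∞)⁻¹ * ∑ i ∈ M,
            ∑ z : Fin L → Option (Fin V), ∑ a : Fin V, qw p M i z a * negLog (ν z i a) := by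
  classical
  unfold ctxLoss
  simp only [Finset.mul_sum]
  rw [Finset.sum_comm]
  refine Finset.sum_congr rfl fun M hM => ?_
  rw [Finset.sum_comm]
  refine Finset.sum_congr rfl fun i hi => ?_
  trans ((((Finset.univ : Finset (Fin L)).powersetCard (L - Nc)).card : ℝ≥0∞)⁻¹ *
      ((M.card : ℝ≥0∞)⁻¹ * ∑ x : Fin L → Fin V, p x * negLog (ν (maskSeq x M) i (x i))))
  · rw [Finset.mul_sum, Finset.mul_sum]
    exact Finset.sum_congr rfl fun x _ => by ring
  · rw [sum_negLog_eq p ν M i]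
    simp only [Finset.mul_sum]

end Main2
section Main3

variable {V L : ℕ}

lemma ctxLoss_le_of_matches (p : PMF (Fin L → Fin V))
    (μ : (Fin L → Option (Fin V)) → Fin L → PMF (Fin V))
    (hmatch : ∀ x : Fin L → Fin V, p x ≠ 0 → ∀ M : Finset (Fin L), M.Nonempty →
      ∀ i ∈ M, ∀ a : Fin V, μ (maskSeq x M) i a = condP p (maskSeq x M) i a)
    (ν : (Fin L → Option (Fin V)) → Fin L → PMF (Fin V)) (Nc : ℕ) :
    ctxLoss p μ Nc ≤ ctxLoss p ν Nc := by
  rw [ctxLoss_eq, ctxLoss_eq]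
  refine mul_le_mul_right (Finset.sum_le_sum fun M _ => mul_le_mul_right
    (Finset.sum_le_sum fun i hi => Finset.sum_le_sum fun z _ => ?_) _) _
  exact term_le p μ hmatch M i hi z (ν z i)

open Classical in
lemma term_star_fin (p : PMF (Fin L → Fin V))
    (μ : (Fin L → Option (Fin V)) → Fin L → PMF (Fin V))
    (M : Finset (Fin L)) (i : Fin L) (z : Fin L → Option (Fin V)) :
    ∑ a : Fin V, qw p M i z a * negLog (nuStar p μ z i a) ≠ ⊤ := by
  refine (ENNReal.sum_lt_top.mpr fun a _ => ?_).ne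
  by_cases hqa : qw p M i z a = 0
  · simp [hqa]
  · have hZ : (∑ b : Fin V, qw p M i z b) ≠ 0 := by
      intro h0
      exact hqa ((Finset.sum_eq_zero_iff.mp h0) a (Finset.mem_univ a))
    obtain ⟨x₀, hx₀, hz⟩ := supported_of_sum_qw_ne_zero p M i z hZ
    subst hz
    have happ := nuStar_apply p μ _ i a (mask_supported p x₀ hx₀ M)
    rw [happ, condP_eq]
    have hne0 : qw p M i (maskSeq x₀ M) a / (∑ b : Fin V, qw p M i (maskSeq x₀ M) b) ≠ 0 := by
      simp [ENNReal.div_eq_zero_iff, hqa, sum_qw_ne_top p M i (maskSeq x₀ M)]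
    refine ENNReal.mul_lt_top ?_ ?_
    · exact (qw_ne_top p M i _ a).lt_top
    · rw [negLog, if_neg hne0]
      exact ENNReal.ofReal_lt_top

lemma ctxLoss_star_fin (p : PMF (Fin L → Fin V))
    (μ : (Fin L → Option (Fin V)) → Fin L → PMF (Fin V)) (Nc : ℕ) (hNc : Nc < L) :
    ctxLoss p (nuStar p μ) Nc ≠ ⊤ := by
  classical
  rw [ctxLoss_eq]
  have hchoose : (((Finset.univ : Finset (Fin L)).powersetCard (L - Nc)).card : ℝ≥0∞)⁻¹ ≠ ⊤ := by
    rw [Finset.card_powersetCard, Finset.card_univ, Fintype.card_fin]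
    simp only [ne_eq, ENNReal.inv_eq_top, Nat.cast_eq_zero]
    exact (Nat.choose_pos (Nat.sub_le L Nc)).ne'
  refine (ENNReal.mul_lt_top hchoose.lt_top ?_).ne
  refine ENNReal.sum_lt_top.mpr fun M hM => ?_
  have hMcard : M.card = L - Nc := (Finset.mem_powersetCard_univ.mp hM)
  have hMc : (M.card : ℝ≥0∞)⁻¹ ≠ ⊤ := by
    simp only [ne_eq, ENNReal.inv_eq_top, Nat.cast_eq_zero]
    omega
  refine ENNReal.mul_lt_top hMc.lt_top ?_
  refine ENNReal.sum_lt_top.mpr fun i _ => ?_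
  refine ENNReal.sum_lt_top.mpr fun z _ => ?_
  exact (term_star_fin p μ M i z).lt_top

lemma peel {ι : Type*} {s : Finset ι} {f g : ι → ℝ≥0∞}
    (hle : ∀ j ∈ s, f j ≤ g j) (hsl : ∑ j ∈ s, g j ≤ ∑ j ∈ s, f j)
    (hfin : ∑ j ∈ s, f j ≠ ⊤) : ∀ j ∈ s, g j ≤ f j := by
  classical
  intro j hj
  by_contra hgt
  push_neg at hgt
  have hferase : ∑ k ∈ s.erase j, f k ≠ ⊤ := by
    refine ne_top_of_le_ne_top hfin (Finset.sum_le_sum_of_subset (Finset.erase_subset j s))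
  have h1 : ∑ k ∈ s, f k < ∑ k ∈ s, g k := by
    rw [← Finset.sum_erase_add s f hj, ← Finset.sum_erase_add s g hj]
    exact ENNReal.add_lt_add_of_le_of_lt hferase
      (Finset.sum_le_sum fun k hk => hle k (Finset.mem_of_mem_erase hk)) hgt
  exact absurd hsl (not_le.mpr h1)

end Main3

/-- A model `μ` attains the minimum of `Σ_{N_c=0}^{L-1} ℒ^{N_c}` over all models iff its
predictions equal the data conditional distributions on every data-supported masked
context: for all `x` with `p(x) > 0`, nonempty `M`, `i ∈ M` and token `a`,
`μ(x[M], i)(a) = P(X_i = a ∣ revealed tokens of x[M])`. -/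
theorem min_iff_matches_conditionals (V L : ℕ) (hV : 1 ≤ V) (hL : 1 ≤ L)
    (p : PMF (Fin L → Fin V))
    (μ : (Fin L → Option (Fin V)) → Fin L → PMF (Fin V)) :
    (∀ ν : (Fin L → Option (Fin V)) → Fin L → PMF (Fin V),
        ∑ Nc ∈ Finset.range L, ctxLoss p μ Nc ≤ ∑ Nc ∈ Finset.range L, ctxLoss p ν Nc)
    ↔ (∀ x : Fin L → Fin V, p x ≠ 0 → ∀ M : Finset (Fin L), M.Nonempty →
        ∀ i ∈ M, ∀ a : Fin V, μ (maskSeq x M) i a = condP p (maskSeq x M) i a) := by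
  classical
  constructor
  · intro hmin x hx M hM i hi a
    set ν := nuStar p μ with hν
    have hmatchstar := nuStar_matches p μ
    -- level 0 peel: over Nc
    have h0 : ∀ Nc ∈ Finset.range L, ctxLoss p μ Nc ≤ ctxLoss p ν Nc := by
      refine peel (fun Nc _ => ctxLoss_le_of_matches p ν hmatchstar μ Nc) (hmin ν) ?_
      refine (ENNReal.sum_lt_top.mpr fun Nc hNc => ?_).ne
      exact (ctxLoss_star_fin p μ Nc (Finset.mem_range.mp hNc)).lt_top
    set Nc := L - M.card with hNcdef
    have hcard_le : M.card ≤ L := by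
      simpa using Finset.card_le_univ M
    have hcardpos : 0 < M.card := Finset.card_pos.mpr hM
    have hNcmem : Nc ∈ Finset.range L := Finset.mem_range.mpr (by omega)
    have hMem : M ∈ (Finset.univ : Finset (Fin L)).powersetCard (L - Nc) :=
      Finset.mem_powersetCard_univ.mpr (by omega)
    have h0' := h0 Nc hNcmem
    rw [ctxLoss_eq, ctxLoss_eq] at h0'
    -- cancel the binomial constant
    have hcne : (((Finset.univ : Finset (Fin L)).powersetCard (L - Nc)).card : ℝ≥0∞)⁻¹ ≠ 0 := by
      simp
    have hcnt : (((Finset.univ : Finset (Fin L)).powersetCard (L - Nc)).card : ℝ≥0∞)⁻¹ ≠ ⊤ := by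
      rw [Finset.card_powersetCard, Finset.card_univ, Fintype.card_fin]
      simp only [ne_eq, ENNReal.inv_eq_top, Nat.cast_eq_zero]
      exact (Nat.choose_pos (Nat.sub_le L Nc)).ne'
    have h1sum := (ENNReal.mul_le_mul_iff_right hcne hcnt).mp h0'
    -- level 1 peel: over M
    have h1 : ∀ M' ∈ (Finset.univ : Finset (Fin L)).powersetCard (L - Nc),
        (M'.card : ℝ≥0∞)⁻¹ * ∑ i' ∈ M', ∑ z : Fin L → Option (Fin V),
            ∑ b : Fin V, qw p M' i' z b * negLog (μ z i' b)
          ≤ (M'.card : ℝ≥0∞)⁻¹ * ∑ i' ∈ M', ∑ z : Fin L → Option (Fin V),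
            ∑ b : Fin V, qw p M' i' z b * negLog (ν z i' b) := by
      refine peel ?_ h1sum ?_
      · intro M' _
        exact mul_le_mul_right (Finset.sum_le_sum fun i' hi' => Finset.sum_le_sum fun z _ =>
          term_le p ν hmatchstar M' i' hi' z (μ z i')) _
      · refine (ENNReal.sum_lt_top.mpr fun M' hM' => ?_).ne
        have hMc' : M'.card = L - Nc := Finset.mem_powersetCard_univ.mp hM'
        have hinv : ((M'.card : ℝ≥0∞))⁻¹ ≠ ⊤ := by
          simp only [ne_eq, ENNReal.inv_eq_top, Nat.cast_eq_zero]
          omega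
        refine ENNReal.mul_lt_top hinv.lt_top ?_
        refine ENNReal.sum_lt_top.mpr fun i' _ => ENNReal.sum_lt_top.mpr fun z _ => ?_
        exact (term_star_fin p μ M' i' z).lt_top
    have h1M := h1 M hMem
    have hcmne : ((M.card : ℝ≥0∞))⁻¹ ≠ 0 := by simp
    have hcmnt : ((M.card : ℝ≥0∞))⁻¹ ≠ ⊤ := by
      simp only [ne_eq, ENNReal.inv_eq_top, Nat.cast_eq_zero]
      omega
    have h2sum := (ENNReal.mul_le_mul_iff_right hcmne hcmnt).mp h1M
    -- level 2 peel: over i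
    have h2 : ∀ i' ∈ M,
        ∑ z : Fin L → Option (Fin V), ∑ b : Fin V, qw p M i' z b * negLog (μ z i' b)
          ≤ ∑ z : Fin L → Option (Fin V), ∑ b : Fin V, qw p M i' z b * negLog (ν z i' b) := by
      refine peel ?_ h2sum ?_
      · intro i' hi'
        exact Finset.sum_le_sum fun z _ => term_le p ν hmatchstar M i' hi' z (μ z i')
      · refine (ENNReal.sum_lt_top.mpr fun i' _ => ENNReal.sum_lt_top.mpr fun z _ => ?_).ne
        exact (term_star_fin p μ M i' z).lt_top
    have h3sum := h2 i hi
    -- level 3 peel: over z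
    have h3 : ∀ z ∈ (Finset.univ : Finset (Fin L → Option (Fin V))),
        ∑ b : Fin V, qw p M i z b * negLog (μ z i b)
          ≤ ∑ b : Fin V, qw p M i z b * negLog (ν z i b) := by
      refine peel ?_ h3sum ?_
      · intro z _
        exact term_le p ν hmatchstar M i hi z (μ z i)
      · refine (ENNReal.sum_lt_top.mpr fun z _ => ?_).ne
        exact (term_star_fin p μ M i z).lt_top
    have hkey := h3 (maskSeq x M) (Finset.mem_univ _)
    -- identify ν with the conditional ratio on this supported context
    have hZ : (∑ b : Fin V, qw p M i (maskSeq x M) b) ≠ 0 := by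
      rw [sum_qw_eq]
      intro h0z
      refine hx ((Finset.sum_eq_zero_iff.mp h0z) x ?_)
      simp
    have hνrw : ∀ b : Fin V, ν (maskSeq x M) i b
        = qw p M i (maskSeq x M) b / ∑ c : Fin V, qw p M i (maskSeq x M) c := fun b => by
      rw [hmatchstar x hx M hM i hi b, condP_eq]
    simp only [hνrw] at hkey
    have := gibbs_eq (fun b => qw p M i (maskSeq x M) b) (fun b => μ (maskSeq x M) i b)
      (fun b => qw_ne_top p M i _ b) (pmf_sum_one (μ (maskSeq x M) i)) hZ hkey
    rw [condP_eq]
    exact this a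
  · intro hmatch ν
    exact Finset.sum_le_sum fun Nc _ => ctxLoss_le_of_matches p μ hmatch ν Nc
end

section
/- Fix integers V ≥ 1 and L ≥ 1 and a probability distribution p on (Fin V)^L. Then the infimum over all models μ of Σ_{N_c=0}^{L−1} ℒ^{N_c}(μ) equals the Shannon entropy H(p) = −Σ_x p(x) log p(x) of the data distribution, and this infimum is attained (by the model whose predictions equal the data conditional distributions on all data-supported masked contexts). -/
open scoped ENNReal

namespace MDLM

open Finset

/-! ### negLog lemmas -/

lemma negLog_one : negLog 1 = 0 := by simp [negLog]

lemma negLog_ne_top {a : ℝ≥0∞} (ha : a ≠ 0) : negLog a ≠ ⊤ := by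
  simp [negLog, ha]

lemma negLog_mul {a b : ℝ≥0∞} (ha : a ≤ 1) (hb : b ≤ 1) :
    negLog (a * b) = negLog a + negLog b := by
  rcases eq_or_ne a 0 with rfl | ha0
  · simp [negLog]
  rcases eq_or_ne b 0 with rfl | hb0
  · simp [negLog, ha0]
  have hat : a ≠ ⊤ := (lt_of_le_of_lt ha ENNReal.one_lt_top).ne
  have hbt : b ≠ ⊤ := (lt_of_le_of_lt hb ENNReal.one_lt_top).ne
  have hab : a * b ≠ 0 := mul_ne_zero ha0 hb0
  have hat' : a.toReal ≠ 0 := ENNReal.toReal_ne_zero.mpr ⟨ha0, hat⟩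
  have hbt' : b.toReal ≠ 0 := ENNReal.toReal_ne_zero.mpr ⟨hb0, hbt⟩
  have hna : 0 ≤ -Real.log a.toReal := by
    rw [neg_nonneg]
    exact Real.log_nonpos ENNReal.toReal_nonneg
      (by simpa using ENNReal.toReal_mono ENNReal.one_ne_top ha)
  have hnb : 0 ≤ -Real.log b.toReal := by
    rw [neg_nonneg]
    exact Real.log_nonpos ENNReal.toReal_nonneg
      (by simpa using ENNReal.toReal_mono ENNReal.one_ne_top hb)
  rw [negLog, negLog, negLog, if_neg hab, if_neg ha0, if_neg hb0,
    ENNReal.toReal_mul, Real.log_mul hat' hbt', neg_add,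
    ENNReal.ofReal_add hna hnb]

/-! ### probabilities of masked contexts -/

variable {V L : ℕ}

/-- `y` is consistent with the masked sequence `z`. -/
def consis (y : Fin L → Fin V) (z : Fin L → Option (Fin V)) : Prop :=
  ∀ i, z i = none ∨ z i = some (y i)

instance (y : Fin L → Fin V) (z : Fin L → Option (Fin V)) : Decidable (consis y z) :=
  Fintype.decidableForallFintype

/-- Probability of observing the masked context `z`. -/
noncomputable def Pm (p : PMF (Fin L → Fin V)) (z : Fin L → Option (Fin V)) : ℝ≥0∞ :=
  ∑ y : Fin L → Fin V, if consis y z then p y else 0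

/-- Joint probability of `z` together with value `v` at position `i`. -/
noncomputable def Pj (p : PMF (Fin L → Fin V)) (z : Fin L → Option (Fin V))
    (i : Fin L) (v : Fin V) : ℝ≥0∞ :=
  ∑ y : Fin L → Fin V, if consis y z ∧ y i = v then p y else 0

lemma sum_pmf_eq_one (p : PMF (Fin L → Fin V)) : ∑ y : Fin L → Fin V, p y = 1 := by
  rw [← tsum_fintype (L := SummationFilter.unconditional _)]; exact p.tsum_coe

lemma sum_pmf_eq_one' {β : Type*} [Fintype β] (q : PMF β) : ∑ b : β, q b = 1 := by
  rw [← tsum_fintype (L := SummationFilter.unconditional _)]; exact q.tsum_coe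

lemma Pm_le_one (p : PMF (Fin L → Fin V)) (z : Fin L → Option (Fin V)) : Pm p z ≤ 1 := by
  rw [← sum_pmf_eq_one p]
  exact Finset.sum_le_sum fun y _ => by split <;> simp

lemma Pm_ne_top (p : PMF (Fin L → Fin V)) (z : Fin L → Option (Fin V)) : Pm p z ≠ ⊤ :=
  (lt_of_le_of_lt (Pm_le_one p z) ENNReal.one_lt_top).ne

lemma sum_Pj (p : PMF (Fin L → Fin V)) (z : Fin L → Option (Fin V)) (i : Fin L) :
    ∑ v : Fin V, Pj p z i v = Pm p z := by
  unfold Pj Pm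
  rw [Finset.sum_comm]
  refine Finset.sum_congr rfl fun y _ => ?_
  by_cases hA : consis y z
  · simp [hA]
  · simp [hA]

lemma consis_maskSeq {x y : Fin L → Fin V} {M : Finset (Fin L)} :
    consis y (maskSeq x M) ↔ ∀ i ∉ M, y i = x i := by
  unfold consis maskSeq
  constructor
  · intro h i hi
    rcases h i with h' | h' <;> simp [hi] at h' ⊢
    exact h'.symm
  · intro h i
    by_cases hi : i ∈ M
    · left; simp [hi]
    · right; simp [hi, h i hi]

lemma maskSeq_eq_iff {x y : Fin L → Fin V} {M : Finset (Fin L)} :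
    maskSeq y M = maskSeq x M ↔ ∀ i ∉ M, y i = x i := by
  unfold maskSeq
  constructor
  · intro h i hi
    have := congrFun h i
    simpa [hi] using this
  · intro h
    funext i
    by_cases hi : i ∈ M <;> simp [hi]
    exact h i hi

lemma consis_self (x : Fin L → Fin V) (M : Finset (Fin L)) : consis x (maskSeq x M) := by
  rw [consis_maskSeq]; intro i _; rfl

lemma le_Pm_maskSeq (p : PMF (Fin L → Fin V)) (x : Fin L → Fin V) (M : Finset (Fin L)) :
    p x ≤ Pm p (maskSeq x M) := by
  have := Finset.single_le_sum
    (f := fun y => if consis y (maskSeq x M) then p y else 0)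
    (fun y _ => by positivity) (Finset.mem_univ x)
  simpa [consis_self, Pm] using this

lemma Pj_eq_Pm_erase (p : PMF (Fin L → Fin V)) {x : Fin L → Fin V} {M : Finset (Fin L)}
    {i : Fin L} (hi : i ∈ M) :
    Pj p (maskSeq x M) i (x i) = Pm p (maskSeq x (M.erase i)) := by
  unfold Pj Pm
  refine Finset.sum_congr rfl fun y _ => ?_
  refine if_congr ?_ rfl rfl
  rw [consis_maskSeq, consis_maskSeq]
  constructor
  · rintro ⟨h1, h2⟩ j hj
    rw [Finset.mem_erase] at hj
    by_cases hji : j = i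
    · subst hji; exact h2
    · exact h1 j fun hjM => hj ⟨hji, hjM⟩
  · intro h
    refine ⟨fun j hj => h j ?_, h i ?_⟩
    · rw [Finset.mem_erase]; exact fun hc => hj hc.2
    · rw [Finset.mem_erase]; exact fun hc => hc.1 rfl

/-! ### the conditional model -/

/-- The optimal model: conditional distribution of the token at `i` given context `z`. -/
noncomputable def cpmf (hV : 1 ≤ V) (p : PMF (Fin L → Fin V))
    (z : Fin L → Option (Fin V)) (i : Fin L) : PMF (Fin V) :=
  if h : Pm p z = 0 then PMF.pure ⟨0, hV⟩
  else ⟨fun v => Pj p z i v / Pm p z, by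
    have hsum : ∑ v : Fin V, Pj p z i v / Pm p z = 1 := by
      simp_rw [div_eq_mul_inv, ← Finset.sum_mul, sum_Pj]
      exact ENNReal.mul_inv_cancel h (Pm_ne_top p z)
    have := hasSum_fintype (fun v => Pj p z i v / Pm p z)
    rwa [hsum] at this⟩

lemma cpmf_apply (hV : 1 ≤ V) (p : PMF (Fin L → Fin V)) {z : Fin L → Option (Fin V)}
    (i : Fin L) (v : Fin V) (h : Pm p z ≠ 0) :
    cpmf hV p z i v = Pj p z i v / Pm p z := by
  simp only [cpmf, h, ↓reduceDIte]; rfl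

/-! ### the Gibbs inequality -/

lemma gibbs {α : Type*} [Fintype α] (w q : α → ℝ≥0∞) (hw : ∀ v, w v ≠ ⊤)
    (hq : ∑ v, q v ≤ 1) :
    ∑ v, w v * negLog (w v / ∑ u, w u) ≤ ∑ v, w v * negLog (q v) := by
  classical
  by_cases hex : ∃ v, w v ≠ 0 ∧ q v = 0
  · obtain ⟨v, hv, hqv⟩ := hex
    have htop : w v * negLog (q v) = ⊤ := by
      rw [hqv]
      simp only [negLog, if_pos rfl]
      exact ENNReal.mul_top hv
    have : (⊤ : ℝ≥0∞) ≤ ∑ v, w v * negLog (q v) := by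
      rw [← htop]
      exact Finset.single_le_sum (f := fun v => w v * negLog (q v))
        (fun _ _ => zero_le) (Finset.mem_univ v)
    exact le_trans le_top this
  push_neg at hex
  by_cases hP0 : ∑ u, w u = 0
  · have hw0 : ∀ v, w v = 0 := fun v =>
      le_antisymm (hP0 ▸ Finset.single_le_sum (f := w) (fun _ _ => zero_le)
        (Finset.mem_univ v)) (zero_le)
    simp [hw0]
  set P : ℝ≥0∞ := ∑ u, w u with hPdef
  have hPtop : P ≠ ⊤ :=
    (ENNReal.sum_lt_top.mpr fun v _ => lt_top_iff_ne_top.mpr (hw v)).ne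
  set s : Finset α := Finset.univ.filter (fun v => w v ≠ 0) with hs
  have hmem : ∀ v, v ∈ s ↔ w v ≠ 0 := by intro v; simp [hs]
  have hl : ∀ c : α → ℝ≥0∞,
      ∑ v, w v * negLog (c v) = ∑ v ∈ s, w v * negLog (c v) := by
    intro c
    symm
    refine Finset.sum_subset (Finset.filter_subset _ _) fun v _ hv => ?_
    have : w v = 0 := by
      by_contra hne
      exact hv ((hmem v).mpr hne)
    rw [this, zero_mul]
  rw [hl, hl]
  have hwle : ∀ v, w v ≤ P := fun v =>
    Finset.single_le_sum (fun _ _ => zero_le) (Finset.mem_univ v)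
  have hq1 : ∀ v, q v ≤ 1 := fun v =>
    le_trans (Finset.single_le_sum (f := q) (fun _ _ => zero_le) (Finset.mem_univ v)) hq
  have hb1 : ∀ v, w v / P ≤ 1 := fun v =>
    ENNReal.div_le_of_le_mul (by rw [one_mul]; exact hwle v)
  have hPr : 0 < P.toReal := ENNReal.toReal_pos hP0 hPtop
  have ha : ∀ v ∈ s, 0 < (w v).toReal := fun v hv =>
    ENNReal.toReal_pos ((hmem v).mp hv) (hw v)
  have hc : ∀ v ∈ s, 0 < (q v).toReal := fun v hv =>
    ENNReal.toReal_pos (hex v ((hmem v).mp hv))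
      (lt_of_le_of_lt (hq1 v) ENNReal.one_lt_top).ne
  have hc1 : ∀ v, (q v).toReal ≤ 1 := fun v => by
    simpa using ENNReal.toReal_mono ENNReal.one_ne_top (hq1 v)
  have hb1' : ∀ v, (w v / P).toReal ≤ 1 := fun v => by
    simpa using ENNReal.toReal_mono ENNReal.one_ne_top (hb1 v)
  -- rewrite terms in `ofReal` form
  have hterm : ∀ v ∈ s, w v * negLog (w v / P)
      = ENNReal.ofReal ((w v).toReal * (-Real.log ((w v).toReal / P.toReal))) := by
    intro v hv
    have hb0 : w v / P ≠ 0 := by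
      rw [Ne, ENNReal.div_eq_zero_iff]
      push_neg
      exact ⟨(hmem v).mp hv, hPtop⟩
    rw [negLog, if_neg hb0, ENNReal.toReal_div,
      ENNReal.ofReal_mul ENNReal.toReal_nonneg, ENNReal.ofReal_toReal (hw v)]
  have hterm2 : ∀ v ∈ s, w v * negLog (q v)
      = ENNReal.ofReal ((w v).toReal * (-Real.log (q v).toReal)) := by
    intro v hv
    have hq0 : q v ≠ 0 := hex v ((hmem v).mp hv)
    rw [negLog, if_neg hq0,
      ENNReal.ofReal_mul ENNReal.toReal_nonneg, ENNReal.ofReal_toReal (hw v)]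
  rw [Finset.sum_congr rfl hterm, Finset.sum_congr rfl hterm2]
  have hnn1 : ∀ v ∈ s, 0 ≤ (w v).toReal * (-Real.log ((w v).toReal / P.toReal)) := by
    intro v hv
    refine mul_nonneg ENNReal.toReal_nonneg ?_
    rw [neg_nonneg]
    refine Real.log_nonpos (by positivity) ?_
    rw [← ENNReal.toReal_div]
    exact hb1' v
  have hnn2 : ∀ v ∈ s, 0 ≤ (w v).toReal * (-Real.log (q v).toReal) := by
    intro v hv
    refine mul_nonneg ENNReal.toReal_nonneg ?_
    rw [neg_nonneg]
    exact Real.log_nonpos ENNReal.toReal_nonneg (hc1 v)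
  rw [← ENNReal.ofReal_sum_of_nonneg hnn1, ← ENNReal.ofReal_sum_of_nonneg hnn2]
  apply ENNReal.ofReal_le_ofReal
  -- the purely real Gibbs inequality
  have hPsum : ∑ v ∈ s, (w v).toReal = P.toReal := by
    rw [hPdef, ENNReal.toReal_sum (fun v _ => hw v)]
    refine Finset.sum_subset (Finset.subset_univ s) fun v _ hv => ?_
    have : w v = 0 := by
      by_contra hne
      exact hv ((hmem v).mpr hne)
    simp [this]
  have hcsum : ∑ v ∈ s, (q v).toReal ≤ 1 := by
    have h1 : ∑ v ∈ s, (q v).toReal = (∑ v ∈ s, q v).toReal := by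
      rw [ENNReal.toReal_sum (fun v _ => (lt_of_le_of_lt (hq1 v) ENNReal.one_lt_top).ne)]
    rw [h1]
    have h2 : ∑ v ∈ s, q v ≤ 1 :=
      le_trans (Finset.sum_le_sum_of_subset (Finset.subset_univ s)) hq
    simpa using ENNReal.toReal_mono ENNReal.one_ne_top h2
  rw [← sub_nonneg, ← Finset.sum_sub_distrib]
  have key : ∀ v ∈ s,
      (w v).toReal * (-Real.log ((w v).toReal / P.toReal))
        - (w v).toReal * (-Real.log (q v).toReal)
        ≤ (q v).toReal * P.toReal - (w v).toReal := by
    intro v hv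
    have hav := ha v hv
    have hcv := hc v hv
    have e1 : Real.log ((w v).toReal / P.toReal)
        = Real.log (w v).toReal - Real.log P.toReal :=
      Real.log_div (ne_of_gt hav) (ne_of_gt hPr)
    have e2 : Real.log ((q v).toReal * P.toReal / (w v).toReal)
        = Real.log (q v).toReal + Real.log P.toReal - Real.log (w v).toReal := by
      rw [Real.log_div (by positivity) (ne_of_gt hav),
        Real.log_mul (ne_of_gt hcv) (ne_of_gt hPr)]
    have hle : Real.log ((q v).toReal * P.toReal / (w v).toReal)
        ≤ (q v).toReal * P.toReal / (w v).toReal - 1 :=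
      Real.log_le_sub_one_of_pos (by positivity)
    have hmm := mul_le_mul_of_nonneg_left hle (le_of_lt hav)
    calc (w v).toReal * (-Real.log ((w v).toReal / P.toReal))
          - (w v).toReal * (-Real.log (q v).toReal)
        = (w v).toReal * Real.log ((q v).toReal * P.toReal / (w v).toReal) := by
          rw [e2, e1]; ring
      _ ≤ (w v).toReal * ((q v).toReal * P.toReal / (w v).toReal - 1) := hmm
      _ = (q v).toReal * P.toReal - (w v).toReal := by
          rw [mul_sub, mul_one, mul_comm ((w v).toReal),
            div_mul_cancel₀ _ (ne_of_gt hav)]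
  have hsumle := Finset.sum_le_sum key
  have hrhs : ∑ v ∈ s, ((q v).toReal * P.toReal - (w v).toReal) ≤ 0 := by
    rw [Finset.sum_sub_distrib, ← Finset.sum_mul, hPsum]
    have := mul_le_mul_of_nonneg_right hcsum (le_of_lt hPr)
    nlinarith
  have hfin := le_trans hsumle hrhs
  have heq : ∑ v ∈ s, ((w v).toReal * (-Real.log (q v).toReal)
      - (w v).toReal * (-Real.log ((w v).toReal / P.toReal)))
      = -∑ v ∈ s, ((w v).toReal * (-Real.log ((w v).toReal / P.toReal))
          - (w v).toReal * (-Real.log (q v).toReal)) := by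
    rw [← Finset.sum_neg_distrib]
    exact Finset.sum_congr rfl fun v _ => by ring
  rw [heq]
  linarith

/-! ### grouping by masked context -/

/-- Per-position loss term of a model. -/
noncomputable def Tt (p : PMF (Fin L → Fin V))
    (μ : (Fin L → Option (Fin V)) → Fin L → PMF (Fin V))
    (M : Finset (Fin L)) (i : Fin L) : ℝ≥0∞ :=
  ∑ x : Fin L → Fin V, p x * negLog (μ (maskSeq x M) i (x i))

lemma group (p : PMF (Fin L → Fin V)) (M : Finset (Fin L)) (i : Fin L)
    (h : (Fin L → Option (Fin V)) → Fin V → ℝ≥0∞) :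
    ∑ x : Fin L → Fin V, p x * h (maskSeq x M) (x i)
      = ∑ zv : (Fin L → Option (Fin V)) × Fin V,
          (∑ x ∈ Finset.univ.filter
              (fun x : Fin L → Fin V => (maskSeq x M, x i) = zv), p x) * h zv.1 zv.2 := by
  classical
  rw [← Finset.sum_fiberwise Finset.univ
    (fun x : Fin L → Fin V => (maskSeq x M, x i))
    (fun x => p x * h (maskSeq x M) (x i))]
  refine Finset.sum_congr rfl fun zv _ => ?_
  rw [Finset.sum_mul]
  refine Finset.sum_congr rfl fun x hx => ?_
  simp only [Finset.mem_filter] at hx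
  rw [← hx.2]

lemma Tterm_ge (hV : 1 ≤ V) (p : PMF (Fin L → Fin V))
    (μ : (Fin L → Option (Fin V)) → Fin L → PMF (Fin V))
    (M : Finset (Fin L)) (i : Fin L) :
    Tt p (cpmf hV p) M i ≤ Tt p μ M i := by
  classical
  unfold Tt
  rw [group p M i (fun z v => negLog (cpmf hV p z i v)),
    group p M i (fun z v => negLog (μ z i v)),
    Fintype.sum_prod_type, Fintype.sum_prod_type]
  refine Finset.sum_le_sum fun z _ => ?_
  set w : Fin V → ℝ≥0∞ := fun v =>
    ∑ x ∈ Finset.univ.filter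
      (fun x : Fin L → Fin V => (maskSeq x M, x i) = (z, v)), p x with hwdef
  have hw : ∀ v, w v ≠ ⊤ := by
    intro v
    have : w v ≤ 1 := by
      rw [← sum_pmf_eq_one p]
      exact Finset.sum_le_sum_of_subset (Finset.filter_subset _ _)
    exact (lt_of_le_of_lt this ENNReal.one_lt_top).ne
  have hq : ∑ v, μ z i v ≤ 1 := le_of_eq (sum_pmf_eq_one' (μ z i))
  have key : ∀ v, w v * negLog (cpmf hV p z i v) = w v * negLog (w v / ∑ u, w u) := by
    intro v
    rcases eq_or_ne (w v) 0 with h0 | h0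
    · rw [h0, zero_mul, zero_mul]
    · obtain ⟨x₀, hx₀, -⟩ := Finset.exists_ne_zero_of_sum_ne_zero h0
      simp only [Finset.mem_filter, Prod.mk.injEq] at hx₀
      have hz : maskSeq x₀ M = z := hx₀.2.1
      have hwPj : ∀ v', w v' = Pj p z i v' := by
        intro v'
        rw [hwdef]
        simp only
        rw [Finset.sum_filter]
        unfold Pj
        refine Finset.sum_congr rfl fun y _ => ?_
        refine if_congr ?_ rfl rfl
        rw [Prod.mk.injEq]
        constructor
        · rintro ⟨h1, h2⟩
          refine ⟨?_, h2⟩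
          rw [← hz] at h1 ⊢
          rw [consis_maskSeq, ← maskSeq_eq_iff]
          exact h1
        · rintro ⟨h1, h2⟩
          refine ⟨?_, h2⟩
          rw [← hz] at h1 ⊢
          rw [consis_maskSeq] at h1
          rw [maskSeq_eq_iff]
          exact h1
      have hsw : ∑ u, w u = Pm p z := by
        rw [Finset.sum_congr rfl fun u _ => hwPj u, sum_Pj]
      have hPm0 : Pm p z ≠ 0 := by
        rw [← hsw]
        intro hc
        exact h0 (le_antisymm (hc ▸ Finset.single_le_sum (f := w)
          (fun _ _ => zero_le) (Finset.mem_univ v)) (zero_le))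
      rw [cpmf_apply hV p i v hPm0, hsw, hwPj v]
  calc ∑ v, w v * negLog (cpmf hV p z i v)
      = ∑ v, w v * negLog (w v / ∑ u, w u) := Finset.sum_congr rfl fun v _ => key v
    _ ≤ ∑ v, w v * negLog (μ z i v) := gibbs w (fun v => μ z i v) hw hq

/-! ### chain rule and telescoping -/

/-- Expected neg-log-probability of the masked context with mask `M`. -/
noncomputable def gM (p : PMF (Fin L → Fin V)) (M : Finset (Fin L)) : ℝ≥0∞ :=
  ∑ x : Fin L → Fin V, p x * negLog (Pm p (maskSeq x M))

lemma chain (hV : 1 ≤ V) (p : PMF (Fin L → Fin V)) {M : Finset (Fin L)} {i : Fin L}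
    (hi : i ∈ M) :
    Tt p (cpmf hV p) M i + gM p M = gM p (M.erase i) := by
  unfold Tt gM
  rw [← Finset.sum_add_distrib]
  refine Finset.sum_congr rfl fun x _ => ?_
  rcases eq_or_ne (p x) 0 with h0 | h0
  · simp [h0]
  have hPm : Pm p (maskSeq x M) ≠ 0 := fun h =>
    h0 (le_antisymm (h ▸ le_Pm_maskSeq p x M) (zero_le))
  rw [← mul_add, cpmf_apply hV p i (x i) hPm]
  congr 1
  have hdiv1 : Pj p (maskSeq x M) i (x i) / Pm p (maskSeq x M) ≤ 1 := by
    refine ENNReal.div_le_of_le_mul ?_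
    rw [one_mul]
    refine Finset.sum_le_sum fun y _ => ?_
    by_cases hA : consis y (maskSeq x M) ∧ y i = x i
    · rw [if_pos hA, if_pos hA.1]
    · rw [if_neg hA]; positivity
  rw [← negLog_mul hdiv1 (Pm_le_one p (maskSeq x M)),
    ENNReal.div_mul_cancel hPm (Pm_ne_top p (maskSeq x M)),
    Pj_eq_Pm_erase p hi]

/-- Average of `gM` over masks of size `j`. -/
noncomputable def Sg (p : PMF (Fin L → Fin V)) (j : ℕ) : ℝ≥0∞ :=
  (((Finset.univ : Finset (Fin L)).powersetCard j).card : ℝ≥0∞)⁻¹ *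
    ∑ M ∈ (Finset.univ : Finset (Fin L)).powersetCard j, gM p M

lemma ctxLoss_eq (p : PMF (Fin L → Fin V))
    (μ : (Fin L → Option (Fin V)) → Fin L → PMF (Fin V)) (Nc : ℕ) :
    ctxLoss p μ Nc
      = (((Finset.univ : Finset (Fin L)).powersetCard (L - Nc)).card : ℝ≥0∞)⁻¹ *
          (((L - Nc : ℕ) : ℝ≥0∞)⁻¹ *
            ∑ M ∈ (Finset.univ : Finset (Fin L)).powersetCard (L - Nc),
              ∑ i ∈ M, Tt p μ M i) := by
  classical
  set k := L - Nc
  set pc := (Finset.univ : Finset (Fin L)).powersetCard k with hpc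
  set C : ℝ≥0∞ := (pc.card : ℝ≥0∞) with hC
  unfold ctxLoss Tt
  calc ∑ x : Fin L → Fin V, p x * C⁻¹ *
        ∑ M ∈ pc, ((M.card : ℝ≥0∞))⁻¹ * ∑ i ∈ M, negLog (μ (maskSeq x M) i (x i))
      = ∑ x : Fin L → Fin V, ∑ M ∈ pc, ∑ i ∈ M,
          C⁻¹ * ((k : ℝ≥0∞)⁻¹ * (p x * negLog (μ (maskSeq x M) i (x i)))) := by
        refine Finset.sum_congr rfl fun x _ => ?_
        rw [Finset.mul_sum]
        refine Finset.sum_congr rfl fun M hM => ?_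
        have hcard : M.card = k := (Finset.mem_powersetCard.mp hM).2
        rw [hcard, Finset.mul_sum, Finset.mul_sum]
        exact Finset.sum_congr rfl fun i _ => by ring
    _ = ∑ M ∈ pc, ∑ i ∈ M, ∑ x : Fin L → Fin V,
          C⁻¹ * ((k : ℝ≥0∞)⁻¹ * (p x * negLog (μ (maskSeq x M) i (x i)))) := by
        rw [Finset.sum_comm (s := (Finset.univ : Finset (Fin L → Fin V))) (t := pc)
          (f := fun x M => ∑ i ∈ M,
            C⁻¹ * ((k : ℝ≥0∞)⁻¹ * (p x * negLog (μ (maskSeq x M) i (x i)))))]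
        exact Finset.sum_congr rfl fun M _ => Finset.sum_comm
    _ = C⁻¹ * ((k : ℝ≥0∞)⁻¹ *
          ∑ M ∈ pc, ∑ i ∈ M, ∑ x : Fin L → Fin V,
            p x * negLog (μ (maskSeq x M) i (x i))) := by
        simp_rw [← Finset.mul_sum]

lemma sum_erase_count (k : ℕ) (hk1 : 1 ≤ k) (hkL : k ≤ L)
    (F : Finset (Fin L) → ℝ≥0∞) :
    ∑ M ∈ (Finset.univ : Finset (Fin L)).powersetCard k, ∑ i ∈ M, F (M.erase i)
      = ((L - k + 1 : ℕ) : ℝ≥0∞) *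
          ∑ N ∈ (Finset.univ : Finset (Fin L)).powersetCard (k-1), F N := by
  classical
  have h1 : ∑ M ∈ (Finset.univ : Finset (Fin L)).powersetCard k, ∑ i ∈ M, F (M.erase i)
      = ∑ N ∈ (Finset.univ : Finset (Fin L)).powersetCard (k-1), ∑ i ∈ Nᶜ, F N := by
    rw [Finset.sum_sigma', Finset.sum_sigma']
    refine Finset.sum_nbij' (fun a => ⟨a.1.erase a.2, a.2⟩)
      (fun b => ⟨insert b.2 b.1, b.2⟩) ?_ ?_ ?_ ?_ ?_
    · rintro ⟨M, i⟩ hMi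
      rw [Finset.mem_sigma] at hMi
      obtain ⟨hM, hi⟩ := hMi
      rw [Finset.mem_powersetCard] at hM
      rw [Finset.mem_sigma, Finset.mem_powersetCard]
      refine ⟨⟨Finset.subset_univ _, ?_⟩, ?_⟩
      · rw [Finset.card_erase_of_mem hi, hM.2]
      · rw [Finset.mem_compl]
        exact Finset.notMem_erase i M
    · rintro ⟨N, i⟩ hNi
      rw [Finset.mem_sigma] at hNi
      obtain ⟨hN, hi⟩ := hNi
      rw [Finset.mem_powersetCard] at hN
      rw [Finset.mem_compl] at hi
      rw [Finset.mem_sigma, Finset.mem_powersetCard]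
      refine ⟨⟨Finset.subset_univ _, ?_⟩, Finset.mem_insert_self i N⟩
      rw [Finset.card_insert_of_notMem hi, hN.2]
      omega
    · rintro ⟨M, i⟩ hMi
      rw [Finset.mem_sigma] at hMi
      simp [Finset.insert_erase hMi.2]
    · rintro ⟨N, i⟩ hNi
      rw [Finset.mem_sigma, Finset.mem_compl] at hNi
      simp [Finset.erase_insert hNi.2]
    · rintro ⟨M, i⟩ _
      rfl
  rw [h1]
  have h2 : ∀ N ∈ (Finset.univ : Finset (Fin L)).powersetCard (k-1),
      ∑ i ∈ Nᶜ, F N = ((L - k + 1 : ℕ) : ℝ≥0∞) * F N := by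
    intro N hN
    rw [Finset.mem_powersetCard] at hN
    rw [Finset.sum_const, Finset.card_compl, hN.2, nsmul_eq_mul]
    congr 2
    simp only [Fintype.card_fin]
    omega
  rw [Finset.sum_congr rfl h2, ← Finset.mul_sum]

lemma sum_const_count (k : ℕ) (F : Finset (Fin L) → ℝ≥0∞) :
    ∑ M ∈ (Finset.univ : Finset (Fin L)).powersetCard k, ∑ _i ∈ M, F M
      = (k : ℝ≥0∞) * ∑ M ∈ (Finset.univ : Finset (Fin L)).powersetCard k, F M := by
  rw [Finset.mul_sum]
  refine Finset.sum_congr rfl fun M hM => ?_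
  rw [Finset.mem_powersetCard] at hM
  rw [Finset.sum_const, hM.2, nsmul_eq_mul]

lemma card_pc (j : ℕ) :
    ((Finset.univ : Finset (Fin L)).powersetCard j).card = L.choose j := by
  rw [Finset.card_powersetCard, Finset.card_univ, Fintype.card_fin]

lemma step (hV : 1 ≤ V) (p : PMF (Fin L → Fin V)) (k : ℕ) (hk1 : 1 ≤ k) (hkL : k ≤ L) :
    ctxLoss p (cpmf hV p) (L - k) + Sg p k = Sg p (k-1) := by
  classical
  have hLk : L - (L - k) = k := by omega
  rw [ctxLoss_eq, hLk, Sg, Sg]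
  have hchain : ∑ M ∈ (Finset.univ : Finset (Fin L)).powersetCard k,
        ∑ i ∈ M, Tt p (cpmf hV p) M i
      + ∑ M ∈ (Finset.univ : Finset (Fin L)).powersetCard k, ∑ _i ∈ M, gM p M
      = ∑ M ∈ (Finset.univ : Finset (Fin L)).powersetCard k,
          ∑ i ∈ M, gM p (M.erase i) := by
    rw [← Finset.sum_add_distrib]
    refine Finset.sum_congr rfl fun M _ => ?_
    rw [← Finset.sum_add_distrib]
    exact Finset.sum_congr rfl fun i hi => chain hV p hi
  -- abbreviations
  set C : ℝ≥0∞ := (((Finset.univ : Finset (Fin L)).powersetCard k).card : ℝ≥0∞) with hCdef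
  set C' : ℝ≥0∞ := (((Finset.univ : Finset (Fin L)).powersetCard (k-1)).card : ℝ≥0∞) with hC'def
  have hC : C = (L.choose k : ℝ≥0∞) := by rw [hCdef, card_pc]
  have hC' : C' = (L.choose (k-1) : ℝ≥0∞) := by rw [hC'def, card_pc]
  have hCne : C ≠ 0 := by
    rw [hC]
    have := Nat.choose_pos hkL
    simp only [ne_eq, Nat.cast_eq_zero]
    omega
  have hCtop : C ≠ ⊤ := by rw [hC]; exact ENNReal.natCast_ne_top _
  have hkne : ((k : ℝ≥0∞)) ≠ 0 := by
    simp only [ne_eq, Nat.cast_eq_zero]; omega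
  have hktop : ((k : ℝ≥0∞)) ≠ ⊤ := ENNReal.natCast_ne_top _
  calc C⁻¹ * ((k : ℝ≥0∞)⁻¹ * ∑ M ∈ (Finset.univ : Finset (Fin L)).powersetCard k,
          ∑ i ∈ M, Tt p (cpmf hV p) M i)
        + C⁻¹ * ∑ M ∈ (Finset.univ : Finset (Fin L)).powersetCard k, gM p M
      = C⁻¹ * ((k : ℝ≥0∞)⁻¹ *
          (∑ M ∈ (Finset.univ : Finset (Fin L)).powersetCard k,
            ∑ i ∈ M, Tt p (cpmf hV p) M i
          + (k : ℝ≥0∞) * ∑ M ∈ (Finset.univ : Finset (Fin L)).powersetCard k, gM p M)) := by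
        rw [mul_add ((k : ℝ≥0∞))⁻¹, ← mul_assoc ((k : ℝ≥0∞))⁻¹,
          ENNReal.inv_mul_cancel hkne hktop, one_mul, mul_add]
    _ = C⁻¹ * ((k : ℝ≥0∞)⁻¹ * (((L - k + 1 : ℕ) : ℝ≥0∞) *
          ∑ N ∈ (Finset.univ : Finset (Fin L)).powersetCard (k-1), gM p N)) := by
        rw [← sum_const_count k (gM p), hchain, sum_erase_count k hk1 hkL]
    _ = C'⁻¹ * ∑ N ∈ (Finset.univ : Finset (Fin L)).powersetCard (k-1), gM p N := by
        rw [← mul_assoc, ← mul_assoc]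
        congr 1
        -- C⁻¹ * k⁻¹ * (L-k+1) = C'⁻¹
        have hnat : L.choose k * k = L.choose (k-1) * (L - k + 1) := by
          have := Nat.choose_succ_right_eq L (k-1)
          have hk : k - 1 + 1 = k := by omega
          rw [hk] at this
          rw [this]
          congr 1
          omega
        have hC'ne : C' ≠ 0 := by
          rw [hC']
          simp only [ne_eq, Nat.cast_eq_zero]
          have := Nat.choose_pos (show k - 1 ≤ L by omega)
          omega
        have hC'top : C' ≠ ⊤ := by rw [hC']; exact ENNReal.natCast_ne_top _
        have hdne : ((L - k + 1 : ℕ) : ℝ≥0∞) ≠ 0 := by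
          simp only [ne_eq, Nat.cast_eq_zero]; omega
        have hdtop : ((L - k + 1 : ℕ) : ℝ≥0∞) ≠ ⊤ := ENNReal.natCast_ne_top _
        have hmul : C * (k : ℝ≥0∞) = C' * ((L - k + 1 : ℕ) : ℝ≥0∞) := by
          rw [hC, hC', ← Nat.cast_mul, ← Nat.cast_mul, hnat]
        rw [← ENNReal.mul_inv (Or.inl hCne) (Or.inl hCtop), hmul,
          ENNReal.mul_inv (Or.inl hC'ne) (Or.inl hC'top), mul_assoc,
          mul_comm (((L - k + 1 : ℕ) : ℝ≥0∞))⁻¹, ENNReal.mul_inv_cancel hdne hdtop,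
          mul_one]

lemma Sg_L (p : PMF (Fin L → Fin V)) : Sg p L = 0 := by
  have hpc : (Finset.univ : Finset (Fin L)).powersetCard L = {Finset.univ} := by
    have := Finset.powersetCard_self (Finset.univ : Finset (Fin L))
    rwa [Finset.card_univ, Fintype.card_fin] at this
  rw [Sg, hpc, Finset.sum_singleton]
  have hg : gM p Finset.univ = 0 := by
    unfold gM
    have hPm : ∀ x : Fin L → Fin V, Pm p (maskSeq x Finset.univ) = 1 := by
      intro x
      unfold Pm
      have : ∀ y : Fin L → Fin V, consis y (maskSeq x Finset.univ) := by
        intro y i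
        left
        simp [maskSeq]
      rw [Finset.sum_congr rfl fun y _ => if_pos (this y)]
      exact sum_pmf_eq_one p
    simp [hPm, negLog_one]
  rw [hg, mul_zero]

lemma Sg_zero (p : PMF (Fin L → Fin V)) :
    Sg p 0 = ∑ x : Fin L → Fin V, p x * negLog (p x) := by
  rw [Sg, Finset.powersetCard_zero, Finset.sum_singleton, Finset.card_singleton]
  have hg : gM p ∅ = ∑ x : Fin L → Fin V, p x * negLog (p x) := by
    unfold gM
    refine Finset.sum_congr rfl fun x _ => ?_
    have hPm : Pm p (maskSeq x ∅) = p x := by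
      unfold Pm
      have hcon : ∀ y : Fin L → Fin V, consis y (maskSeq x ∅) ↔ y = x := by
        intro y
        rw [consis_maskSeq]
        constructor
        · intro h; funext i; exact h i (Finset.notMem_empty i)
        · intro h i _; rw [h]
      rw [Finset.sum_congr rfl fun y _ => if_congr (hcon y) rfl rfl]
      simp
    rw [hPm]
  rw [hg]
  simp

lemma teles (hV : 1 ≤ V) (p : PMF (Fin L → Fin V)) :
    ∀ m, m ≤ L →
      ∑ Nc ∈ Finset.Ico (L-m) L, ctxLoss p (cpmf hV p) Nc + Sg p m = Sg p 0 := by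
  intro m
  induction m with
  | zero => intro _; simp
  | succ m ih =>
    intro h
    have hstep := step hV p (m+1) (by omega) h
    simp only [Nat.add_sub_cancel] at hstep
    have hlt : L - (m+1) < L := by omega
    have hsucc : L - (m+1) + 1 = L - m := by omega
    have hIco : Finset.Ico (L-(m+1)) L = insert (L-(m+1)) (Finset.Ico (L-m) L) := by
      ext n
      simp only [Finset.mem_Ico, Finset.mem_insert]
      omega
    rw [hIco, Finset.sum_insert (by simp only [Finset.mem_Ico]; omega)]
    rw [add_assoc, add_comm (∑ Nc ∈ Finset.Ico (L-m) L, ctxLoss p (cpmf hV p) Nc),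
      ← add_assoc, hstep, add_comm (Sg p m), ih (by omega)]

lemma total_cpmf (hV : 1 ≤ V) (hL : 1 ≤ L) (p : PMF (Fin L → Fin V)) :
    ∑ Nc ∈ Finset.range L, ctxLoss p (cpmf hV p) Nc
      = ∑ x : Fin L → Fin V, p x * negLog (p x) := by
  have := teles hV p L le_rfl
  rw [Nat.sub_self, Sg_L, add_zero, Sg_zero] at this
  rwa [Finset.range_eq_Ico]

end MDLM

/-- The infimum over all models `μ` of `Σ_{N_c=0}^{L-1} ℒ^{N_c}(μ)` equals the Shannon
entropy `H(p) = -Σ_x p(x) log p(x)` of the data distribution, and this infimum is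
attained: `H(p)` is the least element of the range of the total loss. -/
theorem total_loss_min_eq_entropy (V L : ℕ) (hV : 1 ≤ V) (hL : 1 ≤ L)
    (p : PMF (Fin L → Fin V)) :
    IsLeast
      (Set.range fun μ : (Fin L → Option (Fin V)) → Fin L → PMF (Fin V) =>
        ∑ Nc ∈ Finset.range L, ctxLoss p μ Nc)
      (∑ x : Fin L → Fin V, p x * negLog (p x)) := by
  constructor
  · exact ⟨MDLM.cpmf hV p, MDLM.total_cpmf hV hL p⟩
  · rintro y ⟨μ, rfl⟩
    rw [← MDLM.total_cpmf hV hL p]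
    refine Finset.sum_le_sum fun Nc _ => ?_
    rw [MDLM.ctxLoss_eq, MDLM.ctxLoss_eq]
    refine mul_le_mul_right (mul_le_mul_right ?_ _) _
    exact Finset.sum_le_sum fun M _ => Finset.sum_le_sum fun i _ =>
      MDLM.Tterm_ge hV p μ M i
end
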